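/- arXiv:2305.12402 — 7 statements merged into one kernel-verified Lean document; each statement's English description precedes it below -/
import Mathlib

section
/- Let f : X → ℝ≥0 be a twice continuously differentiable monotone DR-submodular function on a box X = ∏_i [0, a_i] with f(0) = 0, and define the auxiliary function F(x) = ∫₀¹ (e^{z−1}/z) f(z·x) dz. Then ∇F(x) = ∫₀¹ e^{z−1} ∇f(z·x) dz, and for all x, y ∈ X, ⟨y − x, ∇F(x)⟩ ≥ (1 − 1/e) f(y) − f(x). -/
noncomputable section
open Real Filter Topology MeasureTheory

section Auxiliary

/-- Applying a continuous linear functional on Euclidean space equals the sum of its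
values on the standard basis vectors weighted by coordinates. -/
lemma aux_clm_apply_sum {d : ℕ} (L : EuclideanSpace ℝ (Fin d) →L[ℝ] ℝ)
    (v : EuclideanSpace ℝ (Fin d)) :
    L v = ∑ i, v i * L (EuclideanSpace.single i 1) := by
  have hv : ∑ i, v i • EuclideanSpace.single i (1:ℝ) = v := by
    have := (EuclideanSpace.basisFun (Fin d) ℝ).sum_repr v
    simpa [EuclideanSpace.basisFun_apply, EuclideanSpace.basisFun_repr] using this
  conv_lhs => rw [← hv]
  simp [mul_comm]

/-- A monotone differentiable function on a box has nonneg partial derivatives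
(in directions where the box is nondegenerate). -/
lemma aux_grad_nonneg {d : ℕ} {a : Fin d → ℝ}
    {X : Set (EuclideanSpace ℝ (Fin d))}
    (hX : X = {x | ∀ i, x i ∈ Set.Icc (0 : ℝ) (a i)})
    {f : EuclideanSpace ℝ (Fin d) → ℝ} (hf : ContDiff ℝ 2 f)
    (hmono : ∀ x ∈ X, ∀ y ∈ X, (∀ i, x i ≤ y i) → f x ≤ f y)
    {w : EuclideanSpace ℝ (Fin d)} (hw : w ∈ X) (i : Fin d) (hai : 0 < a i) :
    0 ≤ fderiv ℝ f w (EuclideanSpace.single i 1) := by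
  set e : EuclideanSpace ℝ (Fin d) := EuclideanSpace.single i 1 with he
  set φ : ℝ → ℝ := fun t => f (w + t • e) with hφdef
  have hdiff : Differentiable ℝ f := hf.differentiable (by norm_num)
  have h1 : HasDerivAt (fun t : ℝ => w + t • e) e 0 := by
    simpa using ((hasDerivAt_id (0:ℝ)).smul_const e).const_add w
  have hφ : HasDerivAt φ (fderiv ℝ f w e) 0 := by
    have := (hdiff (w + (0:ℝ) • e)).hasFDerivAt.comp_hasDerivAt 0 h1
    simpa [hφdef, Function.comp_def] using this
  have hslope := hasDerivAt_iff_tendsto_slope.mp hφ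
  have hwmem := hX ▸ hw
  have hmem : ∀ t : ℝ, 0 ≤ w i + t → w i + t ≤ a i → w + t • e ∈ X := by
    intro t ht1 ht2
    rw [hX]
    intro j
    by_cases hj : j = i
    · subst hj
      simpa [he, EuclideanSpace.single_apply] using ⟨ht1, ht2⟩
    · simpa [he, EuclideanSpace.single_apply, hj] using hwmem j
  have key : ∀ t : ℝ, 0 ≤ w i + t → w i + t ≤ a i → 0 ≤ slope φ 0 t ∨ t = 0 := by
    intro t ht1 ht2
    rcases lt_trichotomy t 0 with htl | rfl | htr
    · left
      have hmemt : w + t • e ∈ X := hmem t ht1 ht2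
      have hle : f (w + t • e) ≤ f w := by
        refine hmono _ hmemt _ hw ?_
        intro j
        by_cases hj : j = i
        · subst hj; simp [he, EuclideanSpace.single_apply]; linarith
        · simp [he, EuclideanSpace.single_apply, hj]
      rw [slope_def_field]
      refine div_nonneg_iff.mpr (Or.inr ⟨?_, by linarith⟩)
      simpa [hφdef] using sub_nonpos.mpr hle
    · right; rfl
    · left
      have hmemt : w + t • e ∈ X := hmem t ht1 ht2
      have hle : f w ≤ f (w + t • e) := by
        refine hmono _ hw _ hmemt ?_
        intro j
        by_cases hj : j = i
        · subst hj; simp [he, EuclideanSpace.single_apply]; linarith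
        · simp [he, EuclideanSpace.single_apply, hj]
      rw [slope_def_field]
      apply div_nonneg
      · simpa [hφdef] using sub_nonneg.mpr hle
      · linarith
  rcases lt_or_eq_of_le (hwmem i).1 with hwi | hwi
  · -- w i > 0, approach from the left
    have hT : Tendsto (slope φ 0) (𝓝[<] (0:ℝ)) (𝓝 (fderiv ℝ f w e)) :=
      hslope.mono_left (nhdsWithin_mono _ (fun t ht => ne_of_lt ht))
    refine ge_of_tendsto hT ?_
    filter_upwards [Ioo_mem_nhdsLT_of_mem (Set.mem_Ioc.mpr ⟨neg_lt_zero.mpr hwi, le_refl 0⟩)]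
      with t ht
    rcases key t (by linarith [ht.1]) (by linarith [ht.2, (hwmem i).2]) with h | h
    · exact h
    · exact absurd h (ne_of_lt ht.2)
  · -- w i = 0 < a i, approach from the right
    have hT : Tendsto (slope φ 0) (𝓝[>] (0:ℝ)) (𝓝 (fderiv ℝ f w e)) :=
      hslope.mono_left (nhdsWithin_mono _ (fun t ht => ne_of_gt ht))
    refine ge_of_tendsto hT ?_
    have hIoo : Set.Ioo (0:ℝ) (a i - w i) ∈ 𝓝[>] (0:ℝ) :=
      Ioo_mem_nhdsGT_of_mem ⟨le_refl 0, by linarith⟩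
    filter_upwards [hIoo] with t ht
    rcases key t (by linarith [ht.1, (hwmem i).1]) (by linarith [ht.2]) with h | h
    · exact h
    · exact absurd h (ne_of_gt ht.1)

/-- A DR-submodular function is concave along nonnegative directions. -/
lemma aux_concave_dir {d : ℕ} {a : Fin d → ℝ}
    {X : Set (EuclideanSpace ℝ (Fin d))}
    (hX : X = {x | ∀ i, x i ∈ Set.Icc (0 : ℝ) (a i)})
    {f : EuclideanSpace ℝ (Fin d) → ℝ} (hf : ContDiff ℝ 2 f)
    (hDR : ∀ x ∈ X, ∀ i j : Fin d,
      fderiv ℝ (fun y => fderiv ℝ f y (EuclideanSpace.single i 1)) x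
        (EuclideanSpace.single j 1) ≤ 0)
    {w u : EuclideanSpace ℝ (Fin d)} (hw : w ∈ X) (hwu : w + u ∈ X)
    (hu : ∀ i, 0 ≤ u i) :
    f (w + u) ≤ f w + fderiv ℝ f w u := by
  have hfd : ContDiff ℝ 1 (fderiv ℝ f) := hf.fderiv_right (by norm_num)
  have hgdiff : ∀ v : EuclideanSpace ℝ (Fin d),
      Differentiable ℝ (fun p => fderiv ℝ f p v) := by
    intro v
    exact (ContinuousLinearMap.apply ℝ ℝ v).differentiable.comp
      (hfd.differentiable one_ne_zero)
  have hwmem := hX ▸ hw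
  have hwumem := hX ▸ hwu
  have hseg : ∀ t ∈ Set.Icc (0:ℝ) 1, w + t • u ∈ X := by
    intro t ht
    rw [hX]
    intro i
    have h1 := (hwmem i).1; have h2 := (hwumem i).2
    have h3 := (hwmem i).2
    simp only [PiLp.add_apply, PiLp.smul_apply, smul_eq_mul] at h2 ⊢
    constructor
    · have := mul_nonneg ht.1 (hu i); linarith
    · nlinarith [hu i, ht.1, ht.2, mul_le_of_le_one_left (hu i) ht.2]
  have hsecond : ∀ q ∈ X, fderiv ℝ (fun p => fderiv ℝ f p u) q u ≤ 0 := by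
    intro q hq
    have hrw : (fun p => fderiv ℝ f p u)
        = fun p => ∑ i, u i * fderiv ℝ f p (EuclideanSpace.single i 1) := by
      funext p; exact aux_clm_apply_sum _ u
    rw [hrw]
    have hderiv : fderiv ℝ
        (fun p => ∑ i, u i * fderiv ℝ f p (EuclideanSpace.single i 1)) q
        = ∑ i, u i • fderiv ℝ (fun p => fderiv ℝ f p (EuclideanSpace.single i 1)) q := by
      rw [fderiv_fun_sum (fun i _ => ((hgdiff _ q).const_mul (u i)))]
      congr 1
      funext i
      exact fderiv_const_mul (hgdiff _ q) (u i)
    rw [hderiv]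
    rw [ContinuousLinearMap.sum_apply]
    apply Finset.sum_nonpos
    intro i _
    rw [ContinuousLinearMap.smul_apply, smul_eq_mul]
    rw [aux_clm_apply_sum (fderiv ℝ (fun p => fderiv ℝ f p (EuclideanSpace.single i 1)) q) u]
    apply mul_nonpos_of_nonneg_of_nonpos (hu i)
    apply Finset.sum_nonpos
    intro j _
    exact mul_nonpos_of_nonneg_of_nonpos (hu j) (hDR q hq i j)
  set ψ : ℝ → ℝ := fun t => fderiv ℝ f (w + t • u) u with hψdef
  have hline : ∀ t : ℝ, HasDerivAt (fun s : ℝ => w + s • u) u t := by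
    intro t
    simpa using ((hasDerivAt_id t).smul_const u).const_add w
  have hψderiv : ∀ t : ℝ, HasDerivAt ψ
      (fderiv ℝ (fun p => fderiv ℝ f p u) (w + t • u) u) t := by
    intro t
    exact ((hgdiff u (w + t • u)).hasFDerivAt.comp_hasDerivAt t (hline t))
  have hψcont : Continuous ψ := by
    have : Continuous fun t : ℝ => w + t • u :=
      continuous_const.add (continuous_id.smul continuous_const)
    exact ((hgdiff u).continuous).comp this
  have hanti : AntitoneOn ψ (Set.Icc 0 1) := by
    apply antitoneOn_of_deriv_nonpos (convex_Icc 0 1) hψcont.continuousOn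
    · intro t _; exact ((hψderiv t).differentiableAt).differentiableWithinAt
    · intro t ht
      rw [interior_Icc] at ht
      rw [(hψderiv t).deriv]
      exact hsecond _ (hseg t ⟨le_of_lt ht.1, le_of_lt ht.2⟩)
  have hφderiv : ∀ t ∈ Set.uIcc (0:ℝ) 1, HasDerivAt (fun s => f (w + s • u)) (ψ t) t := by
    intro t _
    exact ((hf.differentiable (by norm_num)) (w + t • u)).hasFDerivAt.comp_hasDerivAt t (hline t)
  have hFTC := intervalIntegral.integral_eq_sub_of_hasDerivAt hφderiv
    (hψcont.intervalIntegrable 0 1)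
  simp only [one_smul, zero_smul, add_zero] at hFTC
  have hmono' : ∫ t in (0:ℝ)..1, ψ t ≤ ∫ t in (0:ℝ)..1, ψ 0 := by
    apply intervalIntegral.integral_mono_on (by norm_num) (hψcont.intervalIntegrable 0 1)
      (intervalIntegrable_const)
    intro t ht
    exact hanti (Set.left_mem_Icc.mpr (by norm_num)) ht ht.1
  rw [hFTC] at hmono'
  simp only [intervalIntegral.integral_const, smul_eq_mul, sub_zero, one_mul] at hmono'
  have hψ0 : ψ 0 = fderiv ℝ f w u := by simp [hψdef]
  rw [hψ0] at hmono'
  linarith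

end Auxiliary

set_option maxHeartbeats 1000000 in
/-- The non-oblivious auxiliary function `F(x) = ∫₀¹ (e^{z−1}/z) f(z·x) dz` of a
monotone DR-submodular function `f` with `f(0)=0` satisfies
`∇F(x) = ∫₀¹ e^{z−1} ∇f(z·x) dz` and `⟨y−x, ∇F(x)⟩ ≥ (1 − 1/e) f(y) − f(x)`. -/
theorem auxiliary_function_gradient_and_lower_bound
    {d : ℕ} (a : Fin d → ℝ) (ha : ∀ i, 0 ≤ a i)
    (X : Set (EuclideanSpace ℝ (Fin d)))
    (hX : X = {x | ∀ i, x i ∈ Set.Icc (0 : ℝ) (a i)})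
    (f : EuclideanSpace ℝ (Fin d) → ℝ) (hf : ContDiff ℝ 2 f)
    (hfnonneg : ∀ x ∈ X, 0 ≤ f x)
    (hmono : ∀ x ∈ X, ∀ y ∈ X, (∀ i, x i ≤ y i) → f x ≤ f y)
    (hDR : ∀ x ∈ X, ∀ i j : Fin d,
      fderiv ℝ (fun y => fderiv ℝ f y (EuclideanSpace.single i 1)) x
        (EuclideanSpace.single j 1) ≤ 0)
    (hf0 : f 0 = 0)
    (F : EuclideanSpace ℝ (Fin d) → ℝ)
    (hF : ∀ x, F x = ∫ z in (0:ℝ)..1, (exp (z - 1) / z) * f (z • x))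
    (x : EuclideanSpace ℝ (Fin d)) (hx : x ∈ X)
    (y : EuclideanSpace ℝ (Fin d)) (hy : y ∈ X) :
    (∀ v : EuclideanSpace ℝ (Fin d),
      fderiv ℝ F x v = ∫ z in (0:ℝ)..1, exp (z - 1) * fderiv ℝ f (z • x) v) ∧
    (1 - 1 / exp 1) * f y - f x ≤ fderiv ℝ F x (y - x) := by
  classical
  have hdiff : Differentiable ℝ f := hf.differentiable (by norm_num)
  have hcontf : Continuous f := hdiff.continuous
  have hcontfd : Continuous (fderiv ℝ f) := hf.continuous_fderiv (by norm_num)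
  set R : ℝ := ‖x‖ + 1 with hR
  have hR0 : 0 < R := by positivity
  obtain ⟨C, hC⟩ := (isCompact_closedBall (0 : EuclideanSpace ℝ (Fin d)) R
    ).exists_bound_of_continuousOn hcontfd.continuousOn
  have hC0 : 0 ≤ C := le_trans (norm_nonneg _) (hC 0 (by simp [hR0.le]))
  have hball : ∀ z ∈ Set.Ioc (0:ℝ) 1, ∀ x' ∈ Metric.ball x 1,
      z • x' ∈ Metric.closedBall (0 : EuclideanSpace ℝ (Fin d)) R := by
    intro z hz x' hx'
    have hx'n : ‖x'‖ ≤ R := by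
      have := norm_sub_norm_le x' x
      have hd : ‖x' - x‖ < 1 := by simpa [dist_eq_norm] using hx'
      rw [hR]; linarith
    simp only [Metric.mem_closedBall, dist_zero_right, norm_smul, Real.norm_eq_abs,
      abs_of_pos hz.1]
    nlinarith [hz.1.le, hz.2, norm_nonneg x']
  have hlip : ∀ w ∈ Metric.closedBall (0 : EuclideanSpace ℝ (Fin d)) R,
      ‖f w‖ ≤ C * ‖w‖ := by
    intro w hw
    have h0mem : (0 : EuclideanSpace ℝ (Fin d)) ∈ Metric.closedBall
        (0 : EuclideanSpace ℝ (Fin d)) R := Metric.mem_closedBall_self hR0.le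
    have := (convex_closedBall (0 : EuclideanSpace ℝ (Fin d)) R
      ).norm_image_sub_le_of_norm_fderiv_le (fun p _ => hdiff p) hC h0mem hw
    simpa [hf0] using this
  -- the derivative candidate
  set G' : EuclideanSpace ℝ (Fin d) → ℝ → (EuclideanSpace ℝ (Fin d) →L[ℝ] ℝ) :=
    fun x' z => exp (z - 1) • fderiv ℝ f (z • x') with hG'
  have hsmulcont : ∀ x' : EuclideanSpace ℝ (Fin d),
      Continuous fun z : ℝ => z • x' := fun x' => continuous_id.smul continuous_const
  have hG'cont : ∀ x', Continuous (G' x') := by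
    intro x'
    exact ((continuous_id.sub continuous_const).rexp).smul
      (hcontfd.comp (hsmulcont x'))
  have hIoc : Set.uIoc (0:ℝ) 1 = Set.Ioc (0:ℝ) 1 := Set.uIoc_of_le zero_le_one
  have hdiffint : ∀ z ∈ Set.Ioc (0:ℝ) 1, ∀ x' : EuclideanSpace ℝ (Fin d),
      HasFDerivAt (fun w => (exp (z-1) / z) * f (z • w)) (G' x' z) x' := by
    intro z hz x'
    have hsm : HasFDerivAt (fun w : EuclideanSpace ℝ (Fin d) => z • w)
        (z • ContinuousLinearMap.id ℝ (EuclideanSpace ℝ (Fin d))) x' :=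
      (hasFDerivAt_id x').const_smul z
    have hcomp := ((hdiff (z • x')).hasFDerivAt.comp x' hsm).const_mul (exp (z-1) / z)
    refine hcomp.congr_fderiv ?_
    ext v
    have hz0 : z ≠ 0 := ne_of_gt hz.1
    simp only [hG', ContinuousLinearMap.smul_apply, ContinuousLinearMap.comp_apply,
      ContinuousLinearMap.coe_smul', Pi.smul_apply, ContinuousLinearMap.coe_id', id_eq,
      _root_.map_smul, smul_eq_mul]
    field_simp
  -- the main differentiation under the integral sign
  have hkey : HasFDerivAt F (∫ z in (0:ℝ)..1, G' x z) x := by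
    have hFeq : F = fun x' => ∫ z in (0:ℝ)..1, (exp (z - 1) / z) * f (z • x') := by
      funext x'; exact hF x'
    rw [hFeq]
    apply intervalIntegral.hasFDerivAt_integral_of_dominated_of_fderiv_le
      (s := Metric.ball x 1) (bound := fun _ => C) (Metric.ball_mem_nhds x one_pos)
    · filter_upwards with x'
      rw [hIoc]
      apply ContinuousOn.aestronglyMeasurable _ measurableSet_Ioc
      apply ContinuousOn.mul
      · exact (((continuous_id.sub continuous_const).rexp).continuousOn).div
          continuousOn_id (fun z hz => ne_of_gt hz.1)
      · exact (hcontf.comp (hsmulcont x')).continuousOn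
    · rw [intervalIntegrable_iff_integrableOn_Ioc_of_le zero_le_one]
      apply Measure.integrableOn_of_bounded (M := C * R) measure_Ioc_lt_top.ne
      · have : Measurable fun t : ℝ => exp (t - 1) / t * f (t • x) :=
          ((Real.measurable_exp.comp (measurable_id.sub measurable_const)).div
            measurable_id).mul (hcontf.measurable.comp (hsmulcont x).measurable)
        exact this.aestronglyMeasurable
      · rw [ae_restrict_iff' measurableSet_Ioc]
        filter_upwards with z hz
        have hx'm : x ∈ Metric.ball x 1 := Metric.mem_ball_self one_pos
        have hb := hball z hz x hx'm
        have hfb := hlip _ hb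
        have hnorm : ‖z • x‖ = z * ‖x‖ := by
          rw [norm_smul, Real.norm_eq_abs, abs_of_pos hz.1]
        rw [norm_mul, Real.norm_eq_abs, abs_div, abs_of_pos hz.1,
          abs_of_pos (exp_pos _)]
        have hexple : exp (z - 1) ≤ 1 :=
          Real.exp_le_one_iff.mpr (by linarith [hz.2])
        rw [hnorm] at hfb
        have hzx : ‖f (z • x)‖ ≤ C * (z * ‖x‖) := hfb
        rw [Real.norm_eq_abs] at hzx
        have hz0 : z ≠ 0 := ne_of_gt hz.1
        calc exp (z-1)/z * |f (z • x)| ≤ exp (z-1)/z * (C * (z * ‖x‖)) := by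
              apply mul_le_mul_of_nonneg_left hzx (div_nonneg (exp_pos _).le hz.1.le)
          _ = exp (z-1) * (C * ‖x‖) := by field_simp
          _ ≤ 1 * (C * ‖x‖) := by
              apply mul_le_mul_of_nonneg_right hexple (by positivity)
          _ ≤ C * R := by rw [one_mul]; nlinarith [norm_nonneg x]
    · rw [hIoc]
      exact (hG'cont x).aestronglyMeasurable
    · rw [hIoc]
      filter_upwards with z hz x' hx'
      have hb := hball z hz x' hx'
      simp only [hG']
      refine le_trans (ContinuousLinearMap.opNorm_smul_le _ _) ?_
      rw [Real.norm_eq_abs, abs_of_pos (exp_pos _)]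
      have hexple : exp (z - 1) ≤ 1 :=
        Real.exp_le_one_iff.mpr (by linarith [hz.2])
      have := hC _ hb
      nlinarith [norm_nonneg (fderiv ℝ f (z • x'))]
    · exact intervalIntegrable_const
    · rw [hIoc]
      filter_upwards with z hz x' hx'
      exact hdiffint z hz x'
  -- Part 1
  have part1 : ∀ v : EuclideanSpace ℝ (Fin d),
      fderiv ℝ F x v = ∫ z in (0:ℝ)..1, exp (z - 1) * fderiv ℝ f (z • x) v := by
    intro v
    rw [hkey.fderiv]
    have hint : IntegrableOn (G' x) (Set.Ioc (0:ℝ) 1) volume :=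
      (hG'cont x).integrableOn_Ioc
    rw [intervalIntegral.integral_of_le zero_le_one,
      intervalIntegral.integral_of_le zero_le_one,
      ContinuousLinearMap.integral_apply hint v]
    simp [hG']
  refine ⟨part1, ?_⟩
  -- Part 2
  have hline : ∀ z : ℝ, HasDerivAt (fun s : ℝ => s • x) x z := by
    intro z
    simpa using (hasDerivAt_id z).smul_const x
  have hDzx : ∀ z : ℝ, HasDerivAt (fun s : ℝ => f (s • x)) (fderiv ℝ f (z • x) x) z :=
    fun z => (hdiff (z • x)).hasFDerivAt.comp_hasDerivAt z (hline z)
  set g' : ℝ → ℝ := fun z => exp (z-1) * f (z • x) + exp (z-1) * fderiv ℝ f (z • x) x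
    with hg'
  have hprod : ∀ z : ℝ, HasDerivAt (fun s => exp (s-1) * f (s • x)) (g' z) z := by
    intro z
    have he : HasDerivAt (fun s : ℝ => exp (s - 1)) (exp (z-1)) z := by
      simpa using ((hasDerivAt_id z).sub_const 1).exp
    simpa [hg', Pi.mul_def] using he.mul (hDzx z)
  have hcontA : ∀ v : EuclideanSpace ℝ (Fin d),
      Continuous fun z : ℝ => (fderiv ℝ f (z • x)) v :=
    fun v => (hcontfd.comp (hsmulcont x)).clm_apply continuous_const
  have hcontg' : Continuous g' :=
    (((continuous_id.sub continuous_const).rexp).mul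
      (hcontf.comp (hsmulcont x))).add
      (((continuous_id.sub continuous_const).rexp).mul (hcontA x))
  have hFTC : ∫ z in (0:ℝ)..1, g' z = f x := by
    have := intervalIntegral.integral_eq_sub_of_hasDerivAt
      (f := fun s => exp (s-1) * f (s • x)) (fun z _ => hprod z)
      (hcontg'.intervalIntegrable 0 1)
    simpa [hf0] using this
  -- key pointwise inequality
  have hkey2 : ∀ z ∈ Set.Icc (0:ℝ) 1, f y - f (z • x) ≤ fderiv ℝ f (z • x) y := by
    intro z hz
    set w : EuclideanSpace ℝ (Fin d) := z • x with hwdef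
    have hxmem := hX ▸ hx
    have hymem := hX ▸ hy
    have hwcoord : ∀ i, w i = z * x i := fun i => rfl
    have hwX : w ∈ X := by
      rw [hX]
      intro i
      have hxi := hxmem i
      rw [hwcoord]
      exact ⟨mul_nonneg hz.1 hxi.1,
        le_trans (mul_le_of_le_one_left hxi.1 hz.2) hxi.2⟩
    have hwmem' := hX ▸ hwX
    set u : EuclideanSpace ℝ (Fin d) :=
      (WithLp.equiv 2 _).symm (fun i => max (y i) (w i) - w i) with hudef
    have hui : ∀ i, u i = max (y i) (w i) - w i := by
      intro i; rw [hudef]; simp [WithLp.equiv_symm_apply]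
    have hu0 : ∀ i, 0 ≤ u i := by
      intro i; rw [hui]; simp [le_max_right]
    have hwu : w + u ∈ X := by
      rw [hX]
      intro i
      have : (w + u) i = max (y i) (w i) := by
        simp [PiLp.add_apply, hui]
      rw [this]
      exact ⟨le_trans (hymem i).1 (le_max_left _ _),
        max_le (hymem i).2 (hwmem' i).2⟩
    have hconc := aux_concave_dir hX hf hDR hwX hwu hu0
    have hymax : f y ≤ f (w + u) := by
      refine hmono y hy _ hwu ?_
      intro i
      have : (w + u) i = max (y i) (w i) := by
        simp [PiLp.add_apply, hui]
      rw [this]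
      exact le_max_left _ _
    have hlin : fderiv ℝ f w u ≤ fderiv ℝ f w y := by
      have hnn : 0 ≤ fderiv ℝ f w (y - u) := by
        rw [aux_clm_apply_sum]
        apply Finset.sum_nonneg
        intro i _
        have hyu : (y - u) i = y i - u i := rfl
        rcases eq_or_lt_of_le (ha i) with hai | hai
        · have hyi : y i = 0 := le_antisymm (hai ▸ (hymem i).2) (hymem i).1
          have hwi : w i = 0 := le_antisymm (hai ▸ (hwmem' i).2) (hwmem' i).1
          have : (y - u) i = 0 := by
            rw [hyu, hui, hyi, hwi]; simp
          rw [this, zero_mul]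
        · apply mul_nonneg
          · rw [hyu, hui]
            have h1 : max (y i) (w i) ≤ y i + w i :=
              max_le (le_add_of_nonneg_right (hwmem' i).1)
                (le_add_of_nonneg_left (hymem i).1)
            linarith
          · exact aux_grad_nonneg hX hf hmono hwX i hai
      have hsub : fderiv ℝ f w (y - u) = fderiv ℝ f w y - fderiv ℝ f w u :=
        map_sub _ _ _
      linarith [hsub ▸ hnn]
    linarith
  -- scaled pointwise inequality
  have hptws : ∀ z ∈ Set.Icc (0:ℝ) 1,
      exp (z-1) * f y - g' z ≤ exp (z-1) * fderiv ℝ f (z • x) (y - x) := by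
    intro z hz
    have h1 := hkey2 z hz
    have hsub : fderiv ℝ f (z • x) (y - x)
        = fderiv ℝ f (z • x) y - fderiv ℝ f (z • x) x := map_sub _ _ _
    have hexp0 : (0:ℝ) ≤ exp (z-1) := (exp_pos _).le
    rw [hsub]
    simp only [hg']
    nlinarith [mul_le_mul_of_nonneg_left h1 hexp0]
  -- integrate the inequality
  have hintA : IntervalIntegrable
      (fun z => exp (z-1) * fderiv ℝ f (z • x) (y - x)) volume 0 1 :=
    (((continuous_id.sub continuous_const).rexp).mul (hcontA (y - x))
      ).intervalIntegrable 0 1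
  have hintL : IntervalIntegrable (fun z => exp (z-1) * f y - g' z) volume 0 1 :=
    ((((continuous_id.sub continuous_const).rexp).mul continuous_const).sub
      hcontg').intervalIntegrable 0 1
  have hIneq := intervalIntegral.integral_mono_on zero_le_one hintL hintA hptws
  have hsplit : ∫ z in (0:ℝ)..1, (exp (z-1) * f y - g' z)
      = (∫ z in (0:ℝ)..1, exp (z-1) * f y) - ∫ z in (0:ℝ)..1, g' z := by
    apply intervalIntegral.integral_sub
    · exact (((continuous_id.sub continuous_const).rexp).mul
        continuous_const).intervalIntegrable 0 1
    · exact hcontg'.intervalIntegrable 0 1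
  have hexpint : ∫ z in (0:ℝ)..1, exp (z-1) = 1 - exp (-1) := by
    rw [intervalIntegral.integral_comp_sub_right (fun z => exp z) 1]
    norm_num [integral_exp]
  have hconst : ∫ z in (0:ℝ)..1, exp (z-1) * f y = (1 - exp (-1)) * f y := by
    rw [intervalIntegral.integral_mul_const, hexpint]
  rw [hsplit, hconst, hFTC] at hIneq
  have hfinal : fderiv ℝ F x (y - x)
      = ∫ z in (0:ℝ)..1, exp (z-1) * fderiv ℝ f (z • x) (y - x) := part1 (y - x)
  have he1 : (1:ℝ) - 1 / exp 1 = 1 - exp (-1) := by rw [exp_neg, one_div]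
  rw [hfinal, he1]
  linarith
end
end

section
/- Let f : ℝ^d → ℝ be a twice differentiable monotone DR-submodular function with f(0) = 0, and define F(x) = ∫₀¹ (e^{z−1}/z) f(z·x) dz. Then F is monotone and DR-submodular; moreover, if f is L₂-smooth, then F is (L₂/e)-smooth. -/
set_option synthInstance.maxHeartbeats 1000000
set_option maxHeartbeats 1000000

noncomputable section
open Real MeasureTheory Set intervalIntegral

section AuxLemmas
variable {d : ℕ}

private lemma contOn_aux (f : EuclideanSpace ℝ (Fin d) → ℝ) (hf : ContDiff ℝ 2 f)
    (x : EuclideanSpace ℝ (Fin d)) :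
    ContinuousOn (fun z : ℝ => (exp (z - 1) / z) * f (z • x)) (Set.Ioc 0 1) := by
  apply ContinuousOn.mul
  · exact ((continuous_exp.comp (continuous_id.sub continuous_const)).continuousOn).div
      continuousOn_id (fun z hz => ne_of_gt hz.1)
  · exact (hf.continuous.comp (continuous_id.smul continuous_const)).continuousOn

private lemma intgA (f : EuclideanSpace ℝ (Fin d) → ℝ) (hf : ContDiff ℝ 2 f) (hf0 : f 0 = 0)
    (x : EuclideanSpace ℝ (Fin d)) :
    IntervalIntegrable (fun z : ℝ => (exp (z - 1) / z) * f (z • x)) volume 0 1 := by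
  obtain ⟨C, hC⟩ := (isCompact_closedBall (0 : EuclideanSpace ℝ (Fin d)) ‖x‖).exists_bound_of_continuousOn
    (hf.continuous_fderiv two_ne_zero).continuousOn
  have hC0 : 0 ≤ C := le_trans (norm_nonneg _) (hC 0 (Metric.mem_closedBall_self (norm_nonneg x)))
  rw [intervalIntegrable_iff, uIoc_of_le zero_le_one]
  apply Integrable.mono' (g := fun _ => C * ‖x‖)
    (integrableOn_const measure_Ioc_lt_top.ne)
    ((contOn_aux f hf x).aestronglyMeasurable measurableSet_Ioc)
  filter_upwards [ae_restrict_mem measurableSet_Ioc] with z hz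
  have hz0 : (0:ℝ) < z := hz.1
  have key : ‖f (z • x)‖ ≤ C * ‖z • x‖ := by
    have := Convex.norm_image_sub_le_of_norm_fderiv_le
      (fun y _ => (hf.differentiable two_ne_zero).differentiableAt)
      (fun y hy => hC y hy) (convex_closedBall (0 : EuclideanSpace ℝ (Fin d)) ‖x‖)
      (Metric.mem_closedBall_self (norm_nonneg x)) (y := z • x) ?_
    · simpa [hf0] using this
    · simp only [Metric.mem_closedBall, dist_zero_right, norm_smul, Real.norm_eq_abs,
        abs_of_pos hz0]
      nlinarith [norm_nonneg x, hz.2]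
  have hnx : ‖z • x‖ = z * ‖x‖ := by
    rw [norm_smul, Real.norm_eq_abs, abs_of_pos hz0]
  rw [Real.norm_eq_abs, abs_mul, abs_div, abs_of_pos (exp_pos _), abs_of_pos hz0]
  calc exp (z-1) / z * |f (z • x)| ≤ exp (z-1) / z * (C * (z * ‖x‖)) := by
        apply mul_le_mul_of_nonneg_left _ (by positivity)
        rw [← hnx]; simpa using key
    _ = exp (z-1) * (C * ‖x‖) := by field_simp
    _ ≤ 1 * (C * ‖x‖) := by
        apply mul_le_mul_of_nonneg_right _ (by positivity)
        have : z - 1 ≤ 0 := by linarith [hz.2]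
        calc exp (z-1) ≤ exp 0 := exp_le_exp.2 this
          _ = 1 := exp_zero
    _ = C * ‖x‖ := one_mul _

private lemma derivB (f : EuclideanSpace ℝ (Fin d) → ℝ) (hf : ContDiff ℝ 2 f) (hf0 : f 0 = 0)
    (x₀ : EuclideanSpace ℝ (Fin d)) :
    HasFDerivAt (fun x : EuclideanSpace ℝ (Fin d) => ∫ z in (0:ℝ)..1, (exp (z - 1) / z) * f (z • x))
      (∫ z in (0:ℝ)..1, exp (z - 1) • fderiv ℝ f (z • x₀)) x₀ := by
  obtain ⟨C, hC⟩ := (isCompact_closedBall (0 : EuclideanSpace ℝ (Fin d)) (‖x₀‖ + 1)).exists_bound_of_continuousOn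
    (hf.continuous_fderiv two_ne_zero).continuousOn
  have hdf : Differentiable ℝ f := hf.differentiable two_ne_zero
  have hball : ∀ z ∈ Set.Ioc (0:ℝ) 1, ∀ x ∈ Metric.ball x₀ 1,
      z • x ∈ Metric.closedBall (0 : EuclideanSpace ℝ (Fin d)) (‖x₀‖ + 1) := by
    intro z hz x hx
    simp only [Metric.mem_closedBall, dist_zero_right, norm_smul, Real.norm_eq_abs,
      abs_of_pos hz.1]
    have h1 : ‖x‖ ≤ ‖x₀‖ + 1 := by
      have := norm_sub_norm_le x x₀
      rw [Metric.mem_ball, dist_eq_norm] at hx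
      linarith
    nlinarith [norm_nonneg x, hz.1, hz.2]
  apply intervalIntegral.hasFDerivAt_integral_of_dominated_of_fderiv_le
    (F' := fun x z => exp (z - 1) • fderiv ℝ f (z • x)) (bound := fun _ => C)
    (s := Metric.ball x₀ 1) (Metric.ball_mem_nhds x₀ one_pos)
  · filter_upwards with x
    rw [uIoc_of_le zero_le_one]
    exact (contOn_aux f hf x).aestronglyMeasurable measurableSet_Ioc
  · exact intgA f hf hf0 x₀
  · apply Continuous.aestronglyMeasurable
    exact (continuous_exp.comp (continuous_id.sub continuous_const)).smul
      ((hf.continuous_fderiv two_ne_zero).comp (continuous_id.smul continuous_const))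
  · rw [uIoc_of_le zero_le_one]
    apply ae_of_all
    intro z hz x hx
    rw [norm_smul (rexp (z-1)) (fderiv ℝ f (z • x)), Real.norm_eq_abs, abs_of_pos (exp_pos _)]
    calc exp (z - 1) * ‖fderiv ℝ f (z • x)‖ ≤ 1 * C := by
          apply mul_le_mul _ (hC _ (hball z hz x hx)) (norm_nonneg _) zero_le_one
          calc exp (z-1) ≤ exp 0 := exp_le_exp.2 (by linarith [hz.2])
            _ = 1 := exp_zero
      _ = C := one_mul _
  · exact intervalIntegrable_const
  · rw [uIoc_of_le zero_le_one]
    apply ae_of_all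
    intro z hz x hx
    have hz0 : z ≠ 0 := ne_of_gt hz.1
    have h1 : HasFDerivAt (fun x : EuclideanSpace ℝ (Fin d) => z • x)
        (z • ContinuousLinearMap.id ℝ (EuclideanSpace ℝ (Fin d))) x :=
      (hasFDerivAt_id x).const_smul z
    have h2 : HasFDerivAt f (fderiv ℝ f (z • x)) (z • x) := (hdf (z • x)).hasFDerivAt
    have h3 := (h2.comp x h1).const_mul (exp (z - 1) / z)
    refine h3.congr_fderiv ?_
    ext v
    simp only [ContinuousLinearMap.smul_apply, ContinuousLinearMap.coe_comp', Function.comp_apply,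
      ContinuousLinearMap.coe_id', id_eq, _root_.map_smul, smul_eq_mul]
    field_simp

private lemma derivC (f : EuclideanSpace ℝ (Fin d) → ℝ) (hf : ContDiff ℝ 2 f)
    (v : EuclideanSpace ℝ (Fin d)) (x₀ : EuclideanSpace ℝ (Fin d)) :
    HasFDerivAt (fun x : EuclideanSpace ℝ (Fin d) =>
        ∫ z in (0:ℝ)..1, exp (z - 1) * (fderiv ℝ f (z • x) v))
      (∫ z in (0:ℝ)..1, (z * exp (z - 1)) •
        ((ContinuousLinearMap.apply ℝ ℝ v).comp (fderiv ℝ (fderiv ℝ f) (z • x₀)))) x₀ := by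
  have hf' : ContDiff ℝ 1 (fderiv ℝ f) := hf.fderiv_right (le_refl 2)
  have hdf' : Differentiable ℝ (fderiv ℝ f) := hf'.differentiable one_ne_zero
  have hcf'' : Continuous (fderiv ℝ (fderiv ℝ f)) := hf'.continuous_fderiv one_ne_zero
  obtain ⟨M, hM⟩ := (isCompact_closedBall (0 : EuclideanSpace ℝ (Fin d)) (‖x₀‖ + 1)).exists_bound_of_continuousOn
    (hf'.continuous_fderiv one_ne_zero).continuousOn
  have hM0 : 0 ≤ M := le_trans (norm_nonneg _)
    (hM 0 (Metric.mem_closedBall_self (by positivity)))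
  have hball : ∀ z ∈ Set.Ioc (0:ℝ) 1, ∀ x ∈ Metric.ball x₀ 1,
      z • x ∈ Metric.closedBall (0 : EuclideanSpace ℝ (Fin d)) (‖x₀‖ + 1) := by
    intro z hz x hx
    simp only [Metric.mem_closedBall, dist_zero_right, norm_smul, Real.norm_eq_abs,
      abs_of_pos hz.1]
    have h1 : ‖x‖ ≤ ‖x₀‖ + 1 := by
      have := norm_sub_norm_le x x₀
      rw [Metric.mem_ball, dist_eq_norm] at hx
      linarith
    nlinarith [norm_nonneg x, hz.1, hz.2]
  have hnorm : ∀ z ∈ Set.Ioc (0:ℝ) 1, ∀ x ∈ Metric.ball x₀ 1,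
      ‖(ContinuousLinearMap.apply ℝ ℝ v).comp (fderiv ℝ (fderiv ℝ f) (z • x))‖ ≤ M * ‖v‖ := by
    intro z hz x hx
    apply ContinuousLinearMap.opNorm_le_bound _ (by positivity)
    intro u
    calc ‖((ContinuousLinearMap.apply ℝ ℝ v).comp (fderiv ℝ (fderiv ℝ f) (z • x))) u‖
        = ‖fderiv ℝ (fderiv ℝ f) (z • x) u v‖ := rfl
      _ ≤ ‖fderiv ℝ (fderiv ℝ f) (z • x) u‖ * ‖v‖ := ContinuousLinearMap.le_opNorm _ _
      _ ≤ (‖fderiv ℝ (fderiv ℝ f) (z • x)‖ * ‖u‖) * ‖v‖ :=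
          mul_le_mul_of_nonneg_right (ContinuousLinearMap.le_opNorm _ _) (norm_nonneg _)
      _ ≤ (M * ‖u‖) * ‖v‖ :=
          mul_le_mul_of_nonneg_right (mul_le_mul_of_nonneg_right
            (hM _ (hball z hz x hx)) (norm_nonneg u)) (norm_nonneg v)
      _ = M * ‖v‖ * ‖u‖ := by ring
  apply intervalIntegral.hasFDerivAt_integral_of_dominated_of_fderiv_le
    (F' := fun x z => (z * exp (z - 1)) •
      ((ContinuousLinearMap.apply ℝ ℝ v).comp (fderiv ℝ (fderiv ℝ f) (z • x))))
    (bound := fun _ => M * ‖v‖) (s := Metric.ball x₀ 1) (Metric.ball_mem_nhds x₀ one_pos)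
  · filter_upwards with x
    apply Continuous.aestronglyMeasurable
    exact (continuous_exp.comp (continuous_id.sub continuous_const)).mul
      (((hf.continuous_fderiv two_ne_zero).comp (continuous_id.smul continuous_const)).clm_apply
        continuous_const)
  · apply Continuous.intervalIntegrable
    exact (continuous_exp.comp (continuous_id.sub continuous_const)).mul
      (((hf.continuous_fderiv two_ne_zero).comp (continuous_id.smul continuous_const)).clm_apply
        continuous_const)
  · apply Continuous.aestronglyMeasurable
    apply Continuous.fun_smul
    · exact continuous_id.mul (continuous_exp.comp (continuous_id.sub continuous_const))
    · exact continuous_const.clm_comp (hcf''.comp (continuous_id.smul continuous_const))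
  · rw [uIoc_of_le zero_le_one]
    apply ae_of_all
    intro z hz x hx
    rw [norm_smul (z * rexp (z - 1))
      ((ContinuousLinearMap.apply ℝ ℝ v).comp (fderiv ℝ (fderiv ℝ f) (z • x))),
      Real.norm_eq_abs, abs_of_pos (mul_pos hz.1 (exp_pos _))]
    calc (z * exp (z-1)) * ‖(ContinuousLinearMap.apply ℝ ℝ v).comp (fderiv ℝ (fderiv ℝ f) (z • x))‖
        ≤ 1 * (M * ‖v‖) := by
          apply mul_le_mul _ (hnorm z hz x hx) (norm_nonneg _) zero_le_one
          have h2 : exp (z-1) ≤ 1 := by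
            calc exp (z-1) ≤ exp 0 := exp_le_exp.2 (by linarith [hz.2])
              _ = 1 := exp_zero
          nlinarith [hz.1.le, hz.2, exp_pos (z-1)]
      _ = M * ‖v‖ := one_mul _
  · exact intervalIntegrable_const
  · rw [uIoc_of_le zero_le_one]
    apply ae_of_all
    intro z hz x hx
    have h1 : HasFDerivAt (fun x : EuclideanSpace ℝ (Fin d) => z • x)
        (z • ContinuousLinearMap.id ℝ (EuclideanSpace ℝ (Fin d))) x :=
      (hasFDerivAt_id x).const_smul z
    have h2 : HasFDerivAt (fderiv ℝ f) (fderiv ℝ (fderiv ℝ f) (z • x)) (z • x) :=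
      (hdf' (z • x)).hasFDerivAt
    have h3 : HasFDerivAt (fun x : EuclideanSpace ℝ (Fin d) => fderiv ℝ f (z • x))
        ((fderiv ℝ (fderiv ℝ f) (z • x)).comp (z • ContinuousLinearMap.id ℝ _)) x :=
      h2.comp x h1
    have h4 := (h3.clm_apply (hasFDerivAt_const v x)).const_mul (exp (z - 1))
    refine h4.congr_fderiv ?_
    ext w
    simp only [ContinuousLinearMap.smul_apply, ContinuousLinearMap.add_apply,
      ContinuousLinearMap.coe_comp', Function.comp_apply, ContinuousLinearMap.flip_apply,
      ContinuousLinearMap.coe_id', id_eq, ContinuousLinearMap.comp_zero,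
      ContinuousLinearMap.zero_apply, add_zero, _root_.map_smul, smul_eq_mul,
      ContinuousLinearMap.apply_apply]
    ring

end AuxLemmas

/-- The auxiliary function `F(x) = ∫₀¹ (e^{z−1}/z) f(z·x) dz` of a monotone
DR-submodular `f` with `f(0)=0` is monotone and DR-submodular; if `f` is
`L₂`-smooth then `F` is `(L₂/e)`-smooth. -/
theorem auxiliary_function_properties
    {d : ℕ} (f : EuclideanSpace ℝ (Fin d) → ℝ) (hf : ContDiff ℝ 2 f)
    (hmono : ∀ x y : EuclideanSpace ℝ (Fin d), (∀ i, x i ≤ y i) → f x ≤ f y)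
    (hDR : ∀ (x : EuclideanSpace ℝ (Fin d)) (i j : Fin d),
      fderiv ℝ (fun y => fderiv ℝ f y (EuclideanSpace.single i 1)) x
        (EuclideanSpace.single j 1) ≤ 0)
    (hf0 : f 0 = 0) (L₂ : ℝ)
    (hsmooth : ∀ x y : EuclideanSpace ℝ (Fin d),
      ‖gradient f x - gradient f y‖ ≤ L₂ * ‖x - y‖)
    (F : EuclideanSpace ℝ (Fin d) → ℝ)
    (hF : ∀ x, F x = ∫ z in (0:ℝ)..1, (exp (z - 1) / z) * f (z • x)) :
    (∀ x y : EuclideanSpace ℝ (Fin d), (∀ i, x i ≤ y i) → F x ≤ F y) ∧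
    (∀ (x : EuclideanSpace ℝ (Fin d)) (i j : Fin d),
      fderiv ℝ (fun y => fderiv ℝ F y (EuclideanSpace.single i 1)) x
        (EuclideanSpace.single j 1) ≤ 0) ∧
    (∀ x y : EuclideanSpace ℝ (Fin d),
      ‖gradient F x - gradient F y‖ ≤ (L₂ / exp 1) * ‖x - y‖) := by
  have hFeq : F = fun x => ∫ z in (0:ℝ)..1, (exp (z - 1) / z) * f (z • x) := funext hF
  have hdf' : Differentiable ℝ (fderiv ℝ f) :=
    (hf.fderiv_right (m := 1) (le_refl 2)).differentiable one_ne_zero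
  have hcont1 : ∀ x : EuclideanSpace ℝ (Fin d),
      Continuous (fun z : ℝ => exp (z - 1) • fderiv ℝ f (z • x)) := fun x =>
    (continuous_exp.comp (continuous_id.sub continuous_const)).smul
      ((hf.continuous_fderiv two_ne_zero).comp (continuous_id.smul continuous_const))
  have hfderivF : ∀ x, fderiv ℝ F x = ∫ z in (0:ℝ)..1, exp (z - 1) • fderiv ℝ f (z • x) := by
    intro x
    rw [hFeq]
    exact (derivB f hf hf0 x).fderiv
  refine ⟨?_, ?_, ?_⟩
  · -- monotone
    intro x y hxy
    rw [hF x, hF y]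
    apply intervalIntegral.integral_mono_on zero_le_one (intgA f hf hf0 x) (intgA f hf hf0 y)
    intro z hz
    rcases eq_or_lt_of_le hz.1 with h | h
    · rw [← h]
      simp [hf0]
    · apply mul_le_mul_of_nonneg_left _ (by positivity)
      apply hmono
      intro i
      simp only [PiLp.smul_apply, smul_eq_mul]
      exact mul_le_mul_of_nonneg_left (hxy i) h.le
  · -- DR-submodular
    intro x i j
    set eI : EuclideanSpace ℝ (Fin d) := EuclideanSpace.single i 1 with heI
    set eJ : EuclideanSpace ℝ (Fin d) := EuclideanSpace.single j 1 with heJ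
    have happly : (fun y => fderiv ℝ F y eI)
        = fun y => ∫ z in (0:ℝ)..1, exp (z - 1) * (fderiv ℝ f (z • y) eI) := by
      funext y
      rw [hfderivF y,
        ContinuousLinearMap.intervalIntegral_apply ((hcont1 y).intervalIntegrable 0 1) eI]
      simp only [ContinuousLinearMap.smul_apply, smul_eq_mul]
    rw [happly, (derivC f hf eI x).fderiv]
    have hint : IntervalIntegrable (fun z : ℝ => (z * exp (z - 1)) •
        ((ContinuousLinearMap.apply ℝ ℝ eI).comp (fderiv ℝ (fderiv ℝ f) (z • x)))) volume 0 1 := by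
      apply Continuous.intervalIntegrable
      apply Continuous.fun_smul
      · exact continuous_id.mul (continuous_exp.comp (continuous_id.sub continuous_const))
      · exact continuous_const.clm_comp
          (((hf.fderiv_right (m := 1) (le_refl 2)).continuous_fderiv one_ne_zero).comp
            (continuous_id.smul continuous_const))
    rw [ContinuousLinearMap.intervalIntegral_apply hint eJ]
    rw [← neg_nonneg, ← intervalIntegral.integral_neg]
    apply intervalIntegral.integral_nonneg zero_le_one
    intro u hu
    have key : (fderiv ℝ (fderiv ℝ f) (u • x) eJ) eI ≤ 0 := by
      have h := ((hdf' (u • x)).hasFDerivAt.clm_apply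
        (hasFDerivAt_const eI (u • x))).fderiv
      have h2 := hDR (u • x) i j
      rw [← heI, ← heJ] at h2
      rw [h] at h2
      simpa using h2
    simp only [ContinuousLinearMap.smul_apply, ContinuousLinearMap.coe_comp',
      Function.comp_apply, ContinuousLinearMap.apply_apply, smul_eq_mul]
    have hue : 0 ≤ u * exp (u - 1) := mul_nonneg hu.1 (exp_pos _).le
    nlinarith
  · -- smoothness
    intro x y
    by_cases hxy : x = y
    · subst hxy
      simp
    · have hxypos : 0 < ‖x - y‖ := by
        rw [norm_pos_iff]
        exact sub_ne_zero.2 hxy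
      have hL2 : 0 ≤ L₂ := by
        have h1 := hsmooth x y
        nlinarith [norm_nonneg (gradient f x - gradient f y)]
      have hdual : gradient F x - gradient F y
          = (InnerProductSpace.toDual ℝ (EuclideanSpace ℝ (Fin d))).symm
            (fderiv ℝ F x - fderiv ℝ F y) := by
        rw [map_sub]; rfl
      rw [hdual, LinearIsometryEquiv.norm_map]
      have hfd : ∀ u w : EuclideanSpace ℝ (Fin d),
          ‖fderiv ℝ f u - fderiv ℝ f w‖ ≤ L₂ * ‖u - w‖ := by
        intro u w
        have hd : fderiv ℝ f u - fderiv ℝ f w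
            = (InnerProductSpace.toDual ℝ (EuclideanSpace ℝ (Fin d)))
              (gradient f u - gradient f w) := by
          rw [map_sub]
          congr 1 <;> exact (LinearIsometryEquiv.apply_symm_apply _ _).symm
        rw [hd, LinearIsometryEquiv.norm_map]
        exact hsmooth u w
      rw [hfderivF x, hfderivF y,
        ← intervalIntegral.integral_sub ((hcont1 x).intervalIntegrable 0 1)
          ((hcont1 y).intervalIntegrable 0 1)]
      have hbint : IntervalIntegrable (fun z : ℝ => L₂ * ‖x - y‖ * (z * exp (z - 1)))
          volume 0 1 := by
        apply Continuous.intervalIntegrable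
        exact continuous_const.mul (continuous_id.mul
          (continuous_exp.comp (continuous_id.sub continuous_const)))
      have hb : ∀ᵐ z ∂(volume.restrict (Set.uIoc (0:ℝ) 1)),
          ‖exp (z - 1) • fderiv ℝ f (z • x) - exp (z - 1) • fderiv ℝ f (z • y)‖
            ≤ L₂ * ‖x - y‖ * (z * exp (z - 1)) := by
        rw [uIoc_of_le zero_le_one]
        filter_upwards [ae_restrict_mem measurableSet_Ioc] with z hz
        rw [← smul_sub, norm_smul (rexp (z - 1)) (fderiv ℝ f (z • x) - fderiv ℝ f (z • y)),
          Real.norm_eq_abs, abs_of_pos (exp_pos _)]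
        have h1 : ‖fderiv ℝ f (z • x) - fderiv ℝ f (z • y)‖ ≤ L₂ * (z * ‖x - y‖) := by
          have := hfd (z • x) (z • y)
          rwa [← smul_sub, norm_smul, Real.norm_eq_abs, abs_of_pos hz.1] at this
        calc exp (z - 1) * ‖fderiv ℝ f (z • x) - fderiv ℝ f (z • y)‖
            ≤ exp (z - 1) * (L₂ * (z * ‖x - y‖)) :=
              mul_le_mul_of_nonneg_left h1 (exp_pos _).le
          _ = L₂ * ‖x - y‖ * (z * exp (z - 1)) := by ring
      have hintval : (∫ z in (0:ℝ)..1, z * exp (z - 1)) = (exp 1)⁻¹ := by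
        have h : ∀ z ∈ Set.uIcc (0:ℝ) 1,
            HasDerivAt (fun t : ℝ => (t - 1) * exp (t - 1)) (z * exp (z - 1)) z := by
          intro z _
          have h1 : HasDerivAt (fun t : ℝ => t - 1) 1 z := (hasDerivAt_id z).sub_const 1
          have h2 : HasDerivAt (fun t : ℝ => exp (t - 1)) (exp (z - 1)) z := by
            simpa using h1.exp
          have := h1.fun_mul h2
          refine this.congr_deriv ?_
          ring
        rw [intervalIntegral.integral_eq_sub_of_hasDerivAt h
          ((continuous_id.mul (continuous_exp.comp
            (continuous_id.sub continuous_const))).intervalIntegrable 0 1)]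
        norm_num [exp_neg]
      calc ‖∫ z in (0:ℝ)..1, (exp (z - 1) • fderiv ℝ f (z • x) - exp (z - 1) • fderiv ℝ f (z • y))‖
          ≤ |∫ z in (0:ℝ)..1, L₂ * ‖x - y‖ * (z * exp (z - 1))| :=
            intervalIntegral.norm_integral_le_abs_of_norm_le hb hbint
        _ = (L₂ / exp 1) * ‖x - y‖ := by
            rw [intervalIntegral.integral_const_mul, hintval,
              abs_of_nonneg (by positivity)]
            field_simp
end
end

section
/- Let g : 2^G → [0, M] be a monotone submodular set function with g(∅) = 0 over a finite ground set G partitioned as G = ∪_{k=1}^K G_k with capacities r_k, and let K = ∏_{k=1}^K ∏_{i=1}^{r_k} Δ_{|G_k|} be the product of standard simplexes. Define the extension f(x) = E_{S ∼ EXT_PM(x)}[g(S)], where EXT_PM samples, independently for each pair (k,i), one element of G_k ∪ {∘} according to the coordinates of the (k,i)-th simplex (∘ meaning 'no element', with probability 1 − Σ_{s ∈ G_k} x_{k,i,s}), and returns the union of the sampled non-∘ elements. Then f is multi-linear, monotone, DR-submodular, satisfies f(0) = 0, and is M·√(Σ_k r_k |G_k|)-Lipschitz. -/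
noncomputable section

/-- Multi-linear function over a finite coordinate index type. -/
def IsMultilinearPolyI {ι : Type*} [Fintype ι] (f : EuclideanSpace ℝ ι → ℝ) : Prop :=
  ∃ p : MvPolynomial ι ℝ,
    (∀ m ∈ p.support, ∀ i, m i ≤ 1) ∧ ∀ x, f x = MvPolynomial.eval (fun i => x i) p

variable {G : Type*} [Fintype G] [DecidableEq G] {K : ℕ}

/-- Coordinates of the product of simplexes: one simplex `Δ_{|G_k|}` for each
pair `(k, i)` with `i < r_k`, with coordinates indexed by the elements of `G_k`. -/
abbrev PMIndex (part : G → Fin K) (r : Fin K → ℕ) : Type _ :=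
  Σ k : Fin K, Fin (r k) × {s : G // part s = k}

/-- Sample space: each slot `(k,i)` independently selects an element of
`G_k ∪ {∘}` (where `none` plays the role of `∘`). -/
abbrev PMSample (part : G → Fin K) (r : Fin K → ℕ) : Type _ :=
  ∀ q : Σ k : Fin K, Fin (r k), Option {s : G // part s = q.1}

/-- The probability that slot `q = (k,i)` selects a given element of `G_k ∪ {∘}`,
under the distribution given by the coordinates of the `(k,i)`-th simplex. -/
def slotProb (part : G → Fin K) (r : Fin K → ℕ)
    (x : EuclideanSpace ℝ (PMIndex part r)) (q : Σ k : Fin K, Fin (r k)) :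
    Option {s : G // part s = q.1} → ℝ
  | none => 1 - ∑ s : {s : G // part s = q.1}, x ⟨q.1, q.2, s⟩
  | some s => x ⟨q.1, q.2, s⟩

/-- The union of the non-`∘` sampled elements. -/
def sampledSet (part : G → Fin K) (r : Fin K → ℕ) (ω : PMSample part r) : Finset G :=
  Finset.univ.biUnion fun q => (ω q).elim ∅ fun s => {s.1}

/-- The product-simplex extension `f(x) = E_{S ∼ EXT_PM(x)}[g(S)]`. -/
def extPM (part : G → Fin K) (r : Fin K → ℕ) (g : Finset G → ℝ)
    (x : EuclideanSpace ℝ (PMIndex part r)) : ℝ :=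
  ∑ ω : PMSample part r,
    (∏ q : Σ k : Fin K, Fin (r k), slotProb part r x q (ω q)) * g (sampledSet part r ω)


namespace ExtPMAux

set_option linter.unusedSectionVars false
set_option linter.unnecessarySeqFocus false

variable {G : Type*} [Fintype G] [DecidableEq G] {K : ℕ} (part : G → Fin K) (r : Fin K → ℕ)

/-- the slot of a coordinate -/
def pslot (p : PMIndex part r) : Σ k : Fin K, Fin (r k) := ⟨p.1, p.2.1⟩

/-- generalized partial sums -/
def FF (Q : Finset (Σ k : Fin K, Fin (r k))) (c : PMSample part r → ℝ)
    (x : EuclideanSpace ℝ (PMIndex part r)) : ℝ :=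
  ∑ ω : PMSample part r, (∏ q ∈ Q, slotProb part r x q (ω q)) * c ω

lemma extPM_eq_FF (g : Finset G → ℝ) (x) :
    extPM part r g x = FF part r Finset.univ (fun ω => g (sampledSet part r ω)) x := rfl

lemma slotProb_add (x y : EuclideanSpace ℝ (PMIndex part r)) (q : Σ k : Fin K, Fin (r k)) (o) :
    slotProb part r (x + y) q o
      = slotProb part r x q o + slotProb part r y q o - slotProb part r 0 q o := by
  cases o <;>
    simp [slotProb, PiLp.add_apply, PiLp.zero_apply, Finset.sum_add_distrib] <;> ring

lemma slotProb_smul (t : ℝ) (x : EuclideanSpace ℝ (PMIndex part r))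
    (q : Σ k : Fin K, Fin (r k)) (o) :
    slotProb part r (t • x) q o
      = t * slotProb part r x q o + (1 - t) * slotProb part r 0 q o := by
  cases o with
  | none =>
      simp [slotProb, PiLp.smul_apply, smul_eq_mul, PiLp.zero_apply, mul_sub, Finset.mul_sum]
  | some s => simp [slotProb, PiLp.smul_apply, smul_eq_mul, PiLp.zero_apply]

/-- slope of `slotProb` in the direction of coordinate `p` -/
def lin (p : PMIndex part r) (q : Σ k : Fin K, Fin (r k))
    (o : Option {s : G // part s = q.1}) : ℝ :=
  slotProb part r (EuclideanSpace.single p 1) q o - slotProb part r 0 q o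

lemma slotProb_line (x : EuclideanSpace ℝ (PMIndex part r)) (t : ℝ) (p : PMIndex part r)
    (q : Σ k : Fin K, Fin (r k)) (o) :
    slotProb part r (x + t • EuclideanSpace.single p 1) q o
      = slotProb part r x q o + t * lin part r p q o := by
  rw [slotProb_add, slotProb_smul, lin]; ring

lemma lin_of_ne (p : PMIndex part r) (q : Σ k : Fin K, Fin (r k))
    (h : q ≠ pslot part r p) (o) :
    lin part r p q o = 0 := by
  obtain ⟨k, i, s0⟩ := p
  have hs : ∀ s : {s : G // part s = q.1},
      (EuclideanSpace.single (⟨k, i, s0⟩ : PMIndex part r) (1:ℝ)) ⟨q.1, q.2, s⟩ = 0 := by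
    intro s
    rw [EuclideanSpace.single_apply, if_neg]
    intro heq
    exact h (by cases heq; rfl)
  have hsum : ∑ s : {s : G // part s = q.1},
      (EuclideanSpace.single (⟨k, i, s0⟩ : PMIndex part r) (1:ℝ)) ⟨q.1, q.2, s⟩ = 0 :=
    Finset.sum_eq_zero fun s _ => hs s
  cases o with
  | none => simp only [lin, slotProb]; rw [hsum]; simp [PiLp.zero_apply]
  | some s => simp only [lin, slotProb]; rw [hs s]; simp [PiLp.zero_apply]

lemma lin_none (k : Fin K) (i : Fin (r k)) (s0 : {s : G // part s = k}) :
    lin part r ⟨k, i, s0⟩ ⟨k, i⟩ none = -1 := by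
  simp [lin, slotProb, EuclideanSpace.single_apply, PiLp.zero_apply, Sigma.mk.inj_iff,
    heq_eq_eq, Prod.mk.injEq]

lemma lin_some (k : Fin K) (i : Fin (r k)) (s0 s : {s : G // part s = k}) :
    lin part r ⟨k, i, s0⟩ ⟨k, i⟩ (some s) = if s = s0 then 1 else 0 := by
  simp [lin, slotProb, EuclideanSpace.single_apply, PiLp.zero_apply, Sigma.mk.inj_iff,
    heq_eq_eq, Prod.mk.injEq]

end ExtPMAux

namespace ExtPMAux

set_option linter.unusedSectionVars false

variable {G : Type*} [Fintype G] [DecidableEq G] {K : ℕ} (part : G → Fin K) (r : Fin K → ℕ)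

lemma FF_shift {Q : Finset (Σ k : Fin K, Fin (r k))} {c : PMSample part r → ℝ}
    {p : PMIndex part r} (hq : pslot part r p ∈ Q)
    (x : EuclideanSpace ℝ (PMIndex part r)) (t : ℝ) :
    FF part r Q c (x + t • EuclideanSpace.single p 1)
      = FF part r Q c x
        + t * FF part r (Q.erase (pslot part r p))
            (fun ω => lin part r p (pslot part r p) (ω (pslot part r p)) * c ω) x := by
  set q0 := pslot part r p with hq0
  have key : ∀ ω : PMSample part r,
      (∏ q ∈ Q, slotProb part r (x + t • EuclideanSpace.single p 1) q (ω q))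
        = (∏ q ∈ Q, slotProb part r x q (ω q))
          + t * (lin part r p q0 (ω q0) * ∏ q ∈ Q.erase q0, slotProb part r x q (ω q)) := by
    intro ω
    have herase : ∀ y : EuclideanSpace ℝ (PMIndex part r),
        (∏ q ∈ Q.erase q0, slotProb part r (x + t • EuclideanSpace.single p 1) q (ω q))
          = ∏ q ∈ Q.erase q0, slotProb part r x q (ω q) := by
      intro y
      refine Finset.prod_congr rfl fun q hquer => ?_
      rw [slotProb_line, lin_of_ne part r p q (Finset.mem_erase.mp hquer).1, mul_zero, add_zero]
    rw [← Finset.mul_prod_erase _ _ hq, ← Finset.mul_prod_erase _ _ hq, herase x,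
      slotProb_line]
    ring
  unfold FF
  simp only [key, add_mul]
  rw [Finset.sum_add_distrib]
  congr 1
  rw [Finset.mul_sum]
  refine Finset.sum_congr rfl fun ω _ => by ring

lemma FF_shift_nomem {Q : Finset (Σ k : Fin K, Fin (r k))} {c : PMSample part r → ℝ}
    {p : PMIndex part r} (hq : pslot part r p ∉ Q)
    (x : EuclideanSpace ℝ (PMIndex part r)) (t : ℝ) :
    FF part r Q c (x + t • EuclideanSpace.single p 1) = FF part r Q c x := by
  unfold FF
  refine Finset.sum_congr rfl fun ω _ => ?_
  congr 1
  refine Finset.prod_congr rfl fun q hquer => ?_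
  rw [slotProb_line, lin_of_ne part r p q (fun h => hq (h ▸ hquer)), mul_zero, add_zero]

lemma slotProb_differentiable (q : Σ k : Fin K, Fin (r k)) (o) :
    Differentiable ℝ (fun x : EuclideanSpace ℝ (PMIndex part r) => slotProb part r x q o) := by
  cases o with
  | none =>
      simp only [slotProb]
      exact (differentiable_const (1:ℝ)).sub
        (Differentiable.fun_sum fun s _ => (EuclideanSpace.proj (𝕜 := ℝ) (⟨q.1, q.2, s⟩ : PMIndex part r)).differentiable)
  | some s =>
      exact (EuclideanSpace.proj (𝕜 := ℝ) (⟨q.1, q.2, s⟩ : PMIndex part r)).differentiable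

lemma FF_differentiable (Q : Finset (Σ k : Fin K, Fin (r k))) (c : PMSample part r → ℝ) :
    Differentiable ℝ (FF part r Q c) := by
  unfold FF
  intro x
  refine DifferentiableAt.fun_sum fun ω _ => DifferentiableAt.mul_const ?_ _
  exact (HasFDerivAt.finset_prod (u := Q)
    (g := fun q y => slotProb part r y q (ω q))
    (fun q _ => ((slotProb_differentiable part r q (ω q)) x).hasFDerivAt)).differentiableAt

lemma FF_fderiv {Q : Finset (Σ k : Fin K, Fin (r k))} {c : PMSample part r → ℝ}
    {p : PMIndex part r} (hq : pslot part r p ∈ Q)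
    (x : EuclideanSpace ℝ (PMIndex part r)) :
    fderiv ℝ (FF part r Q c) x (EuclideanSpace.single p 1)
      = FF part r (Q.erase (pslot part r p))
          (fun ω => lin part r p (pslot part r p) (ω (pslot part r p)) * c ω) x := by
  set v : EuclideanSpace ℝ (PMIndex part r) := EuclideanSpace.single p 1 with hv
  set D := FF part r (Q.erase (pslot part r p))
      (fun ω => lin part r p (pslot part r p) (ω (pslot part r p)) * c ω) x with hD
  have hline : HasDerivAt (fun t : ℝ => x + t • v) v 0 := by
    simpa using ((hasDerivAt_id (0:ℝ)).smul_const v).const_add x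
  have h1 : HasDerivAt (fun t : ℝ => FF part r Q c (x + t • v))
      (fderiv ℝ (FF part r Q c) x v) 0 := by
    have hx : HasFDerivAt (FF part r Q c) (fderiv ℝ (FF part r Q c) x) (x + (0:ℝ) • v) := by
      simpa using ((FF_differentiable part r Q c) x).hasFDerivAt
    exact hx.comp_hasDerivAt 0 hline
  have h2 : HasDerivAt (fun t : ℝ => FF part r Q c x + t * D) D 0 :=
    (hasDerivAt_mul_const D).const_add _
  have heq : (fun t : ℝ => FF part r Q c (x + t • v))
      = fun t : ℝ => FF part r Q c x + t * D := funext fun t => FF_shift part r hq x t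
  rw [heq] at h1
  exact h1.unique h2

lemma FF_fderiv_zero {Q : Finset (Σ k : Fin K, Fin (r k))} {c : PMSample part r → ℝ}
    {p : PMIndex part r} (hq : pslot part r p ∉ Q)
    (x : EuclideanSpace ℝ (PMIndex part r)) :
    fderiv ℝ (FF part r Q c) x (EuclideanSpace.single p 1) = 0 := by
  set v : EuclideanSpace ℝ (PMIndex part r) := EuclideanSpace.single p 1 with hv
  have hline : HasDerivAt (fun t : ℝ => x + t • v) v 0 := by
    simpa using ((hasDerivAt_id (0:ℝ)).smul_const v).const_add x
  have h1 : HasDerivAt (fun t : ℝ => FF part r Q c (x + t • v))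
      (fderiv ℝ (FF part r Q c) x v) 0 := by
    have hx : HasFDerivAt (FF part r Q c) (fderiv ℝ (FF part r Q c) x) (x + (0:ℝ) • v) := by
      simpa using ((FF_differentiable part r Q c) x).hasFDerivAt
    exact hx.comp_hasDerivAt 0 hline
  have h2 : HasDerivAt (fun _ : ℝ => FF part r Q c x) 0 0 := hasDerivAt_const _ _
  have heq : (fun t : ℝ => FF part r Q c (x + t • v))
      = fun _ : ℝ => FF part r Q c x := funext fun t => FF_shift_nomem part r hq x t
  rw [heq] at h1
  exact h1.unique h2

end ExtPMAux

namespace ExtPMAux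

set_option linter.unusedSectionVars false

section Split

variable {ι : Type*} [Fintype ι] [DecidableEq ι] (π : ι → Type*) [∀ i, Fintype (π i)]

lemma sum_split (i0 : ι) (F : (∀ i, π i) → ℝ) :
    ∑ ω, F ω = ∑ o : π i0, ∑ ρ : ∀ j : {j // j ≠ i0}, π j, F ((Equiv.piSplitAt i0 π).symm (o, ρ)) := by
  rw [← Equiv.sum_comp (Equiv.piSplitAt i0 π).symm F, Fintype.sum_prod_type]

lemma piSplit_self (i0 : ι) (o : π i0) (ρ : ∀ j : {j // j ≠ i0}, π j) :
    (Equiv.piSplitAt i0 π).symm (o, ρ) i0 = o := by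
  simp [Equiv.piSplitAt_symm_apply]

lemma piSplit_ne (i0 : ι) (o : π i0) (ρ : ∀ j : {j // j ≠ i0}, π j) {j : ι} (h : j ≠ i0) :
    (Equiv.piSplitAt i0 π).symm (o, ρ) j = ρ ⟨j, h⟩ := by
  simp [Equiv.piSplitAt_symm_apply, h]

end Split

variable {G : Type*} [Fintype G] [DecidableEq G] {K : ℕ} (part : G → Fin K) (r : Fin K → ℕ)

/-- the element-set contributed by one slot outcome -/
def oset (q : Σ k : Fin K, Fin (r k)) (o : Option {s : G // part s = q.1}) : Finset G :=
  o.elim ∅ fun s => {s.1}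

lemma sampledSet_peel (ω : PMSample part r) (q0 : Σ k : Fin K, Fin (r k)) :
    sampledSet part r ω
      = oset part r q0 (ω q0)
        ∪ (Finset.univ.erase q0).biUnion (fun q => oset part r q (ω q)) := by
  rw [sampledSet]
  conv_lhs => rw [← Finset.insert_erase (Finset.mem_univ q0)]
  rw [Finset.biUnion_insert]
  rfl

/-- two samples agreeing off `q0` give sets differing only in slot `q0`'s contribution -/
lemma sampledSet_congr (ω ω' : PMSample part r) (q0 : Σ k : Fin K, Fin (r k))
    (h0 : ω' q0 = none) (h : ∀ q, q ≠ q0 → ω q = ω' q) :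
    sampledSet part r ω = oset part r q0 (ω q0) ∪ sampledSet part r ω' := by
  rw [sampledSet_peel part r ω q0, sampledSet_peel part r ω' q0, h0]
  have hb : (Finset.univ.erase q0).biUnion (fun q => oset part r q (ω q))
      = (Finset.univ.erase q0).biUnion (fun q => oset part r q (ω' q)) :=
    Finset.biUnion_congr rfl fun q hq => by rw [h q (Finset.mem_erase.mp hq).1]
  rw [hb]
  congr 1
  simp [oset]

lemma sum_slotProb (x : EuclideanSpace ℝ (PMIndex part r)) (q : Σ k : Fin K, Fin (r k)) :
    ∑ o, slotProb part r x q o = 1 := by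
  rw [Fintype.sum_option]
  simp [slotProb]

end ExtPMAux

namespace ExtPMAux

set_option linter.unusedSectionVars false
set_option maxHeartbeats 1000000

variable {G : Type*} [Fintype G] [DecidableEq G] {K : ℕ} (part : G → Fin K) (r : Fin K → ℕ)

/-- weight of the remaining slots -/
def W (q0 : Σ k : Fin K, Fin (r k)) (x : EuclideanSpace ℝ (PMIndex part r))
    (ρ : ∀ j : {j : Σ k : Fin K, Fin (r k) // j ≠ q0}, Option {s : G // part s = j.1.1}) : ℝ :=
  ∏ j, slotProb part r x j.1 (ρ j)

lemma prod_erase_eq_W (q0 : Σ k : Fin K, Fin (r k)) (x : EuclideanSpace ℝ (PMIndex part r))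
    (o : Option {s : G // part s = q0.1})
    (ρ : ∀ j : {j : Σ k : Fin K, Fin (r k) // j ≠ q0}, Option {s : G // part s = j.1.1}) :
    (∏ q ∈ Finset.univ.erase q0,
        slotProb part r x q
          ((Equiv.piSplitAt q0 (fun q => Option {s : G // part s = q.1})).symm (o, ρ) q))
      = W part r q0 x ρ := by
  rw [Finset.prod_subtype (p := fun j => j ≠ q0) (Finset.univ.erase q0)
    (fun j => by simp)
    (fun q => slotProb part r x q
      ((Equiv.piSplitAt q0 (fun q => Option {s : G // part s = q.1})).symm (o, ρ) q))]
  refine Finset.prod_congr rfl fun j _ => ?_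
  rw [piSplit_ne (fun q => Option {s : G // part s = q.1}) q0 o ρ j.2]

lemma W_nonneg (q0 : Σ k : Fin K, Fin (r k)) (x : EuclideanSpace ℝ (PMIndex part r))
    (hx : ∀ q o, 0 ≤ slotProb part r x q o) (ρ) :
    0 ≤ W part r q0 x ρ :=
  Finset.prod_nonneg fun j _ => hx j.1 (ρ j)

lemma sum_W (q0 : Σ k : Fin K, Fin (r k)) (x : EuclideanSpace ℝ (PMIndex part r)) :
    ∑ ρ : ∀ j : {j : Σ k : Fin K, Fin (r k) // j ≠ q0}, Option {s : G // part s = j.1.1},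
      W part r q0 x ρ = 1 := by
  unfold W
  rw [← Fintype.piFinset_univ, ← Finset.prod_univ_sum]
  exact Finset.prod_eq_one fun j _ => sum_slotProb part r x j.1

/-- summing a linear-slope-weighted function over the options of a slot -/
lemma sum_option_lin (k : Fin K) (i : Fin (r k)) (s0 : {s : G // part s = k})
    (h : Finset G → ℝ) :
    ∑ o : Option {s : G // part s = k},
        lin part r ⟨k, i, s0⟩ ⟨k, i⟩ o * h (oset part r ⟨k, i⟩ o)
      = h {s0.1} - h ∅ := by
  rw [Fintype.sum_option, lin_none]
  simp only [lin_some, oset, Option.elim, ite_mul, one_mul, zero_mul]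
  rw [Finset.sum_ite_eq' Finset.univ s0 (fun s => h {s.1})]
  simp
  ring

/-- key representation of the first partial derivative -/
lemma Dp_repr (g : Finset G → ℝ) (x : EuclideanSpace ℝ (PMIndex part r))
    (k : Fin K) (i : Fin (r k)) (s0 : {s : G // part s = k}) :
    FF part r (Finset.univ.erase ⟨k, i⟩)
        (fun ω => lin part r ⟨k, i, s0⟩ ⟨k, i⟩ (ω ⟨k, i⟩) * g (sampledSet part r ω)) x
      = ∑ ρ : ∀ j : {j : Σ k : Fin K, Fin (r k) // j ≠ ⟨k, i⟩},
            Option {s : G // part s = j.1.1},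
          W part r ⟨k, i⟩ x ρ *
            (g (insert s0.1 (sampledSet part r
                ((Equiv.piSplitAt (⟨k, i⟩ : Σ k : Fin K, Fin (r k))
                  (fun q => Option {s : G // part s = q.1})).symm (none, ρ))))
              - g (sampledSet part r
                ((Equiv.piSplitAt (⟨k, i⟩ : Σ k : Fin K, Fin (r k))
                  (fun q => Option {s : G // part s = q.1})).symm (none, ρ)))) := by
  set q0 : Σ k : Fin K, Fin (r k) := ⟨k, i⟩ with hq0
  set π := fun q : Σ k : Fin K, Fin (r k) => Option {s : G // part s = q.1} with hπ
  unfold FF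
  rw [sum_split π q0, Finset.sum_comm]
  refine Finset.sum_congr rfl fun ρ _ => ?_
  set R := sampledSet part r ((Equiv.piSplitAt q0 π).symm (none, ρ)) with hR
  have hterm : ∀ o : π q0,
      (∏ q ∈ Finset.univ.erase q0,
          slotProb part r x q ((Equiv.piSplitAt q0 π).symm (o, ρ) q)) *
        (lin part r ⟨k, i, s0⟩ q0 (((Equiv.piSplitAt q0 π).symm (o, ρ)) q0) *
          g (sampledSet part r ((Equiv.piSplitAt q0 π).symm (o, ρ))))
      = W part r q0 x ρ *
          (lin part r ⟨k, i, s0⟩ q0 o * g (oset part r q0 o ∪ R)) := by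
    intro o
    rw [prod_erase_eq_W, piSplit_self,
      sampledSet_congr part r _ ((Equiv.piSplitAt q0 π).symm (none, ρ)) q0
        (piSplit_self π q0 none ρ)
        (fun q hq => by rw [piSplit_ne π q0 o ρ hq, piSplit_ne π q0 none ρ hq]),
      piSplit_self]
  rw [Finset.sum_congr rfl fun o _ => hterm o, ← Finset.mul_sum]
  congr 1
  have := sum_option_lin part r k i s0 (fun A => g (A ∪ R))
  rw [this]
  simp
end ExtPMAux

namespace ExtPMAux

set_option linter.unusedSectionVars false
set_option maxHeartbeats 1000000

variable {G : Type*} [Fintype G] [DecidableEq G] {K : ℕ} (part : G → Fin K) (r : Fin K → ℕ)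

lemma Dp_bounds (g : Finset G → ℝ) (M : ℝ)
    (hrange : ∀ A : Finset G, g A ∈ Set.Icc (0 : ℝ) M)
    (hmono : ∀ A B : Finset G, A ⊆ B → g A ≤ g B)
    (x : EuclideanSpace ℝ (PMIndex part r))
    (hx : ∀ q o, 0 ≤ slotProb part r x q o)
    (k : Fin K) (i : Fin (r k)) (s0 : {s : G // part s = k}) :
    FF part r (Finset.univ.erase ⟨k, i⟩)
        (fun ω => lin part r ⟨k, i, s0⟩ ⟨k, i⟩ (ω ⟨k, i⟩) * g (sampledSet part r ω)) x
      ∈ Set.Icc (0 : ℝ) M := by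
  rw [Dp_repr part r g x k i s0]
  constructor
  · refine Finset.sum_nonneg fun ρ _ => mul_nonneg (W_nonneg part r _ x hx ρ) ?_
    exact sub_nonneg.mpr (hmono _ _ (Finset.subset_insert _ _))
  · calc ∑ ρ : ∀ j : {j : Σ k : Fin K, Fin (r k) // j ≠ ⟨k, i⟩},
            Option {s : G // part s = j.1.1},
          W part r ⟨k, i⟩ x ρ *
            (g (insert s0.1 (sampledSet part r
                ((Equiv.piSplitAt (⟨k, i⟩ : Σ k : Fin K, Fin (r k))
                  (fun q => Option {s : G // part s = q.1})).symm (none, ρ))))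
              - g (sampledSet part r
                ((Equiv.piSplitAt (⟨k, i⟩ : Σ k : Fin K, Fin (r k))
                  (fun q => Option {s : G // part s = q.1})).symm (none, ρ))))
        ≤ ∑ ρ : ∀ j : {j : Σ k : Fin K, Fin (r k) // j ≠ ⟨k, i⟩},
            Option {s : G // part s = j.1.1}, W part r ⟨k, i⟩ x ρ * M := by
          refine Finset.sum_le_sum fun ρ _ => ?_
          refine mul_le_mul_of_nonneg_left ?_ (W_nonneg part r _ x hx ρ)
          have h1 := (hrange (insert s0.1 (sampledSet part r
            ((Equiv.piSplitAt (⟨k, i⟩ : Σ k : Fin K, Fin (r k))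
              (fun q => Option {s : G // part s = q.1})).symm (none, ρ))))).2
          have h2 := (hrange (sampledSet part r
            ((Equiv.piSplitAt (⟨k, i⟩ : Σ k : Fin K, Fin (r k))
              (fun q => Option {s : G // part s = q.1})).symm (none, ρ)))).1
          linarith
    _ = M := by rw [← Finset.sum_mul, sum_W, one_mul]

/-- the four-point submodularity inequality -/
lemma submod4 (g : Finset G → ℝ)
    (hmono : ∀ A B : Finset G, A ⊆ B → g A ≤ g B)
    (hsub : ∀ (A B : Finset G) (s : G), A ⊆ B → s ∉ B →
      g (insert s B) - g B ≤ g (insert s A) - g A)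
    (a b : G) (S : Finset G) :
    g (insert a (insert b S)) + g S ≤ g (insert b S) + g (insert a S) := by
  by_cases haS : a ∈ S
  · simp [Finset.insert_eq_self.mpr haS, Finset.insert_eq_self.mpr (Finset.mem_insert_of_mem haS)]
  · by_cases hab : a = b
    · subst hab
      rw [Finset.insert_idem]
      have := hmono S (insert a S) (Finset.subset_insert _ _)
      linarith
    · have hnb : a ∉ insert b S := by
        simp [Finset.mem_insert, hab, haS]
      have := hsub S (insert b S) a (Finset.subset_insert _ _) hnb
      linarith

end ExtPMAux

namespace ExtPMAux

set_option linter.unusedSectionVars false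
set_option maxHeartbeats 2000000

variable {G : Type*} [Fintype G] [DecidableEq G] {K : ℕ} (part : G → Fin K) (r : Fin K → ℕ)

lemma E_nonpos (g : Finset G → ℝ) (M : ℝ)
    (hrange : ∀ A : Finset G, g A ∈ Set.Icc (0 : ℝ) M)
    (hmono : ∀ A B : Finset G, A ⊆ B → g A ≤ g B)
    (hsub : ∀ (A B : Finset G) (s : G), A ⊆ B → s ∉ B →
      g (insert s B) - g B ≤ g (insert s A) - g A)
    (x : EuclideanSpace ℝ (PMIndex part r))
    (hx : ∀ q o, 0 ≤ slotProb part r x q o)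
    (k : Fin K) (i : Fin (r k)) (s0 : {s : G // part s = k})
    (k' : Fin K) (i' : Fin (r k')) (t0 : {s : G // part s = k'})
    (h01 : (⟨k', i'⟩ : Σ k : Fin K, Fin (r k)) ≠ ⟨k, i⟩) :
    FF part r ((Finset.univ.erase ⟨k, i⟩).erase ⟨k', i'⟩)
      (fun ω => lin part r ⟨k', i', t0⟩ ⟨k', i'⟩ (ω ⟨k', i'⟩)
        * (lin part r ⟨k, i, s0⟩ ⟨k, i⟩ (ω ⟨k, i⟩) * g (sampledSet part r ω))) x ≤ 0 := by
  classical
  set π : (Σ k : Fin K, Fin (r k)) → Type _ :=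
    fun q => Option {s : G // part s = q.1} with hπ
  set ι' := {j : Σ k : Fin K, Fin (r k) // j ≠ ⟨k, i⟩} with hι'
  set π' : ι' → Type _ := fun j => Option {s : G // part s = j.1.1} with hπ'
  set j1 : ι' := ⟨⟨k', i'⟩, h01⟩ with hj1
  set ω2 : π ⟨k, i⟩ → π' j1 → (∀ j2 : {j : ι' // j ≠ j1}, π' j2.1) → PMSample part r :=
    fun o0 o1 τ =>
      (Equiv.piSplitAt (⟨k, i⟩ : Σ k : Fin K, Fin (r k)) π).symm
        (o0, (Equiv.piSplitAt j1 π').symm (o1, τ)) with hω2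
  have hA : ∀ o0 o1 τ, ω2 o0 o1 τ ⟨k, i⟩ = o0 := fun o0 o1 τ => piSplit_self π _ _ _
  have hB : ∀ o0 o1 τ, ω2 o0 o1 τ ⟨k', i'⟩ = o1 := by
    intro o0 o1 τ
    show (Equiv.piSplitAt (⟨k, i⟩ : Σ k : Fin K, Fin (r k)) π).symm
      (o0, (Equiv.piSplitAt j1 π').symm (o1, τ)) ⟨k', i'⟩ = o1
    rw [piSplit_ne π _ _ _ h01]
    exact piSplit_self π' j1 o1 τ
  have hC : ∀ o0 o1 τ (q : Σ k : Fin K, Fin (r k)) (hq0 : q ≠ ⟨k, i⟩)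
      (hq1 : q ≠ ⟨k', i'⟩), ω2 o0 o1 τ q = ω2 none none τ q := by
    intro o0 o1 τ q hq0 hq1
    show (Equiv.piSplitAt (⟨k, i⟩ : Σ k : Fin K, Fin (r k)) π).symm
        (o0, (Equiv.piSplitAt j1 π').symm (o1, τ)) q
      = (Equiv.piSplitAt (⟨k, i⟩ : Σ k : Fin K, Fin (r k)) π).symm
        (none, (Equiv.piSplitAt j1 π').symm (none, τ)) q
    rw [piSplit_ne π _ _ _ hq0, piSplit_ne π _ _ _ hq0]
    have hj : (⟨q, hq0⟩ : ι') ≠ j1 := fun h => hq1 (congrArg Subtype.val h)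
    rw [piSplit_ne π' j1 o1 τ hj, piSplit_ne π' j1 none τ hj]
  have hS : ∀ o0 o1 τ, sampledSet part r (ω2 o0 o1 τ)
      = oset part r ⟨k, i⟩ o0
        ∪ (oset part r ⟨k', i'⟩ o1 ∪ sampledSet part r (ω2 none none τ)) := by
    intro o0 o1 τ
    have step1 := sampledSet_congr part r (ω2 o0 o1 τ) (ω2 none o1 τ) ⟨k, i⟩
      (hA none o1 τ)
      (fun q hq => by
        show (Equiv.piSplitAt (⟨k, i⟩ : Σ k : Fin K, Fin (r k)) π).symm
            (o0, (Equiv.piSplitAt j1 π').symm (o1, τ)) q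
          = (Equiv.piSplitAt (⟨k, i⟩ : Σ k : Fin K, Fin (r k)) π).symm
            (none, (Equiv.piSplitAt j1 π').symm (o1, τ)) q
        rw [piSplit_ne π _ _ _ hq, piSplit_ne π _ _ _ hq])
    have step2 := sampledSet_congr part r (ω2 none o1 τ) (ω2 none none τ) ⟨k', i'⟩
      (hB none none τ)
      (fun q hq => by
        by_cases hq0 : q = ⟨k, i⟩
        · subst hq0; rw [hA, hA]
        · exact hC none o1 τ q hq0 hq)
    rw [step1, hA, step2, hB]
  have hW : ∀ o0 o1 τ,
      (∏ q ∈ (Finset.univ.erase ⟨k, i⟩).erase ⟨k', i'⟩,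
        slotProb part r x q (ω2 o0 o1 τ q))
      = ∏ q ∈ (Finset.univ.erase ⟨k, i⟩).erase ⟨k', i'⟩,
        slotProb part r x q (ω2 none none τ q) := by
    intro o0 o1 τ
    refine Finset.prod_congr rfl fun q hq => ?_
    have hq1 : q ≠ ⟨k', i'⟩ := (Finset.mem_erase.mp hq).1
    have hq0 : q ≠ ⟨k, i⟩ := (Finset.mem_erase.mp (Finset.mem_erase.mp hq).2).1
    rw [hC o0 o1 τ q hq0 hq1]
  -- now the sum computation
  unfold FF
  rw [sum_split π ⟨k, i⟩]
  rw [Finset.sum_congr rfl (fun o0 _ => sum_split π' j1 _)]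
  have hT : ∀ o0 o1 τ,
      (∏ q ∈ (Finset.univ.erase ⟨k, i⟩).erase ⟨k', i'⟩,
          slotProb part r x q (ω2 o0 o1 τ q)) *
        (lin part r ⟨k', i', t0⟩ ⟨k', i'⟩ (ω2 o0 o1 τ ⟨k', i'⟩)
          * (lin part r ⟨k, i, s0⟩ ⟨k, i⟩ (ω2 o0 o1 τ ⟨k, i⟩)
            * g (sampledSet part r (ω2 o0 o1 τ))))
      = (∏ q ∈ (Finset.univ.erase ⟨k, i⟩).erase ⟨k', i'⟩,
          slotProb part r x q (ω2 none none τ q)) *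
        (lin part r ⟨k, i, s0⟩ ⟨k, i⟩ o0 *
          (lin part r ⟨k', i', t0⟩ ⟨k', i'⟩ o1 *
            g (oset part r ⟨k, i⟩ o0
              ∪ (oset part r ⟨k', i'⟩ o1 ∪ sampledSet part r (ω2 none none τ))))) := by
    intro o0 o1 τ
    rw [hW, hB, hA, hS]
    ring
  rw [Finset.sum_congr rfl (fun o0 _ => Finset.sum_congr rfl (fun o1 _ =>
    Finset.sum_congr rfl (fun τ _ => hT o0 o1 τ)))]
  rw [Finset.sum_congr rfl (fun o0 _ => Finset.sum_comm), Finset.sum_comm]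
  refine Finset.sum_nonpos fun τ _ => ?_
  set U := sampledSet part r (ω2 none none τ) with hU
  set W2 : ℝ := ∏ q ∈ (Finset.univ.erase ⟨k, i⟩).erase ⟨k', i'⟩,
    slotProb part r x q (ω2 none none τ q) with hW2
  have hW2nn : 0 ≤ W2 := Finset.prod_nonneg fun q _ => hx q _
  have hinner : ∀ o0 : π ⟨k, i⟩,
      (∑ o1 : π' j1, lin part r ⟨k', i', t0⟩ ⟨k', i'⟩ o1
        * g (oset part r ⟨k, i⟩ o0 ∪ (oset part r ⟨k', i'⟩ o1 ∪ U)))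
      = g (oset part r ⟨k, i⟩ o0 ∪ insert t0.1 U)
        - g (oset part r ⟨k, i⟩ o0 ∪ U) := by
    intro o0
    have h := sum_option_lin part r k' i' t0
      (fun A => g (oset part r ⟨k, i⟩ o0 ∪ (A ∪ U)))
    simp only [← Finset.insert_eq, Finset.empty_union] at h
    exact h
  calc ∑ o0 : π ⟨k, i⟩, ∑ o1 : π' j1,
        W2 * (lin part r ⟨k, i, s0⟩ ⟨k, i⟩ o0 *
          (lin part r ⟨k', i', t0⟩ ⟨k', i'⟩ o1 *
            g (oset part r ⟨k, i⟩ o0 ∪ (oset part r ⟨k', i'⟩ o1 ∪ U))))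
      = W2 * ∑ o0 : π ⟨k, i⟩, lin part r ⟨k, i, s0⟩ ⟨k, i⟩ o0 *
          ((g (oset part r ⟨k, i⟩ o0 ∪ insert t0.1 U))
            - g (oset part r ⟨k, i⟩ o0 ∪ U)) := by
        rw [Finset.mul_sum]
        refine Finset.sum_congr rfl fun o0 _ => ?_
        rw [← hinner o0, Finset.mul_sum, Finset.mul_sum]
    _ = W2 * ((g (insert s0.1 (insert t0.1 U)) - g (insert s0.1 U))
          - (g (insert t0.1 U) - g U)) := by
        have h := sum_option_lin part r k i s0
          (fun A => g (A ∪ insert t0.1 U) - g (A ∪ U))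
        rw [h]
        simp only [Finset.singleton_union, Finset.empty_union]
    _ ≤ 0 := by
        refine mul_nonpos_of_nonneg_of_nonpos hW2nn ?_
        have h4 := submod4 g hmono hsub s0.1 t0.1 U
        linarith
end ExtPMAux

namespace ExtPMAux

set_option linter.unusedSectionVars false
set_option maxHeartbeats 2000000

open MvPolynomial

variable {G : Type*} [Fintype G] [DecidableEq G] {K : ℕ} (part : G → Fin K) (r : Fin K → ℕ)

/-- polynomial representing one slot's probability -/
def SP (q : Σ k : Fin K, Fin (r k)) (o : Option {s : G // part s = q.1}) :
    MvPolynomial (PMIndex part r) ℝ :=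
  o.elim (1 - ∑ s : {s : G // part s = q.1}, X ⟨q.1, q.2, s⟩) fun s => X ⟨q.1, q.2, s⟩

lemma eval_SP (x : EuclideanSpace ℝ (PMIndex part r)) (q) (o) :
    MvPolynomial.eval (fun i => x i) (SP part r q o) = slotProb part r x q o := by
  cases o <;> simp [SP, slotProb]

lemma SP_support (q : Σ k : Fin K, Fin (r k)) (o) :
    ∀ m ∈ (SP part r q o).support, ∀ i : PMIndex part r,
      m i ≤ if (⟨i.1, i.2.1⟩ : Σ k : Fin K, Fin (r k)) = q then 1 else 0 := by
  have hX : ∀ (s : {s : G // part s = q.1}) (m : PMIndex part r →₀ ℕ),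
      m ∈ (X (R := ℝ) (⟨q.1, q.2, s⟩ : PMIndex part r)).support →
      ∀ i : PMIndex part r, m i ≤ if (⟨i.1, i.2.1⟩ : Σ k : Fin K, Fin (r k)) = q then 1 else 0 := by
    intro s m hm i
    rw [support_X, Finset.mem_singleton] at hm
    subst hm
    rw [Finsupp.single_apply]
    by_cases h : (⟨q.1, q.2, s⟩ : PMIndex part r) = i
    · rw [if_pos h, if_pos (by cases h; rfl)]
    · rw [if_neg h]
      positivity
  cases o with
  | some s => exact hX s
  | none =>
      intro m hm i
      have h1 : m ∈ ((1 : MvPolynomial (PMIndex part r) ℝ)).support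
          ∪ (∑ s : {s : G // part s = q.1}, X (R := ℝ)
              (⟨q.1, q.2, s⟩ : PMIndex part r)).support :=
        support_sub _ _ _ hm
      rw [Finset.mem_union] at h1
      rcases h1 with h1 | h1
      · have : m = 0 := by
          have hone : ((1 : MvPolynomial (PMIndex part r) ℝ)).support = {0} := by
            rw [show (1 : MvPolynomial (PMIndex part r) ℝ) = monomial 0 1 by
              simp [monomial_zero']]
            rw [support_monomial, if_neg one_ne_zero]
          rw [hone, Finset.mem_singleton] at h1
          exact h1
        simp [this]
      · have h2 := support_sum h1
        rw [Finset.mem_biUnion] at h2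
        obtain ⟨s, _, hs⟩ := h2
        exact hX s m hs i

lemma prod_SP_support (Q : Finset (Σ k : Fin K, Fin (r k))) (ω : PMSample part r) :
    ∀ m ∈ (∏ q ∈ Q, SP part r q (ω q)).support, ∀ i : PMIndex part r,
      m i ≤ if (⟨i.1, i.2.1⟩ : Σ k : Fin K, Fin (r k)) ∈ Q then 1 else 0 := by
  classical
  induction Q using Finset.induction_on with
  | empty =>
      intro m hm i
      rw [Finset.prod_empty] at hm
      have hone : ((1 : MvPolynomial (PMIndex part r) ℝ)).support = {0} := by
        rw [show (1 : MvPolynomial (PMIndex part r) ℝ) = monomial 0 1 by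
          simp [monomial_zero']]
        rw [support_monomial, if_neg one_ne_zero]
      rw [hone, Finset.mem_singleton] at hm
      simp [hm]
  | insert a Q' ha ih =>
      intro m hm i
      rw [Finset.prod_insert ha] at hm
      have h1 := support_mul _ _ hm
      rw [Finset.mem_add] at h1
      obtain ⟨m1, hm1, m2, hm2, rfl⟩ := h1
      have b1 := SP_support part r a (ω a) m1 hm1 i
      have b2 := ih m2 hm2 i
      rw [Finsupp.add_apply]
      by_cases hia : (⟨i.1, i.2.1⟩ : Σ k : Fin K, Fin (r k)) = a
      · rw [if_pos (Finset.mem_insert.mpr (Or.inl hia))]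
        rw [if_pos hia] at b1
        rw [if_neg (by rw [hia]; exact ha)] at b2
        omega
      · rw [if_neg hia] at b1
        by_cases hiQ : (⟨i.1, i.2.1⟩ : Σ k : Fin K, Fin (r k)) ∈ Q'
        · rw [if_pos (Finset.mem_insert.mpr (Or.inr hiQ))]
          rw [if_pos hiQ] at b2
          omega
        · rw [if_neg (by simp [hia, hiQ])]
          rw [if_neg hiQ] at b2
          omega

lemma extPM_multilinear (g : Finset G → ℝ) :
    IsMultilinearPolyI (extPM part r g) := by
  classical
  refine ⟨∑ ω : PMSample part r,
    (∏ q : Σ k : Fin K, Fin (r k), SP part r q (ω q)) * C (g (sampledSet part r ω)), ?_, ?_⟩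
  · intro m hm i
    have h1 := support_sum hm
    rw [Finset.mem_biUnion] at h1
    obtain ⟨ω, _, hω⟩ := h1
    have h2 := support_mul _ _ hω
    rw [Finset.mem_add] at h2
    obtain ⟨m1, hm1, m2, hm2, rfl⟩ := h2
    have b1 := prod_SP_support part r Finset.univ ω m1 hm1 i
    rw [if_pos (Finset.mem_univ _)] at b1
    have b2 : m2 = 0 := by
      have hC : m2 ∈ ({0} : Finset (PMIndex part r →₀ ℕ)) := by
        rw [show (C (g (sampledSet part r ω)) : MvPolynomial (PMIndex part r) ℝ)
          = monomial 0 (g (sampledSet part r ω)) from (congrFun monomial_zero'.symm _)] at hm2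
        exact support_monomial_subset hm2
      rwa [Finset.mem_singleton] at hC
    rw [b2]
    simpa using b1
  · intro x
    rw [extPM_eq_FF]
    unfold FF
    rw [map_sum]
    refine Finset.sum_congr rfl fun ω _ => ?_
    rw [map_mul, eval_C, map_prod]
    congr 1
    exact Finset.prod_congr rfl fun q _ => (eval_SP part r x q (ω q)).symm

lemma extPM_zero (g : Finset G → ℝ) (hempty : g ∅ = 0) : extPM part r g 0 = 0 := by
  rw [extPM]
  refine Finset.sum_eq_zero fun ω _ => ?_
  by_cases h : ω = fun _ => none
  · subst h
    have : sampledSet part r (fun _ => none) = ∅ := by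
      ext a; simp [sampledSet]
    rw [this, hempty, mul_zero]
  · obtain ⟨q, hq⟩ := Function.ne_iff.mp h
    obtain ⟨s, hs⟩ := Option.ne_none_iff_exists'.mp hq
    have hzero : slotProb part r 0 q (ω q) = 0 := by
      rw [hs]; simp [slotProb, PiLp.zero_apply]
    rw [Finset.prod_eq_zero (Finset.mem_univ q) hzero, zero_mul]

end ExtPMAux

namespace ExtPMAux

set_option linter.unusedSectionVars false
set_option maxHeartbeats 2000000

variable {G : Type*} [Fintype G] [DecidableEq G] {K : ℕ} (part : G → Fin K) (r : Fin K → ℕ)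

lemma slotProb_nonneg_of (x : EuclideanSpace ℝ (PMIndex part r))
    (h1 : ∀ p, 0 ≤ x p)
    (h2 : ∀ q : Σ k : Fin K, Fin (r k), ∑ s : {s : G // part s = q.1}, x ⟨q.1, q.2, s⟩ ≤ 1) :
    ∀ q o, 0 ≤ slotProb part r x q o := by
  intro q o
  cases o with
  | none => simp only [slotProb]; linarith [h2 q]
  | some s => exact h1 _

lemma euclidean_decomp {ι : Type*} [Fintype ι] [DecidableEq ι] (v : EuclideanSpace ℝ ι) :
    v = ∑ i, v i • EuclideanSpace.single i (1:ℝ) := by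
  symm
  simpa [EuclideanSpace.basisFun_apply, EuclideanSpace.basisFun_repr] using
    (EuclideanSpace.basisFun ι ℝ).sum_repr v

lemma sum_abs_le_sqrt_card {ι : Type*} [Fintype ι] [DecidableEq ι] (v : EuclideanSpace ℝ ι) :
    ∑ i, |v i| ≤ Real.sqrt (Fintype.card ι) * ‖v‖ := by
  have hv : ‖v‖ = Real.sqrt (∑ i, |v i| ^ 2) := by
    rw [EuclideanSpace.norm_eq]
    simp [Real.norm_eq_abs]
  have h2 : (∑ i, |v i|) ^ 2 ≤ (Fintype.card ι : ℝ) * ∑ i, |v i| ^ 2 := by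
    simpa using sq_sum_le_card_mul_sum_sq (s := (Finset.univ : Finset ι)) (f := fun i => |v i|)
  have h3 : (0:ℝ) ≤ ∑ i, |v i| := Finset.sum_nonneg fun i _ => abs_nonneg _
  have h4 := Real.sqrt_le_sqrt h2
  rw [Real.sqrt_sq h3] at h4
  calc ∑ i, |v i| ≤ Real.sqrt ((Fintype.card ι : ℝ) * ∑ i, |v i| ^ 2) := h4
      _ = Real.sqrt (Fintype.card ι) * Real.sqrt (∑ i, |v i| ^ 2) :=
          Real.sqrt_mul (by positivity) _
      _ = Real.sqrt (Fintype.card ι) * ‖v‖ := by rw [hv]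

end ExtPMAux


open ExtPMAux in
set_option maxHeartbeats 2000000 in
/-- The product-simplex extension of a monotone submodular `g : 2^G → [0,M]` with
`g(∅)=0` is multi-linear, monotone, DR-submodular, vanishes at `0`, and is
`M·√(∑_k r_k |G_k|)`-Lipschitz on the product of simplexes. -/
theorem extPM_properties
    (part : G → Fin K) (r : Fin K → ℕ)
    (g : Finset G → ℝ) (M : ℝ)
    (hrange : ∀ A : Finset G, g A ∈ Set.Icc (0 : ℝ) M)
    (hmono : ∀ A B : Finset G, A ⊆ B → g A ≤ g B)
    (hsub : ∀ (A B : Finset G) (s : G), A ⊆ B → s ∉ B →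
      g (insert s B) - g B ≤ g (insert s A) - g A)
    (hempty : g ∅ = 0)
    (Ksimp : Set (EuclideanSpace ℝ (PMIndex part r)))
    (hKsimp : Ksimp = {x | (∀ p, 0 ≤ x p) ∧
      ∀ q : Σ k : Fin K, Fin (r k), ∑ s : {s : G // part s = q.1}, x ⟨q.1, q.2, s⟩ ≤ 1})
    (f : EuclideanSpace ℝ (PMIndex part r) → ℝ)
    (hf : ∀ x, f x = extPM part r g x) :
    IsMultilinearPolyI f ∧
    f 0 = 0 ∧
    (∀ x ∈ Ksimp, ∀ y ∈ Ksimp, (∀ p, x p ≤ y p) → f x ≤ f y) ∧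
    (∀ x ∈ Ksimp, ∀ p q : PMIndex part r,
      fderiv ℝ (fun y => fderiv ℝ f y (EuclideanSpace.single p 1)) x
        (EuclideanSpace.single q 1) ≤ 0) ∧
    (∀ x ∈ Ksimp, ∀ y ∈ Ksimp,
      |f x - f y| ≤ M * Real.sqrt (Fintype.card (PMIndex part r)) * ‖x - y‖) := by
  classical
  have hfF : f = FF part r Finset.univ (fun ω => g (sampledSet part r ω)) :=
    funext fun z => hf z
  subst hfF
  subst hKsimp
  set F := FF part r Finset.univ (fun ω => g (sampledSet part r ω)) with hFdef
  set Dp : PMIndex part r → EuclideanSpace ℝ (PMIndex part r) → ℝ :=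
    fun p z => FF part r (Finset.univ.erase (pslot part r p))
      (fun ω => lin part r p (pslot part r p) (ω (pslot part r p))
        * g (sampledSet part r ω)) z with hDpdef
  have hM : (0:ℝ) ≤ M := le_trans (hrange ∅).1 (hrange ∅).2
  have hslot : ∀ z ∈ {x : EuclideanSpace ℝ (PMIndex part r) | (∀ p, 0 ≤ x p) ∧
      ∀ q : Σ k : Fin K, Fin (r k), ∑ s : {s : G // part s = q.1}, x ⟨q.1, q.2, s⟩ ≤ 1},
      ∀ q o, 0 ≤ slotProb part r z q o := fun z hz =>
    slotProb_nonneg_of part r z hz.1 hz.2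
  have hDp : ∀ (z : EuclideanSpace ℝ (PMIndex part r)) (p : PMIndex part r),
      fderiv ℝ F z (EuclideanSpace.single p 1) = Dp p z :=
    fun z p => FF_fderiv part r (Finset.mem_univ _) z
  have hDapply : ∀ (z v : EuclideanSpace ℝ (PMIndex part r)),
      fderiv ℝ F z v = ∑ p, v p * Dp p z := by
    intro z v
    conv_lhs => rw [euclidean_decomp v]
    rw [map_sum]
    exact Finset.sum_congr rfl fun p _ => by rw [map_smul, hDp z p, smul_eq_mul]
  have hDpmem : ∀ z, (∀ q o, 0 ≤ slotProb part r z q o) → ∀ p : PMIndex part r,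
      Dp p z ∈ Set.Icc (0:ℝ) M := by
    intro z hz p
    obtain ⟨k, i, s0⟩ := p
    exact Dp_bounds part r g M hrange hmono z hz k i s0
  refine ⟨extPM_multilinear part r g, extPM_zero part r g hempty, ?_, ?_, ?_⟩
  · -- monotone
    intro x hx y hy hxy
    set v : EuclideanSpace ℝ (PMIndex part r) := y - x with hvdef
    have hvc : ∀ p, v p = y p - x p := fun p => rfl
    have hseg : ∀ t ∈ Set.Icc (0:ℝ) 1,
        (x + t • v) ∈ {z : EuclideanSpace ℝ (PMIndex part r) | (∀ p, 0 ≤ z p) ∧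
          ∀ q : Σ k : Fin K, Fin (r k),
            ∑ s : {s : G // part s = q.1}, z ⟨q.1, q.2, s⟩ ≤ 1} := by
      intro t ht
      have hco : ∀ p : PMIndex part r, (x + t • v) p = x p + t * (y p - x p) := fun p => rfl
      constructor
      · intro p
        rw [hco p]
        have := hxy p
        have := hx.1 p
        nlinarith [ht.1, ht.2]
      · intro q
        have hsum : ∑ s : {s : G // part s = q.1}, (x + t • v) ⟨q.1, q.2, s⟩
            = (∑ s : {s : G // part s = q.1}, x ⟨q.1, q.2, s⟩)
              + t * ((∑ s : {s : G // part s = q.1}, y ⟨q.1, q.2, s⟩)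
                - (∑ s : {s : G // part s = q.1}, x ⟨q.1, q.2, s⟩)) := by
          simp only [hco]
          rw [Finset.sum_add_distrib, mul_sub, Finset.mul_sum, Finset.mul_sum,
            ← Finset.sum_sub_distrib]
          congr 1
          exact Finset.sum_congr rfl fun s _ => by ring
        rw [hsum]
        have h1 := hx.2 q
        have h2 := hy.2 q
        have h3 : (0:ℝ) ≤ ∑ s : {s : G // part s = q.1}, x ⟨q.1, q.2, s⟩ :=
          Finset.sum_nonneg fun s _ => hx.1 _
        nlinarith [ht.1, ht.2]
    set ψ : ℝ → ℝ := fun t => F (x + t • v) with hψdef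
    have hψd : ∀ t : ℝ, HasDerivAt ψ (fderiv ℝ F (x + t • v) v) t := by
      intro t
      have hline : HasDerivAt (fun t : ℝ => x + t • v) v t := by
        simpa using ((hasDerivAt_id t).smul_const v).const_add x
      exact ((FF_differentiable part r Finset.univ _ (x + t • v)).hasFDerivAt).comp_hasDerivAt
        t hline
    have hmono' : MonotoneOn ψ (Set.Icc (0:ℝ) 1) := by
      refine monotoneOn_of_deriv_nonneg (convex_Icc 0 1) ?_ ?_ ?_
      · exact Continuous.continuousOn (by
          have : Continuous (fun t : ℝ => x + t • v) :=
            continuous_const.add (continuous_id.smul continuous_const)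
          exact (FF_differentiable part r Finset.univ _).continuous.comp this)
      · intro t ht
        exact (hψd t).differentiableAt.differentiableWithinAt
      · intro t ht
        rw [(hψd t).deriv, hDapply]
        refine Finset.sum_nonneg fun p _ => mul_nonneg ?_ ?_
        · rw [hvc p]; linarith [hxy p]
        · have hmem := hseg t (Set.mem_of_mem_of_subset ht
            (interior_subset))
          exact (hDpmem _ (hslot _ hmem) p).1
    have h0 : ψ 0 = F x := by simp [hψdef]
    have h1 : ψ 1 = F y := by simp [hψdef, hvdef]
    rw [← h0, ← h1]
    exact hmono' (Set.mem_Icc.mpr ⟨le_refl 0, zero_le_one⟩)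
      (Set.mem_Icc.mpr ⟨zero_le_one, le_refl 1⟩) zero_le_one
  · -- DR submodular
    intro x hx p q
    have hfun : (fun y => fderiv ℝ F y (EuclideanSpace.single p 1)) = fun y => Dp p y :=
      funext fun y => hDp y p
    rw [hfun]
    by_cases hqq : pslot part r q ∈ Finset.univ.erase (pslot part r p)
    · rw [hDpdef]
      rw [FF_fderiv part r hqq x]
      obtain ⟨k, i, s0⟩ := p
      obtain ⟨k', i', t0⟩ := q
      have h01 : (⟨k', i'⟩ : Σ k : Fin K, Fin (r k)) ≠ ⟨k, i⟩ :=
        (Finset.mem_erase.mp hqq).1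
      exact E_nonpos part r g M hrange hmono hsub x (hslot x hx) k i s0 k' i' t0 h01
    · rw [hDpdef, FF_fderiv_zero part r hqq x]
  · -- Lipschitz
    intro x hx y hy
    have hconv : Convex ℝ {z : EuclideanSpace ℝ (PMIndex part r) | (∀ p, 0 ≤ z p) ∧
        ∀ q : Σ k : Fin K, Fin (r k),
          ∑ s : {s : G // part s = q.1}, z ⟨q.1, q.2, s⟩ ≤ 1} := by
      intro u hu w hw a b ha hb hab
      have hco : ∀ p : PMIndex part r, (a • u + b • w) p = a * u p + b * w p := fun p => rfl
      constructor
      · intro p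
        rw [hco p]
        have := hu.1 p
        have := hw.1 p
        nlinarith
      · intro q'
        have hsum : ∑ s : {s : G // part s = q'.1}, (a • u + b • w) ⟨q'.1, q'.2, s⟩
            = a * (∑ s : {s : G // part s = q'.1}, u ⟨q'.1, q'.2, s⟩)
              + b * (∑ s : {s : G // part s = q'.1}, w ⟨q'.1, q'.2, s⟩) := by
          rw [Finset.mul_sum, Finset.mul_sum, ← Finset.sum_add_distrib]
          exact Finset.sum_congr rfl fun s _ => by rw [hco]
        rw [hsum]
        have h1 := hu.2 q'
        have h2 := hw.2 q'
        have h3 : (0:ℝ) ≤ ∑ s : {s : G // part s = q'.1}, u ⟨q'.1, q'.2, s⟩ :=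
          Finset.sum_nonneg fun s _ => hu.1 _
        have h4 : (0:ℝ) ≤ ∑ s : {s : G // part s = q'.1}, w ⟨q'.1, q'.2, s⟩ :=
          Finset.sum_nonneg fun s _ => hw.1 _
        nlinarith
    have hbound : ∀ z ∈ {z : EuclideanSpace ℝ (PMIndex part r) | (∀ p, 0 ≤ z p) ∧
        ∀ q : Σ k : Fin K, Fin (r k),
          ∑ s : {s : G // part s = q.1}, z ⟨q.1, q.2, s⟩ ≤ 1},
        ‖fderiv ℝ F z‖ ≤ M * Real.sqrt (Fintype.card (PMIndex part r)) := by
      intro z hz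
      refine ContinuousLinearMap.opNorm_le_bound _ (by positivity) fun v => ?_
      rw [hDapply z v, Real.norm_eq_abs]
      calc |∑ p, v p * Dp p z| ≤ ∑ p, |v p * Dp p z| := Finset.abs_sum_le_sum_abs _ _
        _ ≤ ∑ p, |v p| * M := by
            refine Finset.sum_le_sum fun p _ => ?_
            rw [abs_mul]
            refine mul_le_mul_of_nonneg_left ?_ (abs_nonneg _)
            have hm := hDpmem z (hslot z hz) p
            rw [abs_of_nonneg hm.1]
            exact hm.2
        _ = M * ∑ p, |v p| := by rw [← Finset.sum_mul, mul_comm]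
        _ ≤ M * (Real.sqrt (Fintype.card (PMIndex part r)) * ‖v‖) := by
            refine mul_le_mul_of_nonneg_left ?_ hM
            exact sum_abs_le_sqrt_card v
        _ = M * Real.sqrt (Fintype.card (PMIndex part r)) * ‖v‖ := by ring
    have key := Convex.norm_image_sub_le_of_norm_fderiv_le
      (fun z _ => (FF_differentiable part r Finset.univ
        (fun ω => g (sampledSet part r ω))) z)
      hbound hconv hy hx
    rw [← Real.norm_eq_abs]
    exact key
end
end

section
/- Let G be a finite ground set containing a dummy element ∘ that has zero marginal gain for all g_i. Let g(S) = Σ_{i=1}^{|G|} λ_i g_i({S_j : j ≤ i}) for an ordered list S of length |G|, where λ_i ≥ 0 and each g_i is monotone submodular with g_i(∅) = 0. Let K = ∏_{i=1}^{|G|} Δ_{|G|−1}, interpreting each simplex as an independent distribution over G for position i (∘ receiving the leftover probability). Define f(x) = E_{S ∼ EXT_SS(x)}[g(S)]. Then f is multi-linear, monotone, DR-submodular, f(0) = 0, and f is M·|G|-Lipschitz when g takes values in [0, M]. -/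
noncomputable section

variable {G : Type*} [Fintype G] [DecidableEq G]

/-- Coordinates: one simplex over `G' = G \ {∘}` for each of the `|G|` positions. -/
abbrev SSIndex (circ : G) : Type _ := Fin (Fintype.card G) × {s : G // s ≠ circ}

/-- Probability that position `i` receives element `s` of `G` (the dummy element
`∘` receives the leftover probability of the `i`-th simplex). -/
def posProb (circ : G) (x : EuclideanSpace ℝ (SSIndex circ))
    (i : Fin (Fintype.card G)) (s : G) : ℝ :=
  if h : s = circ then 1 - ∑ s' : {s : G // s ≠ circ}, x (i, s')
  else x (i, ⟨s, h⟩)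

/-- The extension `f(x) = E_{S ∼ EXT_SS(x)}[g(S)]`, where the positions of the
ordered list `S` are sampled independently. -/
def extSS (circ : G) (gL : (Fin (Fintype.card G) → G) → ℝ)
    (x : EuclideanSpace ℝ (SSIndex circ)) : ℝ :=
  ∑ S : Fin (Fintype.card G) → G,
    (∏ i : Fin (Fintype.card G), posProb circ x i (S i)) * gL S

set_option linter.unusedSectionVars false

namespace ExtAux

def dc (circ : G) (i : Fin (Fintype.card G)) (s : G) (p : SSIndex circ) : ℝ :=
  if i = p.1 then (if s = (p.2 : G) then 1 else 0) - (if s = circ then 1 else 0) else 0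

lemma dc_ne (circ : G) {i : Fin (Fintype.card G)} {p : SSIndex circ} (h : i ≠ p.1) (s : G) :
    dc circ i s p = 0 := by simp [dc, h]

lemma dcsum (circ : G) (p : SSIndex circ) (h : G → ℝ) :
    ∑ a : G, dc circ p.1 a p * h a = h p.2 - h circ := by
  simp only [dc, if_pos rfl, sub_mul, ite_mul, one_mul, zero_mul, if_true]
  rw [Finset.sum_sub_distrib]
  simp [Finset.sum_ite_eq']

/-- update of a euclidean vector -/
def upd (circ : G) (x : EuclideanSpace ℝ (SSIndex circ)) (p : SSIndex circ) (t : ℝ) :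
    EuclideanSpace ℝ (SSIndex circ) := WithLp.toLp 2 (Function.update x.ofLp p t)

lemma upd_apply (circ : G) (x : EuclideanSpace ℝ (SSIndex circ)) (p : SSIndex circ) (t : ℝ)
    (q : SSIndex circ) : upd circ x p t q = if q = p then t else x q := by
  simp [upd, Function.update_apply]

lemma posProb_nonneg (circ : G) {x : EuclideanSpace ℝ (SSIndex circ)}
    (h1 : ∀ p, 0 ≤ x p)
    (h2 : ∀ i : Fin (Fintype.card G), ∑ s' : {s : G // s ≠ circ}, x (i, s') ≤ 1)
    (i : Fin (Fintype.card G)) (s : G) : 0 ≤ posProb circ x i s := by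
  unfold posProb
  split
  · linarith [h2 i]
  · exact h1 _

lemma sum_posProb (circ : G) (x : EuclideanSpace ℝ (SSIndex circ)) (i : Fin (Fintype.card G)) :
    ∑ s : G, posProb circ x i s = 1 := by
  rw [← Finset.add_sum_erase _ _ (Finset.mem_univ circ)]
  have h1 : posProb circ x i circ = 1 - ∑ s' : {s : G // s ≠ circ}, x (i, s') := by
    simp [posProb]
  have h2 : ∑ s ∈ Finset.univ.erase circ, posProb circ x i s
      = ∑ s' : {s : G // s ≠ circ}, x (i, s') := by
    rw [Finset.sum_subtype (Finset.univ.erase circ) (p := fun s => s ≠ circ) (by simp)]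
    apply Finset.sum_congr rfl
    intro s _
    simp [posProb, s.2]
  rw [h1, h2]; ring

lemma posProb_upd (circ : G) (x : EuclideanSpace ℝ (SSIndex circ)) (p : SSIndex circ) (t : ℝ)
    (i : Fin (Fintype.card G)) (s : G) :
    posProb circ (upd circ x p t) i s = posProb circ x i s + (t - x p) * dc circ i s p := by
  by_cases hs : s = circ
  · rw [hs]
    have hcp : (circ = (p.2 : G)) = False := by
      simp [Ne.symm p.2.2]
    simp only [posProb, dif_pos rfl, dc, hcp, if_false, zero_sub]
    by_cases hi : i = p.1
    · subst hi
      have hsum : ∑ s' : {s : G // s ≠ circ}, upd circ x p t (p.1, s')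
          = (∑ s' : {s : G // s ≠ circ}, x (p.1, s')) + (t - x p) := by
        have hterm : ∀ s' : {s : G // s ≠ circ},
            upd circ x p t (p.1, s') = x (p.1, s') + (if s' = p.2 then t - x p else 0) := by
          intro s'
          rw [upd_apply]
          by_cases h : s' = p.2
          · subst h
            simp [Prod.mk.eta]
          · have : ((p.1, s') : SSIndex circ) ≠ p := by
              intro hq
              exact h (congrArg Prod.snd hq)
            simp [this, h]
        rw [Finset.sum_congr rfl (fun s' _ => hterm s'), Finset.sum_add_distrib,
          Finset.sum_ite_eq' Finset.univ p.2 (fun _ => t - x p)]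
        simp
      rw [hsum]
      simp
      ring
    · have : ∀ s' : {s : G // s ≠ circ}, upd circ x p t (i, s') = x (i, s') := by
        intro s'
        rw [upd_apply, if_neg]
        intro hq
        exact hi (congrArg Prod.fst hq)
      rw [Finset.sum_congr rfl (fun s' _ => this s')]
      simp [hi]
  · simp only [posProb, dif_neg hs, dc]
    rw [upd_apply]
    by_cases hi : i = p.1
    · by_cases h2 : s = (p.2 : G)
      · have : ((i, ⟨s, hs⟩) : SSIndex circ) = p := by
          subst hi
          ext
          · rfl
          · exact h2
        rw [if_pos this, this]
        have hne : ((p.2 : G) = circ) = False := by simp [p.2.2]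
        simp [hi, h2, hs, hne]
      · have : ((i, ⟨s, hs⟩) : SSIndex circ) ≠ p := by
          intro hq
          exact h2 (congrArg (fun z => (z.2 : G)) hq)
        rw [if_neg this]
        simp [hi, h2, hs]
    · have : ((i, ⟨s, hs⟩) : SSIndex circ) ≠ p := by
        intro hq
        exact hi (congrArg Prod.fst hq)
      rw [if_neg this, if_neg hi]
      ring

lemma sum_update (i : Fin (Fintype.card G)) (A : (Fin (Fintype.card G) → G) → ℝ) :
    ∑ S : Fin (Fintype.card G) → G, ∑ a : G, A (Function.update S i a)
      = (Fintype.card G : ℝ) * ∑ S : Fin (Fintype.card G) → G, A S := by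
  have hinv : Function.Involutive
      (fun z : (Fin (Fintype.card G) → G) × G => (Function.update z.1 i z.2, z.1 i)) := by
    intro z
    simp [Function.update_idem, Function.update_eq_self]
  have key : ∑ z : (Fin (Fintype.card G) → G) × G, A (Function.update z.1 i z.2)
      = ∑ z : (Fin (Fintype.card G) → G) × G, A z.1 :=
    Fintype.sum_equiv hinv.toPerm _ _ (fun z => rfl)
  calc ∑ S : Fin (Fintype.card G) → G, ∑ a : G, A (Function.update S i a)
      = ∑ z : (Fin (Fintype.card G) → G) × G, A (Function.update z.1 i z.2) :=
        (Fintype.sum_prod_type (fun z : (Fin (Fintype.card G) → G) × G =>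
          A (Function.update z.1 i z.2))).symm
    _ = ∑ z : (Fin (Fintype.card G) → G) × G, A z.1 := key
    _ = ∑ S : Fin (Fintype.card G) → G, ∑ _a : G, A S :=
        Fintype.sum_prod_type (fun z : (Fin (Fintype.card G) → G) × G => A z.1)
    _ = (Fintype.card G : ℝ) * ∑ S : Fin (Fintype.card G) → G, A S := by
        simp [Finset.sum_const, Finset.mul_sum, mul_comm]

lemma prod_upd (circ : G) (x : EuclideanSpace ℝ (SSIndex circ)) (p : SSIndex circ) (t : ℝ)
    (S : Fin (Fintype.card G) → G) :
    ∏ i : Fin (Fintype.card G), posProb circ (upd circ x p t) i (S i)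
      = ∏ i : Fin (Fintype.card G), posProb circ x i (S i)
        + (t - x p) * (dc circ p.1 (S p.1) p
            * ∏ j ∈ Finset.univ.erase p.1, posProb circ x j (S j)) := by
  rw [← Finset.mul_prod_erase Finset.univ
      (fun i => posProb circ (upd circ x p t) i (S i)) (Finset.mem_univ p.1),
    ← Finset.mul_prod_erase Finset.univ
      (fun i => posProb circ x i (S i)) (Finset.mem_univ p.1)]
  have h1 : ∏ j ∈ Finset.univ.erase p.1, posProb circ (upd circ x p t) j (S j)
      = ∏ j ∈ Finset.univ.erase p.1, posProb circ x j (S j) := by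
    apply Finset.prod_congr rfl
    intro j hj
    rw [posProb_upd, dc_ne circ (Finset.mem_erase.mp hj).1]
    ring
  rw [h1, posProb_upd]
  ring

lemma extSS_upd (circ : G) (gL : (Fin (Fintype.card G) → G) → ℝ)
    (x : EuclideanSpace ℝ (SSIndex circ)) (p : SSIndex circ) (t : ℝ) :
    extSS circ gL (upd circ x p t) = extSS circ gL x
      + (t - x p) * ∑ S : Fin (Fintype.card G) → G,
          (dc circ p.1 (S p.1) p
            * ∏ j ∈ Finset.univ.erase p.1, posProb circ x j (S j)) * gL S := by
  unfold extSS
  rw [Finset.mul_sum, ← Finset.sum_add_distrib]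
  apply Finset.sum_congr rfl
  intro S _
  rw [prod_upd]
  ring

lemma slope_nonneg (circ : G) (gL : (Fin (Fintype.card G) → G) → ℝ)
    (hmono : ∀ (S : Fin (Fintype.card G) → G) (i₀ : Fin (Fintype.card G)) (a : G),
      gL (Function.update S i₀ circ) ≤ gL (Function.update S i₀ a))
    {x : EuclideanSpace ℝ (SSIndex circ)}
    (h1 : ∀ p, 0 ≤ x p)
    (h2 : ∀ i : Fin (Fintype.card G), ∑ s' : {s : G // s ≠ circ}, x (i, s') ≤ 1)
    (p : SSIndex circ) :
    0 ≤ ∑ S : Fin (Fintype.card G) → G,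
        (dc circ p.1 (S p.1) p
          * ∏ j ∈ Finset.univ.erase p.1, posProb circ x j (S j)) * gL S := by
  have hcard : (0:ℝ) < (Fintype.card G : ℝ) := by
    have : Nonempty G := ⟨circ⟩
    exact_mod_cast Fintype.card_pos
  rw [← mul_nonneg_iff_of_pos_left hcard, ← sum_update p.1]
  apply Finset.sum_nonneg
  intro S _
  have hW : ∀ a : G, ∏ j ∈ Finset.univ.erase p.1, posProb circ x j (Function.update S p.1 a j)
      = ∏ j ∈ Finset.univ.erase p.1, posProb circ x j (S j) := by
    intro a
    apply Finset.prod_congr rfl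
    intro j hj
    rw [Function.update_of_ne (Finset.mem_erase.mp hj).1]
  have hterm : ∀ a : G,
      (dc circ p.1 (Function.update S p.1 a p.1) p
        * ∏ j ∈ Finset.univ.erase p.1, posProb circ x j (Function.update S p.1 a j))
          * gL (Function.update S p.1 a)
      = dc circ p.1 a p * ((∏ j ∈ Finset.univ.erase p.1, posProb circ x j (S j))
          * gL (Function.update S p.1 a)) := by
    intro a
    rw [hW, Function.update_self]
    ring
  rw [Finset.sum_congr rfl (fun a _ => hterm a), dcsum]
  have hWnn : 0 ≤ ∏ j ∈ Finset.univ.erase p.1, posProb circ x j (S j) :=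
    Finset.prod_nonneg (fun j _ => posProb_nonneg circ h1 h2 j (S j))
  have := hmono S p.1 p.2
  nlinarith [this, hWnn]

lemma image_update_mem {N : ℕ} {S : Fin N → G} {i : Fin N} {a : G} {P : Finset (Fin N)}
    (hi : i ∈ P) :
    P.image (Function.update S i a) = insert a ((P.erase i).image S) := by
  conv_lhs => rw [← Finset.insert_erase hi]
  rw [Finset.image_insert, Function.update_self]
  congr 1
  apply Finset.image_congr
  intro j hj
  exact Function.update_of_ne (Finset.mem_erase.mp hj).1 _ _

lemma image_update_not_mem {N : ℕ} {S : Fin N → G} {i : Fin N} {a : G} {P : Finset (Fin N)}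
    (hi : i ∉ P) :
    P.image (Function.update S i a) = P.image S := by
  apply Finset.image_congr
  intro j hj
  have : j ≠ i := by
    intro h
    exact hi (h ▸ hj)
  exact Function.update_of_ne this _ _

section GLfacts

variable (circ : G) (gi : Fin (Fintype.card G) → Finset G → ℝ)
    (lam : Fin (Fintype.card G) → ℝ) (hlam : ∀ i, 0 ≤ lam i)
    (hgimono : ∀ i, ∀ A B : Finset G, A ⊆ B → gi i A ≤ gi i B)
    (hgisub : ∀ i, ∀ (A B : Finset G) (s : G), A ⊆ B → s ∉ B →
      gi i (insert s B) - gi i B ≤ gi i (insert s A) - gi i A)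
    (hdummy : ∀ i (A : Finset G), gi i (insert circ A) = gi i A)
    (gL : (Fin (Fintype.card G) → G) → ℝ)
    (hgL : ∀ S, gL S = ∑ i : Fin (Fintype.card G),
      lam i * gi i ((Finset.univ.filter fun j => j ≤ i).image S))

include hlam hgimono hdummy hgL in
lemma gL_update_mono (S : Fin (Fintype.card G) → G) (i₀ : Fin (Fintype.card G)) (a : G) :
    gL (Function.update S i₀ circ) ≤ gL (Function.update S i₀ a) := by
  rw [hgL, hgL]
  apply Finset.sum_le_sum
  intro k _
  by_cases hi : i₀ ∈ Finset.univ.filter (fun j => j ≤ k)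
  · rw [image_update_mem hi, image_update_mem hi, hdummy]
    exact mul_le_mul_of_nonneg_left (hgimono k _ _ (Finset.subset_insert _ _)) (hlam k)
  · rw [image_update_not_mem hi, image_update_not_mem hi]

include hlam hgimono hgisub hdummy hgL in
lemma gL_submod (S : Fin (Fintype.card G) → G) (i₀ i₁ : Fin (Fintype.card G)) (hne : i₀ ≠ i₁)
    (s₀ s₁ : G) (hs₀ : s₀ ≠ circ) (hs₁ : s₁ ≠ circ) :
    gL (Function.update (Function.update S i₀ s₀) i₁ s₁)
      - gL (Function.update (Function.update S i₀ s₀) i₁ circ)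
      - gL (Function.update (Function.update S i₀ circ) i₁ s₁)
      + gL (Function.update (Function.update S i₀ circ) i₁ circ) ≤ 0 := by
  simp only [hgL]
  rw [← Finset.sum_sub_distrib, ← Finset.sum_sub_distrib, ← Finset.sum_add_distrib]
  apply Finset.sum_nonpos
  intro k _
  set P := Finset.univ.filter (fun j => j ≤ k) with hP
  have key : ∀ a b : G, a ≠ circ → b ≠ circ →
      gi k (P.image (Function.update (Function.update S i₀ a) i₁ b))
        - gi k (P.image (Function.update (Function.update S i₀ a) i₁ circ))
        - gi k (P.image (Function.update (Function.update S i₀ circ) i₁ b))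
        + gi k (P.image (Function.update (Function.update S i₀ circ) i₁ circ)) ≤ 0 := by
    intro a b ha hb
    by_cases hi1 : i₁ ∈ P
    · rw [image_update_mem hi1, image_update_mem hi1, image_update_mem hi1,
        image_update_mem hi1]
      by_cases hi0 : i₀ ∈ P.erase i₁
      · rw [image_update_mem hi0, image_update_mem hi0]
        set B := ((P.erase i₁).erase i₀).image S with hB
        rw [hdummy, hdummy, Finset.insert_comm b circ, hdummy, hdummy]
        by_cases hmem : b ∈ insert a B
        · rw [Finset.insert_eq_self.mpr hmem]
          have := hgimono k B (insert b B) (Finset.subset_insert _ _)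
          linarith
        · have := hgisub k B (insert a B) b (Finset.subset_insert _ _) hmem
          linarith
      · rw [image_update_not_mem hi0, image_update_not_mem hi0]
        simp
    · rw [image_update_not_mem hi1, image_update_not_mem hi1, image_update_not_mem hi1,
        image_update_not_mem hi1]
      simp
  have h := key s₀ s₁ hs₀ hs₁
  nlinarith [h, hlam k]

end GLfacts

def mix (circ : G) (x y : EuclideanSpace ℝ (SSIndex circ)) (A : Finset (SSIndex circ)) :
    EuclideanSpace ℝ (SSIndex circ) := WithLp.toLp 2 (fun q => if q ∈ A then y q else x q)

lemma mix_empty (circ : G) (x y : EuclideanSpace ℝ (SSIndex circ)) :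
    mix circ x y ∅ = x := by
  ext q
  simp [mix]

lemma mix_univ (circ : G) (x y : EuclideanSpace ℝ (SSIndex circ)) :
    mix circ x y Finset.univ = y := by
  ext q
  simp [mix]

lemma mix_insert (circ : G) (x y : EuclideanSpace ℝ (SSIndex circ)) (A : Finset (SSIndex circ))
    (p : SSIndex circ) :
    mix circ x y (insert p A) = upd circ (mix circ x y A) p (y p) := by
  ext q
  rw [upd_apply]
  by_cases hq : q = p
  · subst hq
    simp [mix]
  · simp [mix, hq]

lemma extSS_mono (circ : G) (gL : (Fin (Fintype.card G) → G) → ℝ)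
    (hmono : ∀ (S : Fin (Fintype.card G) → G) (i₀ : Fin (Fintype.card G)) (a : G),
      gL (Function.update S i₀ circ) ≤ gL (Function.update S i₀ a))
    {x y : EuclideanSpace ℝ (SSIndex circ)}
    (hx1 : ∀ p, 0 ≤ x p)
    (hy1 : ∀ p, 0 ≤ y p)
    (hy2 : ∀ i : Fin (Fintype.card G), ∑ s' : {s : G // s ≠ circ}, y (i, s') ≤ 1)
    (hxy : ∀ p, x p ≤ y p) :
    extSS circ gL x ≤ extSS circ gL y := by
  have hmle : ∀ A q, mix circ x y A q ≤ y q := by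
    intro A q
    by_cases hq : q ∈ A <;> simp [mix, hq, hxy q]
  have hm1 : ∀ A q, 0 ≤ mix circ x y A q := by
    intro A q
    by_cases hq : q ∈ A <;> simp [mix, hq, hx1 q, hy1 q]
  have hm2 : ∀ (A) (i : Fin (Fintype.card G)),
      ∑ s' : {s : G // s ≠ circ}, mix circ x y A (i, s') ≤ 1 := by
    intro A i
    calc ∑ s' : {s : G // s ≠ circ}, mix circ x y A (i, s')
        ≤ ∑ s' : {s : G // s ≠ circ}, y (i, s') :=
          Finset.sum_le_sum (fun s' _ => hmle A (i, s'))
      _ ≤ 1 := hy2 i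
  have main : ∀ A : Finset (SSIndex circ), extSS circ gL x ≤ extSS circ gL (mix circ x y A) := by
    intro A
    induction A using Finset.induction_on with
    | empty => rw [mix_empty]
    | insert _ _ hp ih =>
        rename_i p A
        rw [mix_insert, extSS_upd]
        have hs := slope_nonneg circ gL hmono (hm1 A) (hm2 A) p
        have hle : mix circ x y A p ≤ y p := hmle A p
        nlinarith [hs, hle, ih]
  have := main Finset.univ
  rwa [mix_univ] at this

lemma extSS_zero (circ : G) (gi : Fin (Fintype.card G) → Finset G → ℝ)
    (lam : Fin (Fintype.card G) → ℝ)
    (hgiempty : ∀ i, gi i ∅ = 0)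
    (hdummy : ∀ i (A : Finset G), gi i (insert circ A) = gi i A)
    (gL : (Fin (Fintype.card G) → G) → ℝ)
    (hgL : ∀ S, gL S = ∑ i : Fin (Fintype.card G),
      lam i * gi i ((Finset.univ.filter fun j => j ≤ i).image S)) :
    extSS circ gL 0 = 0 := by
  have hpos : ∀ i s, posProb circ (0 : EuclideanSpace ℝ (SSIndex circ)) i s
      = if s = circ then 1 else 0 := by
    intro i s
    unfold posProb
    split
    · simp_all
    · simp_all
  unfold extSS
  rw [Finset.sum_eq_single (fun _ => circ)]
  · have himg : ∀ k : Fin (Fintype.card G),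
        (Finset.univ.filter fun j => j ≤ k).image (fun _ => circ) = {circ} := by
      intro k
      apply Finset.image_const
      exact ⟨k, by simp⟩
    rw [hgL]
    have hz : ∀ k : Fin (Fintype.card G),
        lam k * gi k ((Finset.univ.filter fun j => j ≤ k).image (fun _ => circ)) = 0 := by
      intro k
      rw [himg k]
      have h1 : ({circ} : Finset G) = insert circ ∅ := rfl
      rw [h1, hdummy, hgiempty]
      ring
    rw [Finset.sum_congr rfl (fun k _ => hz k)]
    simp
  · intro S _ hS
    have hex : ∃ i, S i ≠ circ := by
      by_contra h
      push_neg at h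
      exact hS (funext h)
    obtain ⟨i, hi⟩ := hex
    rw [Finset.prod_eq_zero (Finset.mem_univ i)]
    · ring
    · rw [hpos, if_neg hi]
  · intro h
    exact absurd (Finset.mem_univ _) h

/-- linear functional: derivative of `posProb` -/
def Lc (circ : G) (i : Fin (Fintype.card G)) (s : G) :
    EuclideanSpace ℝ (SSIndex circ) →L[ℝ] ℝ :=
  if h : s = circ then
    - ∑ s' : {s : G // s ≠ circ}, EuclideanSpace.proj (𝕜 := ℝ) ((i, s') : SSIndex circ)
  else EuclideanSpace.proj (𝕜 := ℝ) ((i, ⟨s, h⟩) : SSIndex circ)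

lemma hasFDerivAt_posProb (circ : G) (i : Fin (Fintype.card G)) (s : G)
    (x : EuclideanSpace ℝ (SSIndex circ)) :
    HasFDerivAt (fun y => posProb circ y i s) (Lc circ i s) x := by
  unfold posProb Lc
  by_cases h : s = circ
  · rw [dif_pos h]
    simp only [dif_pos h]
    have hfun : (fun y : EuclideanSpace ℝ (SSIndex circ) =>
        ∑ s' : {s : G // s ≠ circ}, y (i, s'))
        = ⇑(∑ s' : {s : G // s ≠ circ}, EuclideanSpace.proj (𝕜 := ℝ) ((i, s') : SSIndex circ)) := by
      funext y
      simp [ContinuousLinearMap.sum_apply]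
    have hder : HasFDerivAt (fun y : EuclideanSpace ℝ (SSIndex circ) =>
        ∑ s' : {s : G // s ≠ circ}, y (i, s'))
        (∑ s' : {s : G // s ≠ circ}, EuclideanSpace.proj (𝕜 := ℝ) ((i, s') : SSIndex circ)) x := by
      rw [hfun]
      exact (∑ s' : {s : G // s ≠ circ},
        EuclideanSpace.proj (𝕜 := ℝ) ((i, s') : SSIndex circ)).hasFDerivAt
    exact hder.const_sub (1:ℝ)
  · rw [dif_neg h]
    simp only [dif_neg h]
    exact (EuclideanSpace.proj (𝕜 := ℝ) ((i, ⟨s, h⟩) : SSIndex circ)).hasFDerivAt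

lemma Lc_single (circ : G) (i : Fin (Fintype.card G)) (s : G) (p : SSIndex circ) :
    Lc circ i s (EuclideanSpace.single p 1) = dc circ i s p := by
  unfold Lc dc
  by_cases h : s = circ
  · rw [dif_pos h]
    have hval : ∀ s' : {s : G // s ≠ circ},
        EuclideanSpace.proj (𝕜 := ℝ) ((i, s') : SSIndex circ) (EuclideanSpace.single p 1)
          = if i = p.1 ∧ s' = p.2 then (1:ℝ) else 0 := by
      intro s'
      rw [PiLp.proj_apply, EuclideanSpace.single_apply]
      simp [Prod.ext_iff]
    simp only [ContinuousLinearMap.neg_apply, ContinuousLinearMap.sum_apply]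
    rw [Finset.sum_congr rfl (fun s' _ => hval s')]
    by_cases hi : i = p.1
    · simp only [hi, true_and]
      rw [Finset.sum_ite_eq' Finset.univ p.2 (fun _ => (1:ℝ))]
      have hcp : ¬ circ = (p.2 : G) := Ne.symm p.2.2
      simp [h, hcp]
    · simp [hi]
  · rw [dif_neg h, PiLp.proj_apply, EuclideanSpace.single_apply]
    have hsc : (s = circ) = False := by simp [h]
    simp only [Prod.ext_iff, Subtype.ext_iff, hsc, if_false, sub_zero]
    by_cases hi : i = p.1 <;> by_cases h2 : s = (p.2 : G) <;> simp [hi, h2]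

/-- first partial derivative of extSS -/
def g1 (circ : G) (gL : (Fin (Fintype.card G) → G) → ℝ) (p : SSIndex circ)
    (y : EuclideanSpace ℝ (SSIndex circ)) : ℝ :=
  ∑ S : Fin (Fintype.card G) → G, gL S * ∑ i : Fin (Fintype.card G),
    (∏ j ∈ Finset.univ.erase i, posProb circ y j (S j)) * dc circ i (S i) p

lemma hasFDerivAt_extSS (circ : G) (gL : (Fin (Fintype.card G) → G) → ℝ)
    (x : EuclideanSpace ℝ (SSIndex circ)) :
    HasFDerivAt (extSS circ gL)
      (∑ S : Fin (Fintype.card G) → G, gL S • ∑ i : Fin (Fintype.card G),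
        (∏ j ∈ Finset.univ.erase i, posProb circ x j (S j)) • Lc circ i (S i)) x := by
  have : HasFDerivAt (fun y => ∑ S : Fin (Fintype.card G) → G,
      (∏ i : Fin (Fintype.card G), posProb circ y i (S i)) * gL S)
      (∑ S : Fin (Fintype.card G) → G, gL S • ∑ i : Fin (Fintype.card G),
        (∏ j ∈ Finset.univ.erase i, posProb circ x j (S j)) • Lc circ i (S i)) x := by
    apply HasFDerivAt.fun_sum
    intro S _
    exact (HasFDerivAt.finset_prod
      (fun i _ => hasFDerivAt_posProb circ i (S i) x)).mul_const (gL S)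
  exact this

lemma fderiv_extSS_single (circ : G) (gL : (Fin (Fintype.card G) → G) → ℝ)
    (y : EuclideanSpace ℝ (SSIndex circ)) (p : SSIndex circ) :
    fderiv ℝ (extSS circ gL) y (EuclideanSpace.single p 1) = g1 circ gL p y := by
  rw [(hasFDerivAt_extSS circ gL y).fderiv]
  unfold g1
  rw [ContinuousLinearMap.sum_apply]
  apply Finset.sum_congr rfl
  intro S _
  rw [ContinuousLinearMap.smul_apply, ContinuousLinearMap.sum_apply, smul_eq_mul]
  congr 1
  apply Finset.sum_congr rfl
  intro i _
  rw [ContinuousLinearMap.smul_apply, smul_eq_mul, Lc_single]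

lemma hasFDerivAt_g1 (circ : G) (gL : (Fin (Fintype.card G) → G) → ℝ) (p : SSIndex circ)
    (x : EuclideanSpace ℝ (SSIndex circ)) :
    HasFDerivAt (g1 circ gL p)
      (∑ S : Fin (Fintype.card G) → G, gL S • ∑ i : Fin (Fintype.card G),
        dc circ i (S i) p • ∑ i' ∈ Finset.univ.erase i,
          (∏ j ∈ (Finset.univ.erase i).erase i', posProb circ x j (S j)) • Lc circ i' (S i')) x := by
  unfold g1
  apply HasFDerivAt.fun_sum
  intro S _
  apply HasFDerivAt.const_mul
  have : ∀ i : Fin (Fintype.card G),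
      HasFDerivAt (fun y => (∏ j ∈ Finset.univ.erase i, posProb circ y j (S j)) * dc circ i (S i) p)
        (dc circ i (S i) p • ∑ i' ∈ Finset.univ.erase i,
          (∏ j ∈ (Finset.univ.erase i).erase i', posProb circ x j (S j)) • Lc circ i' (S i')) x := by
    intro i
    exact (HasFDerivAt.finset_prod
      (fun i' _ => hasFDerivAt_posProb circ i' (S i') x)).mul_const (dc circ i (S i) p)
  exact HasFDerivAt.fun_sum (fun i _ => this i)

lemma fderiv_g1_single (circ : G) (gL : (Fin (Fintype.card G) → G) → ℝ) (p q : SSIndex circ)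
    (x : EuclideanSpace ℝ (SSIndex circ)) :
    fderiv ℝ (g1 circ gL p) x (EuclideanSpace.single q 1)
      = ∑ S : Fin (Fintype.card G) → G, gL S * ∑ i : Fin (Fintype.card G),
          dc circ i (S i) p * ∑ i' ∈ Finset.univ.erase i,
            (∏ j ∈ (Finset.univ.erase i).erase i', posProb circ x j (S j))
              * dc circ i' (S i') q := by
  rw [(hasFDerivAt_g1 circ gL p x).fderiv]
  rw [ContinuousLinearMap.sum_apply]
  apply Finset.sum_congr rfl
  intro S _
  rw [ContinuousLinearMap.smul_apply, ContinuousLinearMap.sum_apply, smul_eq_mul]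
  congr 1
  apply Finset.sum_congr rfl
  intro i _
  rw [ContinuousLinearMap.smul_apply, ContinuousLinearMap.sum_apply, smul_eq_mul]
  congr 1
  apply Finset.sum_congr rfl
  intro i' _
  rw [ContinuousLinearMap.smul_apply, smul_eq_mul, Lc_single]

lemma second_deriv_nonpos (circ : G) (gL : (Fin (Fintype.card G) → G) → ℝ)
    (hsub : ∀ (S : Fin (Fintype.card G) → G) (i₀ i₁ : Fin (Fintype.card G)), i₀ ≠ i₁ →
      ∀ (s₀ s₁ : G), s₀ ≠ circ → s₁ ≠ circ →
      gL (Function.update (Function.update S i₀ s₀) i₁ s₁)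
        - gL (Function.update (Function.update S i₀ s₀) i₁ circ)
        - gL (Function.update (Function.update S i₀ circ) i₁ s₁)
        + gL (Function.update (Function.update S i₀ circ) i₁ circ) ≤ 0)
    {x : EuclideanSpace ℝ (SSIndex circ)}
    (h1 : ∀ p, 0 ≤ x p)
    (h2 : ∀ i : Fin (Fintype.card G), ∑ s' : {s : G // s ≠ circ}, x (i, s') ≤ 1)
    (p q : SSIndex circ) :
    ∑ S : Fin (Fintype.card G) → G, gL S * ∑ i : Fin (Fintype.card G),
        dc circ i (S i) p * ∑ i' ∈ Finset.univ.erase i,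
          (∏ j ∈ (Finset.univ.erase i).erase i', posProb circ x j (S j))
            * dc circ i' (S i') q ≤ 0 := by
  -- collapse the sum over i to i = p.1
  have hstep1 : ∀ S : Fin (Fintype.card G) → G,
      (∑ i : Fin (Fintype.card G), dc circ i (S i) p * ∑ i' ∈ Finset.univ.erase i,
          (∏ j ∈ (Finset.univ.erase i).erase i', posProb circ x j (S j))
            * dc circ i' (S i') q)
      = dc circ p.1 (S p.1) p * ∑ i' ∈ Finset.univ.erase p.1,
          (∏ j ∈ (Finset.univ.erase p.1).erase i', posProb circ x j (S j))
            * dc circ i' (S i') q := by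
    intro S
    apply Finset.sum_eq_single
    · intro i _ hi
      rw [dc_ne circ hi]
      ring
    · intro h
      exact absurd (Finset.mem_univ _) h
  simp only [hstep1]
  by_cases hpq : q.1 = p.1
  · have hz : ∀ S : Fin (Fintype.card G) → G,
        (∑ i' ∈ Finset.univ.erase p.1,
          (∏ j ∈ (Finset.univ.erase p.1).erase i', posProb circ x j (S j))
            * dc circ i' (S i') q) = 0 := by
      intro S
      apply Finset.sum_eq_zero
      intro i' hi'
      rw [dc_ne circ (hpq ▸ (Finset.mem_erase.mp hi').1)]
      ring
    simp only [hz]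
    simp
  · have hq1 : q.1 ∈ Finset.univ.erase p.1 := Finset.mem_erase.mpr ⟨hpq, Finset.mem_univ _⟩
    have hstep2 : ∀ S : Fin (Fintype.card G) → G,
        (∑ i' ∈ Finset.univ.erase p.1,
          (∏ j ∈ (Finset.univ.erase p.1).erase i', posProb circ x j (S j))
            * dc circ i' (S i') q)
        = (∏ j ∈ (Finset.univ.erase p.1).erase q.1, posProb circ x j (S j))
            * dc circ q.1 (S q.1) q := by
      intro S
      apply Finset.sum_eq_single_of_mem q.1 hq1
      intro i' _ hi'
      rw [dc_ne circ hi']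
      ring
    simp only [hstep2]
    -- now reindex twice
    have hcard : (0:ℝ) < (Fintype.card G : ℝ) := by
      have : Nonempty G := ⟨circ⟩
      exact_mod_cast Fintype.card_pos
    refine nonpos_of_mul_nonpos_right ?_ hcard
    refine nonpos_of_mul_nonpos_right ?_ hcard
    rw [← sum_update q.1 (fun S => gL S * (dc circ p.1 (S p.1) p *
      ((∏ j ∈ (Finset.univ.erase p.1).erase q.1, posProb circ x j (S j))
        * dc circ q.1 (S q.1) q)))]
    rw [← sum_update p.1 (fun S => ∑ b : G, gL (Function.update S q.1 b)
      * (dc circ p.1 ((Function.update S q.1 b) p.1) p *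
        ((∏ j ∈ (Finset.univ.erase p.1).erase q.1,
            posProb circ x j ((Function.update S q.1 b) j))
          * dc circ q.1 ((Function.update S q.1 b) q.1) q)))]
    apply Finset.sum_nonpos
    intro S _
    have hp1q1 : p.1 ≠ q.1 := fun h => hpq h.symm
    set W : ℝ := ∏ j ∈ (Finset.univ.erase p.1).erase q.1, posProb circ x j (S j) with hW
    have hWnn : 0 ≤ W :=
      Finset.prod_nonneg (fun j _ => posProb_nonneg circ h1 h2 j (S j))
    have hterm : ∀ a b : G,
        gL (Function.update (Function.update S p.1 a) q.1 b)
          * (dc circ p.1 ((Function.update (Function.update S p.1 a) q.1 b) p.1) p *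
            ((∏ j ∈ (Finset.univ.erase p.1).erase q.1,
                posProb circ x j ((Function.update (Function.update S p.1 a) q.1 b) j))
              * dc circ q.1 ((Function.update (Function.update S p.1 a) q.1 b) q.1) q))
        = dc circ p.1 a p * (dc circ q.1 b q
            * (W * gL (Function.update (Function.update S p.1 a) q.1 b))) := by
      intro a b
      have e1 : (Function.update (Function.update S p.1 a) q.1 b) p.1 = a := by
        rw [Function.update_of_ne hp1q1, Function.update_self]
      have e2 : (Function.update (Function.update S p.1 a) q.1 b) q.1 = b :=
        Function.update_self _ _ _
      have e3 : ∏ j ∈ (Finset.univ.erase p.1).erase q.1,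
          posProb circ x j ((Function.update (Function.update S p.1 a) q.1 b) j) = W := by
        apply Finset.prod_congr rfl
        intro j hj
        have hj1 := Finset.mem_erase.mp hj
        have hj2 := Finset.mem_erase.mp hj1.2
        rw [Function.update_of_ne hj1.1, Function.update_of_ne hj2.1]
      rw [e1, e2, e3]
      ring
    have hinner : ∀ a : G, ∑ b : G, dc circ q.1 b q
          * (W * gL (Function.update (Function.update S p.1 a) q.1 b))
        = W * gL (Function.update (Function.update S p.1 a) q.1 q.2)
          - W * gL (Function.update (Function.update S p.1 a) q.1 circ) :=
      fun a => dcsum circ q _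
    calc ∑ a : G, ∑ b : G, gL (Function.update (Function.update S p.1 a) q.1 b)
          * (dc circ p.1 ((Function.update (Function.update S p.1 a) q.1 b) p.1) p *
            ((∏ j ∈ (Finset.univ.erase p.1).erase q.1,
                posProb circ x j ((Function.update (Function.update S p.1 a) q.1 b) j))
              * dc circ q.1 ((Function.update (Function.update S p.1 a) q.1 b) q.1) q))
        = ∑ a : G, dc circ p.1 a p * (∑ b : G, dc circ q.1 b q
            * (W * gL (Function.update (Function.update S p.1 a) q.1 b))) := by
          apply Finset.sum_congr rfl
          intro a _
          rw [Finset.mul_sum]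
          exact Finset.sum_congr rfl (fun b _ => hterm a b)
      _ = ∑ a : G, dc circ p.1 a p
            * (W * gL (Function.update (Function.update S p.1 a) q.1 q.2)
              - W * gL (Function.update (Function.update S p.1 a) q.1 circ)) := by
          exact Finset.sum_congr rfl (fun a _ => by rw [hinner a])
      _ = (W * gL (Function.update (Function.update S p.1 p.2) q.1 q.2)
              - W * gL (Function.update (Function.update S p.1 p.2) q.1 circ))
          - (W * gL (Function.update (Function.update S p.1 circ) q.1 q.2)
              - W * gL (Function.update (Function.update S p.1 circ) q.1 circ)) :=
          dcsum circ p _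
      _ ≤ 0 := by
          have := hsub S p.1 q.1 hp1q1 p.2 q.2 p.2.2 q.2.2
          nlinarith [this, hWnn]

lemma prod_sub_prod {ι : Type*} [LinearOrder ι] [DecidableEq ι] (u : Finset ι) (a b : ι → ℝ) :
    (∏ i ∈ u, a i) - ∏ i ∈ u, b i =
      ∑ i ∈ u, (∏ j ∈ u.filter (· < i), a j) * (a i - b i) * ∏ j ∈ u.filter (i < ·), b j := by
  induction u using Finset.induction_on_max with
  | empty => simp
  | insert m u hm ih =>
      have hmem : m ∉ u := fun h => lt_irrefl m (hm m h)
      rw [Finset.prod_insert hmem, Finset.prod_insert hmem, Finset.sum_insert hmem]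
      have hf1 : (insert m u).filter (· < m) = u := by
        rw [Finset.filter_insert, if_neg (lt_irrefl m)]
        exact Finset.filter_true_of_mem hm
      have hf2 : (insert m u).filter (m < ·) = ∅ := by
        rw [Finset.filter_insert, if_neg (lt_irrefl m)]
        exact Finset.filter_false_of_mem (fun x hx => not_lt_of_gt (hm x hx))
      have hterm : ∀ i ∈ u,
          (∏ j ∈ (insert m u).filter (· < i), a j) * (a i - b i)
              * ∏ j ∈ (insert m u).filter (i < ·), b j
          = b m * ((∏ j ∈ u.filter (· < i), a j) * (a i - b i) * ∏ j ∈ u.filter (i < ·), b j) := by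
        intro i hi
        have h3 : (insert m u).filter (· < i) = u.filter (· < i) := by
          rw [Finset.filter_insert, if_neg (not_lt_of_gt (hm i hi))]
        have h4 : (insert m u).filter (i < ·) = insert m (u.filter (i < ·)) := by
          rw [Finset.filter_insert, if_pos (hm i hi)]
        have h5 : m ∉ u.filter (i < ·) := fun h => hmem (Finset.mem_of_mem_filter m h)
        rw [h3, h4, Finset.prod_insert h5]
        ring
      rw [hf1, hf2, Finset.sum_congr rfl hterm, ← Finset.mul_sum, ← ih]
      simp
      ring

lemma extSS_lip (circ : G) (gL : (Fin (Fintype.card G) → G) → ℝ) (M : ℝ)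
    (hrange : ∀ S, gL S ∈ Set.Icc (0 : ℝ) M)
    {x y : EuclideanSpace ℝ (SSIndex circ)}
    (hx1 : ∀ p, 0 ≤ x p)
    (hx2 : ∀ i : Fin (Fintype.card G), ∑ s' : {s : G // s ≠ circ}, x (i, s') ≤ 1)
    (hy1 : ∀ p, 0 ≤ y p)
    (hy2 : ∀ i : Fin (Fintype.card G), ∑ s' : {s : G // s ≠ circ}, y (i, s') ≤ 1) :
    |extSS circ gL x - extSS circ gL y|
      ≤ M * ∑ pq : SSIndex circ, |x pq - y pq| := by
  classical
  have hcard : (0:ℝ) < (Fintype.card G : ℝ) := by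
    have : Nonempty G := ⟨circ⟩
    exact_mod_cast Fintype.card_pos
  set WX : Fin (Fintype.card G) → (Fin (Fintype.card G) → G) → ℝ :=
    fun i S => ∏ j ∈ Finset.univ.filter (· < i), posProb circ x j (S j) with hWX
  set WY : Fin (Fintype.card G) → (Fin (Fintype.card G) → G) → ℝ :=
    fun i S => ∏ j ∈ Finset.univ.filter (i < ·), posProb circ y j (S j) with hWY
  set T : Fin (Fintype.card G) → ℝ := fun i => ∑ S : Fin (Fintype.card G) → G,
    (WX i S * (posProb circ x i (S i) - posProb circ y i (S i)) * WY i S) * gL S with hT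
  have hdiff : extSS circ gL x - extSS circ gL y = ∑ i : Fin (Fintype.card G), T i := by
    unfold extSS
    rw [← Finset.sum_sub_distrib]
    have hS : ∀ S : Fin (Fintype.card G) → G,
        (∏ i : Fin (Fintype.card G), posProb circ x i (S i)) * gL S
          - (∏ i : Fin (Fintype.card G), posProb circ y i (S i)) * gL S
        = ∑ i : Fin (Fintype.card G),
            (WX i S * (posProb circ x i (S i) - posProb circ y i (S i)) * WY i S) * gL S := by
      intro S
      rw [← sub_mul, prod_sub_prod Finset.univ (fun i => posProb circ x i (S i))
        (fun i => posProb circ y i (S i)), Finset.sum_mul]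
    rw [Finset.sum_congr rfl (fun S _ => hS S)]
    exact Finset.sum_comm
  set D : Fin (Fintype.card G) → ℝ := fun i => ∑ s' : {s : G // s ≠ circ}, |x (i, s') - y (i, s')| with hD
  have hM : 0 ≤ M := le_trans (hrange (fun _ => circ)).1 (hrange (fun _ => circ)).2
  have hTbound : ∀ i : Fin (Fintype.card G), |T i| ≤ M * D i := by
    intro i
    have hnotlt : ¬ i < i := lt_irrefl i
    -- the weights do not involve position i
    have hWXup : ∀ (S : Fin (Fintype.card G) → G) (a : G), WX i (Function.update S i a) = WX i S := by
      intro S a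
      apply Finset.prod_congr rfl
      intro j hj
      rw [Function.update_of_ne (ne_of_lt (Finset.mem_filter.mp hj).2)]
    have hWYup : ∀ (S : Fin (Fintype.card G) → G) (a : G), WY i (Function.update S i a) = WY i S := by
      intro S a
      apply Finset.prod_congr rfl
      intro j hj
      rw [Function.update_of_ne (ne_of_gt (Finset.mem_filter.mp hj).2)]
    set d : G → ℝ := fun a => posProb circ x i a - posProb circ y i a with hd
    have hd0 : ∑ a : G, d a = 0 := by
      simp only [hd, Finset.sum_sub_distrib, sum_posProb]
      ring
    -- inner bound
    have hinner : ∀ S : Fin (Fintype.card G) → G,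
        |∑ a : G, d a * gL (Function.update S i a)| ≤ M * D i := by
      intro S
      have hrw : ∑ a : G, d a * gL (Function.update S i a)
          = ∑ a : G, d a * (gL (Function.update S i a) - gL (Function.update S i circ)) := by
        rw [Finset.sum_congr rfl (fun a _ => by ring : ∀ a ∈ Finset.univ,
          d a * (gL (Function.update S i a) - gL (Function.update S i circ))
            = d a * gL (Function.update S i a) - d a * gL (Function.update S i circ))]
        rw [Finset.sum_sub_distrib, ← Finset.sum_mul, hd0]
        ring
      rw [hrw, ← Finset.add_sum_erase _ _ (Finset.mem_univ circ), sub_self, mul_zero, zero_add]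
      calc |∑ a ∈ Finset.univ.erase circ,
              d a * (gL (Function.update S i a) - gL (Function.update S i circ))|
          ≤ ∑ a ∈ Finset.univ.erase circ,
              |d a * (gL (Function.update S i a) - gL (Function.update S i circ))| :=
            Finset.abs_sum_le_sum_abs _ _
        _ ≤ ∑ a ∈ Finset.univ.erase circ, |d a| * M := by
            apply Finset.sum_le_sum
            intro a _
            rw [abs_mul]
            apply mul_le_mul_of_nonneg_left _ (abs_nonneg _)
            have h1 := hrange (Function.update S i a)
            have h2 := hrange (Function.update S i circ)
            rw [abs_le]
            constructor <;> [linarith [h1.1, h2.2]; linarith [h1.2, h2.1]]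
        _ = M * D i := by
            rw [hD]
            rw [Finset.sum_subtype (Finset.univ.erase circ) (p := fun s => s ≠ circ) (by simp)
              (fun a => |d a| * M)]
            rw [Finset.mul_sum]
            apply Finset.sum_congr rfl
            intro s' _
            have : d s' = x (i, s') - y (i, s') := by
              simp only [hd, posProb, dif_neg s'.2]
            rw [this, mul_comm]
        
    -- sum of weights
    have hsumW : ∑ S : Fin (Fintype.card G) → G, WX i S * WY i S = (Fintype.card G : ℝ) := by
      set F : Fin (Fintype.card G) → G → ℝ := fun j s =>
        if j < i then posProb circ x j s else if i < j then posProb circ y j s else 1 with hF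
      have hfact : ∀ S : Fin (Fintype.card G) → G, WX i S * WY i S = ∏ j : Fin (Fintype.card G), F j (S j) := by
        intro S
        rw [← Finset.prod_filter_mul_prod_filter_not Finset.univ (· < i)
          (fun j => F j (S j))]
        have e1 : ∏ j ∈ Finset.univ.filter (· < i), F j (S j) = WX i S := by
          apply Finset.prod_congr rfl
          intro j hj
          rw [hF]
          simp only [(Finset.mem_filter.mp hj).2, if_true]
        have e2 : ∏ j ∈ Finset.univ.filter (fun j => ¬ j < i), F j (S j) = WY i S := by
          rw [← Finset.prod_filter_mul_prod_filter_not (Finset.univ.filter (fun j => ¬ j < i))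
            (i < ·) (fun j => F j (S j))]
          have e3 : (Finset.univ.filter (fun j => ¬ j < i)).filter (i < ·)
              = Finset.univ.filter (i < ·) := by
            rw [Finset.filter_filter]
            apply Finset.filter_congr
            intro j _
            constructor
            · exact fun h => h.2
            · exact fun h => ⟨asymm h, h⟩
          have e4 : (Finset.univ.filter (fun j => ¬ j < i)).filter (fun j => ¬ i < j)
              = {i} := by
            rw [Finset.filter_filter]
            ext j
            simp only [Finset.mem_filter, Finset.mem_univ, true_and, Finset.mem_singleton]
            constructor
            · exact fun h => le_antisymm (not_lt.mp h.2) (not_lt.mp h.1)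
            · intro h; subst h; exact ⟨lt_irrefl j, lt_irrefl j⟩
          have e5 : ∏ j ∈ Finset.univ.filter (i < ·), F j (S j) = WY i S := by
            apply Finset.prod_congr rfl
            intro j hj
            have hij := (Finset.mem_filter.mp hj).2
            rw [hF]
            simp only [asymm hij, if_false, hij, if_true]
          rw [e3, e4, e5, Finset.prod_singleton, hF]
          simp [hnotlt]
        rw [e1, e2]
      rw [Finset.sum_congr rfl (fun S _ => hfact S)]
      rw [← Fintype.prod_sum (fun j s => F j s)]
      rw [Finset.prod_eq_single i]
      · rw [hF]
        simp [hnotlt]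
      · intro j _ hj
        rw [hF]
        rcases lt_or_gt_of_ne hj with h | h
        · simp only [h, if_true]
          exact sum_posProb circ x j
        · simp only [asymm h, if_false, h, if_true]
          exact sum_posProb circ y j
      · intro h
        exact absurd (Finset.mem_univ _) h
    -- put together
    refine le_of_mul_le_mul_left ?_ hcard
    calc (Fintype.card G : ℝ) * |T i| = |(Fintype.card G : ℝ) * T i| := by
          rw [abs_mul, abs_of_pos hcard]
      _ = |∑ S : Fin (Fintype.card G) → G, ∑ a : G,
            (WX i (Function.update S i a) * (posProb circ x i ((Function.update S i a) i)
                - posProb circ y i ((Function.update S i a) i)) * WY i (Function.update S i a))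
              * gL (Function.update S i a)| := by
          rw [sum_update i (fun S => (WX i S * (posProb circ x i (S i)
            - posProb circ y i (S i)) * WY i S) * gL S)]
      _ = |∑ S : Fin (Fintype.card G) → G, (WX i S * WY i S)
            * ∑ a : G, d a * gL (Function.update S i a)| := by
          congr 1
          apply Finset.sum_congr rfl
          intro S _
          rw [Finset.mul_sum]
          apply Finset.sum_congr rfl
          intro a _
          rw [hWXup, hWYup, Function.update_self]
          simp only [hd]
          ring
      _ ≤ ∑ S : Fin (Fintype.card G) → G, |(WX i S * WY i S)
            * ∑ a : G, d a * gL (Function.update S i a)| := Finset.abs_sum_le_sum_abs _ _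
      _ ≤ ∑ S : Fin (Fintype.card G) → G, (WX i S * WY i S) * (M * D i) := by
          apply Finset.sum_le_sum
          intro S _
          rw [abs_mul]
          have hWnn : 0 ≤ WX i S * WY i S :=
            mul_nonneg (Finset.prod_nonneg (fun j _ => posProb_nonneg circ hx1 hx2 j (S j)))
              (Finset.prod_nonneg (fun j _ => posProb_nonneg circ hy1 hy2 j (S j)))
          rw [abs_of_nonneg hWnn]
          exact mul_le_mul_of_nonneg_left (hinner S) hWnn
      _ = (Fintype.card G : ℝ) * (M * D i) := by
          rw [← Finset.sum_mul, hsumW]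
  calc |extSS circ gL x - extSS circ gL y| = |∑ i : Fin (Fintype.card G), T i| := by rw [hdiff]
    _ ≤ ∑ i : Fin (Fintype.card G), |T i| := Finset.abs_sum_le_sum_abs _ _
    _ ≤ ∑ i : Fin (Fintype.card G), M * D i := Finset.sum_le_sum (fun i _ => hTbound i)
    _ = M * ∑ pq : SSIndex circ, |x pq - y pq| := by
        rw [← Finset.mul_sum]
        congr 1
        rw [Fintype.sum_prod_type (fun pq : SSIndex circ => |x pq - y pq|)]

open MvPolynomial in
def mlQ (circ : G) (i : Fin (Fintype.card G)) (s : G) : MvPolynomial (SSIndex circ) ℝ :=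
  if h : s = circ then 1 - ∑ s' : {s : G // s ≠ circ}, X ((i, s') : SSIndex circ)
  else X ((i, ⟨s, h⟩) : SSIndex circ)

open MvPolynomial in
lemma eval_mlQ (circ : G) (i : Fin (Fintype.card G)) (s : G)
    (x : EuclideanSpace ℝ (SSIndex circ)) :
    eval (fun q : SSIndex circ => x q) (mlQ circ i s) = posProb circ x i s := by
  unfold mlQ posProb
  by_cases h : s = circ
  · rw [dif_pos h, dif_pos h]
    rw [map_sub, map_sum, map_one]
    simp [eval_X]
  · rw [dif_neg h, dif_neg h, eval_X]

open MvPolynomial in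
lemma degreeOf_mlQ (circ : G) (i : Fin (Fintype.card G)) (s : G) (v : SSIndex circ) :
    degreeOf v (mlQ circ i s) ≤ if i = v.1 then 1 else 0 := by
  unfold mlQ
  by_cases h : s = circ
  · rw [dif_pos h]
    rw [sub_eq_add_neg]
    refine le_trans (degreeOf_add_le _ _ _) ?_
    apply max_le
    · rw [← C_1, degreeOf_C]
      simp
    · have hneg : degreeOf v (-∑ s' : {s : G // s ≠ circ}, X ((i, s') : SSIndex circ)
          : MvPolynomial (SSIndex circ) ℝ)
          = degreeOf v (∑ s' : {s : G // s ≠ circ}, X ((i, s') : SSIndex circ)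
          : MvPolynomial (SSIndex circ) ℝ) := by
        rw [degreeOf_eq_sup, degreeOf_eq_sup, support_neg]
      rw [hneg]
      refine le_trans (degreeOf_sum_le _ _ _) ?_
      apply Finset.sup_le
      intro s' _
      rw [degreeOf_X]
      by_cases hv : v = ((i, s') : SSIndex circ)
      · subst hv
        simp
      · rw [if_neg hv]
        exact Nat.zero_le _
  · rw [dif_neg h, degreeOf_X]
    by_cases hv : v = ((i, ⟨s, h⟩) : SSIndex circ)
    · subst hv
      simp
    · rw [if_neg hv]
      exact Nat.zero_le _

open MvPolynomial in
lemma extSS_is_poly (circ : G) (gL : (Fin (Fintype.card G) → G) → ℝ) :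
    ∃ p : MvPolynomial (SSIndex circ) ℝ,
      (∀ m ∈ p.support, ∀ v, m v ≤ 1) ∧
      ∀ x : EuclideanSpace ℝ (SSIndex circ),
        extSS circ gL x = MvPolynomial.eval (fun q => x q) p := by
  refine ⟨∑ S : Fin (Fintype.card G) → G,
    C (gL S) * ∏ i : Fin (Fintype.card G), mlQ circ i (S i), ?_, ?_⟩
  · intro m hm v
    refine le_trans (monomial_le_degreeOf v hm) ?_
    refine le_trans (degreeOf_sum_le _ _ _) ?_
    apply Finset.sup_le
    intro S _
    refine le_trans (degreeOf_mul_le _ _ _) ?_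
    rw [degreeOf_C, zero_add]
    refine le_trans (degreeOf_prod_le _ _ _) ?_
    refine le_trans (Finset.sum_le_sum
      (fun i _ => degreeOf_mlQ circ i (S i) v)) ?_
    rw [Finset.sum_ite_eq' Finset.univ v.1 (fun _ => 1)]
    simp
  · intro x
    rw [map_sum]
    unfold extSS
    apply Finset.sum_congr rfl
    intro S _
    rw [map_mul, eval_C, map_prod]
    rw [Finset.prod_congr rfl (fun i _ => eval_mlQ circ i (S i) x)]
    ring

lemma sum_abs_le_norm (circ : G) (v : EuclideanSpace ℝ (SSIndex circ)) :
    ∑ pq : SSIndex circ, |v pq| ≤ (Fintype.card G : ℝ) * ‖v‖ := by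
  have hsub : (Fintype.card {s : G // s ≠ circ} : ℝ) ≤ (Fintype.card G : ℝ) := by
    exact_mod_cast Fintype.card_subtype_le _
  have hGnn : (0:ℝ) ≤ (Fintype.card G : ℝ) := Nat.cast_nonneg _
  have hcard : (Fintype.card (SSIndex circ) : ℝ) ≤ (Fintype.card G : ℝ)^2 := by
    rw [Fintype.card_prod, Fintype.card_fin]
    push_cast
    nlinarith [hsub, hGnn]
  have hnorm : Real.sqrt (∑ pq : SSIndex circ, v pq ^ 2) = ‖v‖ := by
    rw [EuclideanSpace.norm_eq]
    congr 1
    exact Finset.sum_congr rfl (fun pq _ => by rw [Real.norm_eq_abs, sq_abs])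
  have hcs := Finset.sum_mul_sq_le_sq_mul_sq Finset.univ
    (fun pq : SSIndex circ => |v pq|) (fun _ => (1:ℝ))
  have h2 : ∑ pq : SSIndex circ, |v pq| * 1 = ∑ pq : SSIndex circ, |v pq| := by simp
  have h3 : ∑ pq : SSIndex circ, |v pq|^2 = ∑ pq : SSIndex circ, v pq ^ 2 :=
    Finset.sum_congr rfl (fun pq _ => sq_abs _)
  have h4 : ∑ _pq : SSIndex circ, (1:ℝ)^2 = (Fintype.card (SSIndex circ) : ℝ) := by
    simp [Finset.sum_const]
  rw [h2, h3, h4] at hcs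
  have hvnn : 0 ≤ ∑ pq : SSIndex circ, v pq ^ 2 :=
    Finset.sum_nonneg (fun pq _ => sq_nonneg _)
  have h5 : ∑ pq : SSIndex circ, |v pq| = Real.sqrt ((∑ pq : SSIndex circ, |v pq|)^2) :=
    (Real.sqrt_sq (Finset.sum_nonneg (fun pq _ => abs_nonneg _))).symm
  rw [h5]
  calc Real.sqrt ((∑ pq : SSIndex circ, |v pq|)^2)
      ≤ Real.sqrt ((∑ pq : SSIndex circ, v pq ^ 2) * (Fintype.card G : ℝ)^2) := by
        apply Real.sqrt_le_sqrt
        calc (∑ pq : SSIndex circ, |v pq|)^2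
            ≤ (∑ pq : SSIndex circ, v pq ^ 2) * (Fintype.card (SSIndex circ) : ℝ) := hcs
          _ ≤ (∑ pq : SSIndex circ, v pq ^ 2) * (Fintype.card G : ℝ)^2 :=
              mul_le_mul_of_nonneg_left hcard hvnn
    _ = (Fintype.card G : ℝ) * ‖v‖ := by
        rw [Real.sqrt_mul hvnn, hnorm, Real.sqrt_sq hGnn]
        ring

end ExtAux

/-- The continuous extension of the sequential submodular objective
`g(S) = ∑_i λ_i g_i({S_j : j ≤ i})` (with a dummy element `∘` of zero marginal
gain) is multi-linear, monotone, DR-submodular, vanishes at `0`, and is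
`M·|G|`-Lipschitz on the product of simplexes, when `g` takes values in `[0,M]`. -/
theorem extSS_properties
    (circ : G)
    (gi : Fin (Fintype.card G) → Finset G → ℝ)
    (lam : Fin (Fintype.card G) → ℝ) (hlam : ∀ i, 0 ≤ lam i)
    (hgimono : ∀ i, ∀ A B : Finset G, A ⊆ B → gi i A ≤ gi i B)
    (hgisub : ∀ i, ∀ (A B : Finset G) (s : G), A ⊆ B → s ∉ B →
      gi i (insert s B) - gi i B ≤ gi i (insert s A) - gi i A)
    (hgiempty : ∀ i, gi i ∅ = 0)
    (hdummy : ∀ i (A : Finset G), gi i (insert circ A) = gi i A)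
    (gL : (Fin (Fintype.card G) → G) → ℝ)
    (hgL : ∀ S, gL S = ∑ i : Fin (Fintype.card G),
      lam i * gi i ((Finset.univ.filter fun j => j ≤ i).image S))
    (M : ℝ) (hrange : ∀ S, gL S ∈ Set.Icc (0 : ℝ) M)
    (Ksimp : Set (EuclideanSpace ℝ (SSIndex circ)))
    (hKsimp : Ksimp = {x | (∀ p, 0 ≤ x p) ∧
      ∀ i : Fin (Fintype.card G), ∑ s' : {s : G // s ≠ circ}, x (i, s') ≤ 1})
    (f : EuclideanSpace ℝ (SSIndex circ) → ℝ)
    (hf : ∀ x, f x = extSS circ gL x) :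
    IsMultilinearPolyI f ∧
    f 0 = 0 ∧
    (∀ x ∈ Ksimp, ∀ y ∈ Ksimp, (∀ p, x p ≤ y p) → f x ≤ f y) ∧
    (∀ x ∈ Ksimp, ∀ p q : SSIndex circ,
      fderiv ℝ (fun y => fderiv ℝ f y (EuclideanSpace.single p 1)) x
        (EuclideanSpace.single q 1) ≤ 0) ∧
    (∀ x ∈ Ksimp, ∀ y ∈ Ksimp,
      |f x - f y| ≤ M * (Fintype.card G : ℝ) * ‖x - y‖) := by
  have hfe : f = extSS circ gL := funext hf
  subst hfe
  subst hKsimp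
  have hmono : ∀ (S : Fin (Fintype.card G) → G) (i₀ : Fin (Fintype.card G)) (a : G),
      gL (Function.update S i₀ circ) ≤ gL (Function.update S i₀ a) :=
    ExtAux.gL_update_mono circ gi lam hlam hgimono hdummy gL hgL
  refine ⟨?_, ?_, ?_, ?_, ?_⟩
  · obtain ⟨p, hp1, hp2⟩ := ExtAux.extSS_is_poly circ gL
    exact ⟨p, hp1, hp2⟩
  · exact ExtAux.extSS_zero circ gi lam hgiempty hdummy gL hgL
  · intro x hx y hy hxy
    exact ExtAux.extSS_mono circ gL hmono hx.1 hy.1 hy.2 hxy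
  · intro x hx p q
    have hfun : (fun y => fderiv ℝ (extSS circ gL) y (EuclideanSpace.single p 1))
        = ExtAux.g1 circ gL p := funext (fun y => ExtAux.fderiv_extSS_single circ gL y p)
    rw [hfun, ExtAux.fderiv_g1_single]
    exact ExtAux.second_deriv_nonpos circ gL
      (ExtAux.gL_submod circ gi lam hlam hgimono hgisub hdummy gL hgL) hx.1 hx.2 p q
  · intro x hx y hy
    have h1 := ExtAux.extSS_lip circ gL M hrange hx.1 hx.2 hy.1 hy.2
    have h2 : ∑ pq : SSIndex circ, |x pq - y pq|
        = ∑ pq : SSIndex circ, |(x - y) pq| := by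
      apply Finset.sum_congr rfl
      intro pq _
      congr 1
    have hM : 0 ≤ M := le_trans (hrange (fun _ => circ)).1 (hrange (fun _ => circ)).2
    calc |extSS circ gL x - extSS circ gL y|
        ≤ M * ∑ pq : SSIndex circ, |x pq - y pq| := h1
      _ = M * ∑ pq : SSIndex circ, |(x - y) pq| := by rw [h2]
      _ ≤ M * ((Fintype.card G : ℝ) * ‖x - y‖) :=
          mul_le_mul_of_nonneg_left (ExtAux.sum_abs_le_norm circ (x - y)) hM
      _ = M * (Fintype.card G : ℝ) * ‖x - y‖ := by ring
end
end

section
/- Let f : X → ℝ≥0 be a twice differentiable monotone DR-submodular function with f(0) = 0, and F(x) = ∫₀¹ (e^{z−1}/z) f(z·x) dz its auxiliary function. Then for any x in X and any maximizer y ∈ X, if ⟨y − x, ∇F(x)⟩ ≤ ε, then f(x) ≥ (1 − 1/e) f(y) − ε; i.e., any approximate stationary point of F with respect to the direction y − x is a (1 − 1/e)-approximate maximizer of f up to additive error ε. -/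
set_option maxHeartbeats 1000000
set_option synthInstance.maxHeartbeats 400000
noncomputable section
open Real Filter Set

variable {d : ℕ}

local notation "E" => EuclideanSpace ℝ (Fin d)

lemma euclid_decomp (v : E) :
    v = ∑ i, v i • EuclideanSpace.single i 1 := by
  have := (EuclideanSpace.basisFun (Fin d) ℝ).sum_repr v
  simpa [EuclideanSpace.basisFun_apply, EuclideanSpace.basisFun_repr] using this.symm

lemma clm_apply_decomp (L : E →L[ℝ] ℝ) (v : E) :
    L v = ∑ i, v i * L (EuclideanSpace.single i 1) := by
  conv_lhs => rw [euclid_decomp v]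
  simp [map_sum]

lemma coord_add_smul (w v : E) (t : ℝ) (j : Fin d) :
    (w + t • v : E) j = w j + t * v j := by simp

lemma second_deriv_nonpos {a : Fin d → ℝ} {f : E → ℝ} (hf : ContDiff ℝ 2 f)
    (hDR : ∀ x ∈ {x : E | ∀ i, x i ∈ Set.Icc (0:ℝ) (a i)}, ∀ i j : Fin d,
      fderiv ℝ (fun y => fderiv ℝ f y (EuclideanSpace.single i 1)) x
        (EuclideanSpace.single j 1) ≤ 0)
    {p v : E} (hp : ∀ i, p i ∈ Set.Icc (0:ℝ) (a i)) (hv : ∀ i, 0 ≤ v i) :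
    fderiv ℝ (fun q => fderiv ℝ f q v) p v ≤ 0 := by
  have hg : ContDiff ℝ 1 (fderiv ℝ f) := hf.fderiv_right (by norm_num)
  have hgj : ∀ j : Fin d, ContDiff ℝ 1 (fun q => fderiv ℝ f q (EuclideanSpace.single j 1)) :=
    fun j => hg.clm_apply contDiff_const
  have hEq : (fun q => fderiv ℝ f q v)
      = fun q => ∑ j, v j * fderiv ℝ f q (EuclideanSpace.single j 1) :=
    funext fun q => clm_apply_decomp _ v
  have hsum : HasFDerivAt (fun q => ∑ j, v j * fderiv ℝ f q (EuclideanSpace.single j 1))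
      (∑ j, v j • fderiv ℝ (fun q => fderiv ℝ f q (EuclideanSpace.single j 1)) p) p :=
    HasFDerivAt.fun_sum fun j _ =>
      (((hgj j).differentiable one_ne_zero p).hasFDerivAt).const_mul (v j)
  have hD : fderiv ℝ (fun q => fderiv ℝ f q v) p
      = ∑ j, v j • fderiv ℝ (fun q => fderiv ℝ f q (EuclideanSpace.single j 1)) p := by
    rw [hEq]; exact hsum.fderiv
  rw [hD]
  rw [ContinuousLinearMap.sum_apply]
  refine Finset.sum_nonpos fun j _ => ?_
  rw [ContinuousLinearMap.smul_apply]
  have : fderiv ℝ (fun q => fderiv ℝ f q (EuclideanSpace.single j 1)) p v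
      = ∑ i, v i * fderiv ℝ (fun q => fderiv ℝ f q (EuclideanSpace.single j 1)) p
          (EuclideanSpace.single i 1) := clm_apply_decomp _ v
  rw [smul_eq_mul, this]
  have hterm : ∑ i, v i * fderiv ℝ (fun q => fderiv ℝ f q (EuclideanSpace.single j 1)) p
      (EuclideanSpace.single i 1) ≤ 0 :=
    Finset.sum_nonpos fun i _ => mul_nonpos_of_nonneg_of_nonpos (hv i) (hDR p hp j i)
  exact mul_nonpos_of_nonneg_of_nonpos (hv j) hterm

lemma grad_dir_ge {a : Fin d → ℝ} {f : E → ℝ} (hf : ContDiff ℝ 2 f)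
    (hDR : ∀ x ∈ {x : E | ∀ i, x i ∈ Set.Icc (0:ℝ) (a i)}, ∀ i j : Fin d,
      fderiv ℝ (fun y => fderiv ℝ f y (EuclideanSpace.single i 1)) x
        (EuclideanSpace.single j 1) ≤ 0)
    {w v : E} (hw : ∀ i, w i ∈ Set.Icc (0:ℝ) (a i)) (hv : ∀ i, 0 ≤ v i)
    (hwv : ∀ i, w i + v i ≤ a i) :
    f (w + v) - f w ≤ fderiv ℝ f w v := by
  have hdiff := hf.differentiable (by norm_num)
  have hg : ContDiff ℝ 1 (fderiv ℝ f) := hf.fderiv_right (by norm_num)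
  set φ : ℝ → ℝ := fun t => f (w + t • v) with hφdef
  set φ' : ℝ → ℝ := fun t => fderiv ℝ f (w + t • v) v with hφ'def
  have hpath : ∀ t : ℝ, HasDerivAt (fun t : ℝ => w + t • v) v t := fun t => by
    simpa using ((hasDerivAt_id t).smul_const v).const_add w
  have hφ : ∀ t : ℝ, HasDerivAt φ (φ' t) t := fun t =>
    (hdiff (w + t • v)).hasFDerivAt.comp_hasDerivAt t (hpath t)
  have hmem : ∀ t ∈ Icc (0:ℝ) 1, ∀ i, (w + t • v : E) i ∈ Set.Icc (0:ℝ) (a i) := by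
    intro t ht i
    rw [coord_add_smul]
    constructor
    · nlinarith [(hw i).1, hv i, ht.1]
    · nlinarith [hv i, ht.1, ht.2, hwv i, (hw i).1]
  have hφ'deriv : ∀ t : ℝ, HasDerivAt φ'
      (fderiv ℝ (fun q => fderiv ℝ f q v) (w + t • v) v) t := by
    intro t
    have hG : ContDiff ℝ 1 (fun q => fderiv ℝ f q v) := hg.clm_apply contDiff_const
    exact ((hG.differentiable one_ne_zero) (w + t • v)).hasFDerivAt.comp_hasDerivAt t (hpath t)
  have hφ'cont : Continuous φ' :=
    (hg.continuous.comp (by continuity)).clm_apply continuous_const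
  have hanti : AntitoneOn φ' (Icc 0 1) := by
    refine antitoneOn_of_deriv_nonpos (convex_Icc 0 1) hφ'cont.continuousOn
      (fun t _ => (hφ'deriv t).differentiableAt.differentiableWithinAt) ?_
    intro t ht
    rw [interior_Icc] at ht
    rw [(hφ'deriv t).deriv]
    exact second_deriv_nonpos hf hDR (hmem t (Ioo_subset_Icc_self ht)) hv
  obtain ⟨c, hc, hceq⟩ := exists_hasDerivAt_eq_slope φ φ' zero_lt_one
    (fun t _ => (hφ t).continuousAt.continuousWithinAt) (fun t _ => hφ t)
  have h1 : φ 1 - φ 0 = φ' c := by rw [hceq]; ring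
  have h2 : φ' c ≤ φ' 0 :=
    hanti (left_mem_Icc.mpr zero_le_one) (Ioo_subset_Icc_self hc) hc.1.le
  have h3 : φ 1 = f (w + v) := by simp [hφdef]
  have h4 : φ 0 = f w := by simp [hφdef]
  have h5 : φ' 0 = fderiv ℝ f w v := by simp [hφ'def]
  linarith
lemma coord_add_smul_single (w : E) (t : ℝ) (i j : Fin d) :
    (w + t • EuclideanSpace.single i 1 : E) j = w j + t * (if j = i then 1 else 0) := by
  simp [EuclideanSpace.single_apply]

lemma partial_nonneg {a : Fin d → ℝ} {f : E → ℝ} (hf : ContDiff ℝ 2 f)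
    (hmono : ∀ x ∈ {x : E | ∀ i, x i ∈ Set.Icc (0:ℝ) (a i)},
      ∀ y ∈ {x : E | ∀ i, x i ∈ Set.Icc (0:ℝ) (a i)}, (∀ i, x i ≤ y i) → f x ≤ f y)
    {w : E} (hw : ∀ i, w i ∈ Set.Icc (0:ℝ) (a i)) (i : Fin d) (hwi : 0 < w i) :
    0 ≤ fderiv ℝ f w (EuclideanSpace.single i 1) := by
  have hdf : HasFDerivAt f (fderiv ℝ f w) (w + (0:ℝ) • EuclideanSpace.single i 1) := by
    simpa using ((hf.differentiable (by norm_num)) w).hasFDerivAt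
  have hpath : HasDerivAt (fun t : ℝ => w + t • EuclideanSpace.single i 1)
      (EuclideanSpace.single i 1) 0 := by
    simpa using ((hasDerivAt_id (0:ℝ)).smul_const (EuclideanSpace.single i 1)).const_add w
  have hψ : HasDerivAt (fun t : ℝ => f (w + t • EuclideanSpace.single i 1))
      (fderiv ℝ f w (EuclideanSpace.single i 1)) 0 := by
    have := hdf.comp_hasDerivAt (x := (0:ℝ)) hpath
    exact this
  rw [hasDerivAt_iff_tendsto_slope] at hψ
  have hψ' : Tendsto (slope (fun t : ℝ => f (w + t • EuclideanSpace.single i 1)) 0)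
      (nhdsWithin 0 (Set.Iio 0)) (nhds (fderiv ℝ f w (EuclideanSpace.single i 1))) :=
    hψ.mono_left (nhdsWithin_mono _ (fun t ht => ne_of_lt ht))
  refine ge_of_tendsto hψ' ?_
  filter_upwards [Ioo_mem_nhdsLT_of_mem (by constructor <;> [linarith; rfl] :
      (0:ℝ) ∈ Set.Ioc (-(w i)) 0)] with t ht
  have hmem : ∀ j, (w + t • EuclideanSpace.single i 1 : E) j ∈ Set.Icc (0:ℝ) (a j) := by
    intro j
    rw [coord_add_smul_single]
    rcases eq_or_ne j i with rfl | hne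
    · rw [if_pos rfl]
      exact ⟨by linarith [ht.1], by nlinarith [ht.2, (hw j).2]⟩
    · rw [if_neg hne]; simpa using hw j
  have hle : f (w + t • EuclideanSpace.single i 1) ≤ f w := by
    refine hmono _ hmem _ hw ?_
    intro j
    rw [coord_add_smul_single]
    rcases eq_or_ne j i with rfl | hne
    · rw [if_pos rfl]; nlinarith [ht.2]
    · rw [if_neg hne]; simp
  rw [slope_def_field]
  simp only [sub_zero]
  exact div_nonneg_of_nonpos (by simpa using sub_nonpos.mpr hle) (le_of_lt ht.2)

lemma grad_ineq {a : Fin d → ℝ} {f : E → ℝ} (hf : ContDiff ℝ 2 f)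
    (hmono : ∀ x ∈ {x : E | ∀ i, x i ∈ Set.Icc (0:ℝ) (a i)},
      ∀ y ∈ {x : E | ∀ i, x i ∈ Set.Icc (0:ℝ) (a i)}, (∀ i, x i ≤ y i) → f x ≤ f y)
    (hDR : ∀ x ∈ {x : E | ∀ i, x i ∈ Set.Icc (0:ℝ) (a i)}, ∀ i j : Fin d,
      fderiv ℝ (fun y => fderiv ℝ f y (EuclideanSpace.single i 1)) x
        (EuclideanSpace.single j 1) ≤ 0)
    {w u : E} (hw : ∀ i, w i ∈ Set.Icc (0:ℝ) (a i))
    (hu : ∀ i, u i ∈ Set.Icc (0:ℝ) (a i)) :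
    f u - f w ≤ fderiv ℝ f w u := by
  set v : E := (WithLp.equiv 2 _).symm (fun i => max (u i - w i) 0) with hvdef
  have hvi : ∀ i, v i = max (u i - w i) 0 := fun i => rfl
  have hv : ∀ i, 0 ≤ v i := fun i => by rw [hvi]; exact le_max_right _ _
  have hwv : ∀ i, w i + v i ≤ a i := by
    intro i
    rw [hvi]
    rcases le_total (u i - w i) 0 with h | h
    · rw [max_eq_right h]; simpa using (hw i).2
    · rw [max_eq_left h]; have := (hu i).2; linarith
  have key1 : f (w + v) - f w ≤ fderiv ℝ f w v := grad_dir_ge hf hDR hw hv hwv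
  have hwvX : ∀ i, (w + v : E) i ∈ Set.Icc (0:ℝ) (a i) := by
    intro i
    have : (w + v : E) i = w i + v i := rfl
    rw [this]
    exact ⟨by linarith [(hw i).1, hv i], hwv i⟩
  have hmono' : f u ≤ f (w + v) := by
    refine hmono _ hu _ hwvX ?_
    intro i
    have : (w + v : E) i = w i + v i := rfl
    rw [this, hvi]
    rcases le_total (u i - w i) 0 with h | h
    · rw [max_eq_right h]; linarith
    · rw [max_eq_left h]; linarith
  have hsplit : fderiv ℝ f w u = fderiv ℝ f w v + fderiv ℝ f w (u - v) := by
    rw [← map_add]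
    congr 1
    abel
  have hrest : 0 ≤ fderiv ℝ f w (u - v) := by
    rw [clm_apply_decomp]
    refine Finset.sum_nonneg fun i _ => ?_
    have hcoord : (u - v : E) i = u i - v i := rfl
    have hnn : (0:ℝ) ≤ (u - v : E) i := by
      rw [hcoord, hvi]
      rcases le_total (u i - w i) 0 with h | h
      · rw [max_eq_right h]; simpa using (hu i).1
      · rw [max_eq_left h]; linarith [(hw i).1]
    rcases eq_or_lt_of_le hnn with h | h
    · rw [← h]; simp
    · have hwi : 0 < w i := by
        rw [hcoord, hvi] at h
        rcases le_total (u i - w i) 0 with h' | h'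
        · rw [max_eq_right h'] at h; have := (hu i).1; have := (hw i).1
          rcases lt_or_ge 0 (w i) with h'' | h'' 
          · exact h''
          · nlinarith [(hw i).1]
        · rw [max_eq_left h'] at h; linarith
      exact mul_nonneg (le_of_lt h) (partial_nonneg hf hmono hw i hwi)
  linarith

open MeasureTheory intervalIntegral

/-- Any ε-approximate stationary point of the auxiliary function `F` (in the
direction of a maximizer `y`) is a `(1 − 1/e)`-approximate maximizer of `f`
up to additive error `ε`. -/
theorem auxiliary_stationary_point_approx_maximizer
    {d : ℕ} (a : Fin d → ℝ) (ha : ∀ i, 0 ≤ a i)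
    (X : Set (EuclideanSpace ℝ (Fin d)))
    (hX : X = {x | ∀ i, x i ∈ Set.Icc (0 : ℝ) (a i)})
    (f : EuclideanSpace ℝ (Fin d) → ℝ) (hf : ContDiff ℝ 2 f)
    (hfnonneg : ∀ x ∈ X, 0 ≤ f x)
    (hmono : ∀ x ∈ X, ∀ y ∈ X, (∀ i, x i ≤ y i) → f x ≤ f y)
    (hDR : ∀ x ∈ X, ∀ i j : Fin d,
      fderiv ℝ (fun y => fderiv ℝ f y (EuclideanSpace.single i 1)) x
        (EuclideanSpace.single j 1) ≤ 0)
    (hf0 : f 0 = 0)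
    (F : EuclideanSpace ℝ (Fin d) → ℝ)
    (hF : ∀ x, F x = ∫ z in (0:ℝ)..1, (exp (z - 1) / z) * f (z • x))
    (x : EuclideanSpace ℝ (Fin d)) (hx : x ∈ X)
    (y : EuclideanSpace ℝ (Fin d)) (hy : y ∈ X)
    (hymax : ∀ w ∈ X, f w ≤ f y)
    (ε : ℝ) (hstat : fderiv ℝ F x (y - x) ≤ ε) :
    (1 - 1 / exp 1) * f y - ε ≤ f x := by
  subst hX
  have hdiff : Differentiable ℝ f := hf.differentiable (by norm_num)
  have hg : ContDiff ℝ 1 (fderiv ℝ f) := hf.fderiv_right (by norm_num)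
  set Df := fderiv ℝ f with hDf
  -- compact bound on the derivative
  set R : ℝ := ‖x‖ + 2 with hR
  have hRpos : 0 < R := by positivity
  set K : Set (EuclideanSpace ℝ (Fin d)) := Metric.closedBall 0 R with hK
  have hKc : IsCompact K := isCompact_closedBall _ _
  obtain ⟨M, hM⟩ := hKc.exists_bound_of_continuousOn (hg.continuous.continuousOn (s := K))
  set M0 : ℝ := max M 0 with hM0
  have hM0' : ∀ z ∈ K, ‖Df z‖ ≤ M0 := fun z hz => (hM z hz).trans (le_max_left _ _)
  have hM0nn : (0:ℝ) ≤ M0 := le_max_right _ _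
  -- Lipschitz bound on f over K
  have hlip : ∀ z ∈ K, |f z| ≤ M0 * ‖z‖ := by
    intro z hz
    have h0K : (0:EuclideanSpace ℝ (Fin d)) ∈ K := by simp [hK]; positivity
    have := (convex_closedBall (0:EuclideanSpace ℝ (Fin d)) R).norm_image_sub_le_of_norm_fderiv_le
      (fun w _ => hdiff w) hM0' h0K hz
    simpa [hf0, sub_zero] using this
  -- scaled points stay in K
  have hscale : ∀ t ∈ Set.Ioc (0:ℝ) 1, ∀ x' ∈ Metric.ball x 1, t • x' ∈ K := by
    intro t ht x' hx'
    have : ‖x'‖ ≤ ‖x‖ + 1 := by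
      have := norm_sub_norm_le x' x
      have hb : ‖x' - x‖ < 1 := by simpa [dist_eq_norm] using hx'
      linarith
    have : ‖t • x'‖ ≤ ‖x‖ + 1 := by
      rw [norm_smul, Real.norm_eq_abs, abs_of_pos ht.1]
      nlinarith [norm_nonneg x', ht.2, ht.1]
    simp only [hK, Metric.mem_closedBall, dist_zero_right]
    linarith
  -- derivative under the integral sign
  have hFder : HasFDerivAt (fun x' : EuclideanSpace ℝ (Fin d) => ∫ t in (0:ℝ)..1, (exp (t - 1) / t) * f (t • x'))
      (∫ t in (0:ℝ)..1, exp (t - 1) • Df (t • x)) x := by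
    have huIoc : Set.uIoc (0:ℝ) 1 = Set.Ioc (0:ℝ) 1 := uIoc_of_le zero_le_one
    refine intervalIntegral.hasFDerivAt_integral_of_dominated_of_fderiv_le
      (F' := fun x' t => exp (t - 1) • Df (t • x')) (bound := fun _ => M0)
      (s := Metric.ball x 1) (Metric.ball_mem_nhds x one_pos) ?_ ?_ ?_ ?_ ?_ ?_
    · refine Eventually.of_forall fun x' => ?_
      refine (Measurable.aestronglyMeasurable ?_)
      have hc : Continuous fun t : ℝ => f (t • x') := by fun_prop
      exact ((Real.measurable_exp.comp (measurable_id.sub measurable_const)).div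
        measurable_id).mul hc.measurable
    · rw [intervalIntegrable_iff_integrableOn_Ioc_of_le zero_le_one]
      refine Integrable.mono' (g := fun _ => M0 * ‖x‖) (integrable_const _)
        (Measurable.aestronglyMeasurable (by
          have hc : Continuous fun t : ℝ => f (t • x) := by fun_prop
          exact ((Real.measurable_exp.comp (measurable_id.sub measurable_const)).div
            measurable_id).mul hc.measurable)) ?_
      filter_upwards [ae_restrict_mem measurableSet_Ioc] with t ht
      have htK : t • x ∈ K := by
        refine hscale t ht x (Metric.mem_ball_self one_pos)
      have h1 : |f (t • x)| ≤ M0 * (t * ‖x‖) := by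
        have := hlip _ htK
        rwa [norm_smul, Real.norm_eq_abs, abs_of_pos ht.1] at this
      have h2 : exp (t - 1) ≤ 1 := Real.exp_le_one_iff.mpr (by linarith [ht.2])
      have h3 : 0 < t := ht.1
      calc ‖(exp (t - 1) / t) * f (t • x)‖
          = (exp (t - 1) / t) * |f (t • x)| := by
            rw [Real.norm_eq_abs, abs_mul, abs_of_pos (by positivity)]
        _ ≤ (exp (t - 1) / t) * (M0 * (t * ‖x‖)) := by
            apply mul_le_mul_of_nonneg_left h1 (by positivity)
        _ = exp (t - 1) * (M0 * ‖x‖) := by field_simp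
        _ ≤ 1 * (M0 * ‖x‖) := by
            apply mul_le_mul_of_nonneg_right h2 (by positivity)
        _ = M0 * ‖x‖ := one_mul _
    · refine (Continuous.aestronglyMeasurable ?_)
      have hc : Continuous fun t : ℝ => Df (t • x) := by
        exact hg.continuous.comp (by fun_prop)
      exact (Real.continuous_exp.comp (continuous_id.sub continuous_const)).smul hc
    · refine Eventually.of_forall fun t => ?_
      rw [huIoc]
      intro ht x' hx'
      have htK := hscale t ht x' hx'
      show ‖exp (t - 1) • Df (t • x')‖ ≤ M0
      rw [norm_smul, Real.norm_eq_abs, abs_of_pos (Real.exp_pos _)]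
      have h2 : exp (t - 1) ≤ 1 := Real.exp_le_one_iff.mpr (by linarith [ht.2])
      calc exp (t - 1) * ‖Df (t • x')‖ ≤ 1 * M0 :=
            mul_le_mul h2 (hM0' _ htK) (norm_nonneg _) zero_le_one
        _ = M0 := one_mul _
    · exact intervalIntegrable_const
    · refine Eventually.of_forall fun t => ?_
      rw [huIoc]
      intro ht x' hx'
      have htne : t ≠ 0 := ne_of_gt ht.1
      have hinner : HasFDerivAt (fun x' : EuclideanSpace ℝ (Fin d) => t • x')
          (t • ContinuousLinearMap.id ℝ (EuclideanSpace ℝ (Fin d))) x' := (hasFDerivAt_id x').const_smul t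
      have hcomp : HasFDerivAt (fun x' : EuclideanSpace ℝ (Fin d) => f (t • x'))
          ((Df (t • x')).comp (t • ContinuousLinearMap.id ℝ (EuclideanSpace ℝ (Fin d)))) x' :=
        (hdiff (t • x')).hasFDerivAt.comp x' hinner
      have h := hcomp.const_mul (exp (t - 1) / t)
      have heq : (exp (t - 1) / t) • ((Df (t • x')).comp (t • ContinuousLinearMap.id ℝ (EuclideanSpace ℝ (Fin d))))
          = exp (t - 1) • Df (t • x') := by
        ext w
        simp only [ContinuousLinearMap.smul_apply, ContinuousLinearMap.coe_comp',
          Function.comp_apply, ContinuousLinearMap.coe_id', id_eq, _root_.map_smul,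
          smul_eq_mul]
        field_simp
      rw [heq] at h
      exact h
  -- identify F with the parametric integral
  have hFeq : F = fun x' => ∫ t in (0:ℝ)..1, (exp (t - 1) / t) * f (t • x') := funext hF
  have hFder' : HasFDerivAt F (∫ t in (0:ℝ)..1, exp (t - 1) • Df (t • x)) x := by
    rw [hFeq]; exact hFder
  have hDfccont : Continuous fun t : ℝ => Df (t • x) := hg.continuous.comp (by fun_prop)
  have cexp : Continuous fun t : ℝ => exp (t - 1) :=
    Real.continuous_exp.comp (continuous_id.sub continuous_const)
  have hint0 : IntervalIntegrable (fun t => exp (t - 1) • Df (t • x)) volume 0 1 :=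
    (cexp.smul hDfccont).intervalIntegrable _ _
  have happly : fderiv ℝ F x (y - x) = ∫ t in (0:ℝ)..1, exp (t - 1) * (Df (t • x) (y - x)) := by
    rw [hFder'.fderiv, ContinuousLinearMap.intervalIntegral_apply hint0]
    congr 1
  have hpathX : ∀ t ∈ Icc (0:ℝ) 1, (t • x) ∈ {x : EuclideanSpace ℝ (Fin d) | ∀ i, x i ∈ Icc (0:ℝ) (a i)} := by
    intro t ht i
    have hc : (t • x : EuclideanSpace ℝ (Fin d)) i = t * x i := rfl
    rw [hc]
    have := hx i
    exact ⟨by nlinarith [ht.1, this.1], by nlinarith [ht.1, ht.2, this.1, this.2]⟩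
  have c1 : Continuous fun t : ℝ => f (t • x) := by fun_prop
  have c2 : Continuous fun t : ℝ => Df (t • x) x := hDfccont.clm_apply continuous_const
  have c3 : Continuous fun t : ℝ => Df (t • x) (y - x) := hDfccont.clm_apply continuous_const
  have intL : IntervalIntegrable
      (fun t => exp (t - 1) * (f y - f (t • x) - Df (t • x) x)) volume 0 1 :=
    (cexp.mul ((continuous_const.sub c1).sub c2)).intervalIntegrable _ _
  have intR : IntervalIntegrable
      (fun t => exp (t - 1) * (Df (t • x) (y - x))) volume 0 1 :=
    (cexp.mul c3).intervalIntegrable _ _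
  have hkey : ∀ t ∈ Icc (0:ℝ) 1,
      exp (t - 1) * (f y - f (t • x) - Df (t • x) x)
        ≤ exp (t - 1) * (Df (t • x) (y - x)) := by
    intro t ht
    have h1 : f y - f (t • x) ≤ Df (t • x) y := grad_ineq hf hmono hDR (hpathX t ht) hy
    have h2 : Df (t • x) (y - x) = Df (t • x) y - Df (t • x) x := map_sub _ _ _
    rw [h2]
    exact mul_le_mul_of_nonneg_left (by linarith) (Real.exp_pos _).le
  have hIneq := intervalIntegral.integral_mono_on zero_le_one intL intR hkey
  -- FTC computations
  have hexp_deriv : ∀ t : ℝ, HasDerivAt (fun t : ℝ => exp (t - 1)) (exp (t - 1)) t := by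
    intro t
    simpa using ((hasDerivAt_id t).sub_const 1).exp
  have hh_deriv : ∀ t : ℝ, HasDerivAt (fun t : ℝ => f (t • x)) (Df (t • x) x) t := by
    intro t
    have hp : HasDerivAt (fun t : ℝ => t • x) x t := by
      simpa using (hasDerivAt_id t).smul_const x
    exact (hdiff (t • x)).hasFDerivAt.comp_hasDerivAt t hp
  have hFTC1 : (∫ t in (0:ℝ)..1, (exp (t - 1) * f (t • x) + exp (t - 1) * (Df (t • x) x)))
      = f x := by
    rw [intervalIntegral.integral_eq_sub_of_hasDerivAt
      (f := fun t => exp (t - 1) * f (t • x))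
      (fun t _ => by simpa [mul_comm] using (hexp_deriv t).fun_mul (hh_deriv t))
      (((cexp.fun_mul c1).fun_add (cexp.fun_mul c2)).intervalIntegrable _ _)]
    norm_num [hf0]
  have hFTC2 : (∫ t in (0:ℝ)..1, exp (t - 1) * f y) = (1 - 1 / exp 1) * f y := by
    rw [intervalIntegral.integral_mul_const]
    congr 1
    rw [intervalIntegral.integral_eq_sub_of_hasDerivAt (f := fun t => exp (t - 1))
      (fun t _ => hexp_deriv t) (cexp.intervalIntegrable _ _)]
    rw [show (1:ℝ) - 1 = 0 by ring, show (0:ℝ) - 1 = -1 by ring, Real.exp_zero, Real.exp_neg,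
      one_div]
  have hsplit : (∫ t in (0:ℝ)..1, exp (t - 1) * (f y - f (t • x) - Df (t • x) x))
      = (∫ t in (0:ℝ)..1, exp (t - 1) * f y)
        - (∫ t in (0:ℝ)..1, (exp (t - 1) * f (t • x) + exp (t - 1) * (Df (t • x) x))) := by
    rw [← intervalIntegral.integral_sub ((cexp.fun_mul continuous_const).intervalIntegrable _ _)
      (((cexp.fun_mul c1).fun_add (cexp.fun_mul c2)).intervalIntegrable _ _)]
    congr 1
    funext t
    ring
  have hfinal : (1 - 1 / exp 1) * f y - f x ≤ ε := by
    have := hIneq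
    rw [hsplit, hFTC1, hFTC2] at this
    rw [happly] at hstat
    linarith
  linarith
end
end

section
/- Let f : ℝ^d → ℝ be a differentiable multi-linear function, and fix x ∈ ℝ^d and a vector w ∈ ℝ^d. Draw u uniformly from {0, e₁, …, e_d} with P(u = 0) = 1/2 and P(u = e_i) = 1/(2d), and draw z from the density e^{z−1}/(1 − 1/e) on [0,1]. Define the random variable ℓ̃ = −2(1−1/e)(d/z) f(z·x) if u = 0, and ℓ̃ = 2(1−1/e)(d/z) f(z·x + z⟨w, e_i⟩e_i) if u = e_i. Then E[ℓ̃] = ⟨w, ∫₀¹ e^{z−1} ∇f(z·x) dz⟩. -/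
noncomputable section
open Real MvPolynomial

lemma eval_monomial_add_single {d : ℕ} (m : Fin d →₀ ℕ) (a : ℝ) (i : Fin d)
    (hm : m i ≤ 1) (y : Fin d → ℝ) (c : ℝ) :
    MvPolynomial.eval (fun j => y j + if j = i then c else 0) (monomial m a)
      = MvPolynomial.eval y (monomial m a)
        + c * MvPolynomial.eval y (MvPolynomial.pderiv i (monomial m a)) := by
  rw [pderiv_monomial]
  interval_cases h : m i
  · -- m i = 0
    have hni : i ∉ m.support := by simp [Finsupp.mem_support_iff, h]
    rw [eval_monomial, eval_monomial, eval_monomial]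
    have hpr : (m.prod fun n e => (y n + if n = i then c else 0) ^ e)
        = m.prod fun n e => y n ^ e := by
      refine Finsupp.prod_congr (fun j hj => ?_)
      have : j ≠ i := fun e => hni (e ▸ hj)
      simp [this]
    simp [hpr]
  · -- m i = 1
    set m' : Fin d →₀ ℕ := m - Finsupp.single i 1 with hm'def
    have hmm : m' + Finsupp.single i 1 = m := by
      ext j
      rcases eq_or_ne j i with rfl | hne
      · simp [hm'def, Finsupp.tsub_apply, h]
      · simp [hm'def, Finsupp.tsub_apply, Finsupp.single_apply, hne.symm, (Ne.symm hne)]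
    have hni : i ∉ m'.support := by
      simp [hm'def, Finsupp.tsub_apply, h]
    have key : ∀ v : Fin d → ℝ,
        m.prod (fun n e => v n ^ e) = (m'.prod fun n e => v n ^ e) * v i := by
      intro v
      rw [← hmm, Finsupp.prod_add_index' (fun j => pow_zero _) (fun j b₁ b₂ => pow_add _ _ _)]
      simp [Finsupp.prod_single_index]
    have hpr : (m'.prod fun n e => (y n + if n = i then c else 0) ^ e)
        = m'.prod fun n e => y n ^ e := by
      refine Finsupp.prod_congr (fun j hj => ?_)
      have : j ≠ i := fun e => hni (e ▸ hj)
      simp [this]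
    rw [eval_monomial, eval_monomial, eval_monomial, key, key, hpr]
    simp only [if_pos rfl, Nat.cast_one, mul_one, if_true]
    ring

lemma eval_add_single {d : ℕ} (p : MvPolynomial (Fin d) ℝ)
    (hp : ∀ m ∈ p.support, ∀ i, m i ≤ 1) (y : Fin d → ℝ) (i : Fin d) (c : ℝ) :
    MvPolynomial.eval (fun j => y j + if j = i then c else 0) p
      = MvPolynomial.eval y p + c * MvPolynomial.eval y (MvPolynomial.pderiv i p) := by
  conv_lhs => rw [p.as_sum]
  conv_rhs => rw [p.as_sum]
  rw [map_sum, map_sum, map_sum, map_sum, Finset.mul_sum, ← Finset.sum_add_distrib]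
  refine Finset.sum_congr rfl fun m hm => ?_
  exact eval_monomial_add_single m _ i (hp m hm i) y c

lemma hasFDerivAt_eval {d : ℕ} (p : MvPolynomial (Fin d) ℝ) (v : Fin d → ℝ) :
    HasFDerivAt (fun u : Fin d → ℝ => MvPolynomial.eval u p)
      (∑ i, MvPolynomial.eval v (MvPolynomial.pderiv i p) •
        (ContinuousLinearMap.proj i : (Fin d → ℝ) →L[ℝ] ℝ)) v := by
  induction p using MvPolynomial.induction_on generalizing v with
  | C a =>
      simp only [eval_C, pderiv_C, map_zero, zero_smul, Finset.sum_const_zero]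
      exact hasFDerivAt_const a v
  | add p q hp hq =>
      have := (hp v).add (hq v)
      simp only [map_add, Pi.add_def] at this ⊢
      exact this.congr_fderiv (by simp [add_smul, Finset.sum_add_distrib])
  | mul_X p i hp =>
      have hXi : HasFDerivAt (fun u : Fin d → ℝ => u i)
          (ContinuousLinearMap.proj i : (Fin d → ℝ) →L[ℝ] ℝ) v :=
        (ContinuousLinearMap.proj i : (Fin d → ℝ) →L[ℝ] ℝ).hasFDerivAt
      have hmul := (hp v).mul hXi
      have hcoef : ∀ j : Fin d, MvPolynomial.eval v (MvPolynomial.pderiv j (p * MvPolynomial.X i))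
          = MvPolynomial.eval v (MvPolynomial.pderiv j p) * v i
            + (if j = i then MvPolynomial.eval v p else 0) := by
        intro j
        rcases eq_or_ne j i with rfl | hne
        · simp [pderiv_mul]; ring
        · simp [pderiv_mul, hne, Ne.symm hne]; ring
      have hL : (∑ j, MvPolynomial.eval v (MvPolynomial.pderiv j (p * MvPolynomial.X i)) •
            (ContinuousLinearMap.proj j : (Fin d → ℝ) →L[ℝ] ℝ))
          = MvPolynomial.eval v p • (ContinuousLinearMap.proj i : (Fin d → ℝ) →L[ℝ] ℝ)
            + v i • ∑ j, MvPolynomial.eval v (MvPolynomial.pderiv j p) •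
              (ContinuousLinearMap.proj j : (Fin d → ℝ) →L[ℝ] ℝ) := by
        ext u
        simp only [ContinuousLinearMap.coe_sum', Finset.sum_apply,
          ContinuousLinearMap.coe_smul', Pi.smul_apply, ContinuousLinearMap.proj_apply,
          ContinuousLinearMap.add_apply, smul_eq_mul, hcoef, add_mul, ite_mul, zero_mul]
        rw [Finset.sum_add_distrib, Finset.sum_ite_eq' Finset.univ i fun j =>
          MvPolynomial.eval v p * u j, Finset.mul_sum]
        simp only [Finset.mem_univ, if_true]
        rw [add_comm]
        congr 1
        exact Finset.sum_congr rfl fun j _ => by ring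
      have hfun : (fun u : Fin d → ℝ => MvPolynomial.eval u (p * MvPolynomial.X i))
          = fun u : Fin d → ℝ => MvPolynomial.eval u p * u i := by
        funext u; simp
      rw [hfun, hL]
      exact hmul

lemma fderiv_eval_apply {d : ℕ} (f : EuclideanSpace ℝ (Fin d) → ℝ)
    (p : MvPolynomial (Fin d) ℝ)
    (hrep : ∀ x, f x = MvPolynomial.eval (fun i => x i) p)
    (y w : EuclideanSpace ℝ (Fin d)) :
    fderiv ℝ f y w = ∑ i, w i * MvPolynomial.eval (fun j => y j) (MvPolynomial.pderiv i p) := by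
  set e := PiLp.continuousLinearEquiv 2 ℝ (fun _ : Fin d => ℝ) with he
  have hfe : f = (fun u : Fin d → ℝ => MvPolynomial.eval u p) ∘ e := by
    funext x; exact hrep x
  have hcomp := (hasFDerivAt_eval p (e y)).comp y e.hasFDerivAt
  rw [hfe, hcomp.fderiv]
  simp only [ContinuousLinearMap.coe_comp', Function.comp_apply,
    ContinuousLinearMap.coe_sum', Finset.sum_apply, ContinuousLinearMap.coe_smul',
    Pi.smul_apply, ContinuousLinearMap.proj_apply, smul_eq_mul]
  exact Finset.sum_congr rfl fun i _ => mul_comm _ _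


/-- A function on `ℝ^d` is multi-linear if it is given by a polynomial in which
every variable appears with degree at most 1 in every monomial. -/
def IsMultilinearPoly {d : ℕ} (f : EuclideanSpace ℝ (Fin d) → ℝ) : Prop :=
  ∃ p : MvPolynomial (Fin d) ℝ,
    (∀ m ∈ p.support, ∀ i, m i ≤ 1) ∧ ∀ x, f x = MvPolynomial.eval (fun i => x i) p

/-- Unbiasedness of the one-point gradient estimator for multi-linear functions:
the expectation of `ℓ̃` over the random coordinate `u` (with `P(u=0)=1/2`,
`P(u=e_i)=1/(2d)`) and `z` with density `e^{z−1}/(1−1/e)` on `[0,1]` equals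
`⟨w, ∫₀¹ e^{z−1} ∇f(z·x) dz⟩`. -/
theorem multilinear_estimator_unbiased
    {d : ℕ} (hd : 0 < d)
    (f : EuclideanSpace ℝ (Fin d) → ℝ) (hf : IsMultilinearPoly f)
    (x w : EuclideanSpace ℝ (Fin d)) :
    ∫ z in (0:ℝ)..1, (exp (z - 1) / (1 - 1 / exp 1)) *
        ((1/2) * (-2 * (1 - 1 / exp 1) * ((d : ℝ) / z) * f (z • x)) +
          ∑ i : Fin d, (1 / (2 * (d : ℝ))) *
            (2 * (1 - 1 / exp 1) * ((d : ℝ) / z) *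
              f (z • x + (z * w i) • EuclideanSpace.single i 1)))
      = ∫ z in (0:ℝ)..1, exp (z - 1) * fderiv ℝ f (z • x) w := by
  obtain ⟨p, hdeg, hrep⟩ := hf
  have hA : (0:ℝ) < 1 - 1 / exp 1 := by
    have h1 : (1:ℝ) < exp 1 := by have := Real.exp_one_gt_d9; linarith
    have : 1 / exp 1 < 1 := by rw [div_lt_one (by positivity)]; exact h1
    linarith
  have hdne : (d : ℝ) ≠ 0 := Nat.cast_ne_zero.mpr hd.ne'
  refine intervalIntegral.integral_congr_ae (Filter.Eventually.of_forall (fun z hz => ?_))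
  rw [Set.uIoc_of_le (by norm_num : (0:ℝ) ≤ 1)] at hz
  have hz0 : (0:ℝ) < z := hz.1
  have hkey : ∀ i : Fin d, f (z • x + (z * w i) • EuclideanSpace.single i 1)
      = f (z • x) + (z * w i) *
          MvPolynomial.eval (fun j => (z • x) j) (MvPolynomial.pderiv i p) := by
    intro i
    rw [hrep, hrep]
    have harg : (fun j => (z • x + (z * w i) • EuclideanSpace.single i 1
          : EuclideanSpace ℝ (Fin d)) j)
        = fun j => (z • x) j + if j = i then (z * w i) else 0 := by
      funext j
      simp [EuclideanSpace.single_apply, mul_ite]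
    rw [harg, eval_add_single p hdeg _ i _]
  rw [fderiv_eval_apply f p hrep]
  set A : ℝ := 1 - 1 / exp 1 with hAdef
  set F : ℝ := f (z • x) with hF
  have hterm : ∀ i : Fin d, (1 / (2 * (d : ℝ))) * (2 * A * ((d:ℝ)/z) *
        f (z • x + (z * w i) • EuclideanSpace.single i 1))
      = A * F / z + A * (w i *
          MvPolynomial.eval (fun j => (z • x) j) (MvPolynomial.pderiv i p)) := by
    intro i
    rw [hkey i]
    field_simp
  rw [Finset.sum_congr rfl fun i _ => hterm i, Finset.sum_add_distrib, Finset.sum_const,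
    Finset.card_univ, Fintype.card_fin, ← Finset.mul_sum, nsmul_eq_mul]
  set S : ℝ := ∑ i : Fin d, w i *
    MvPolynomial.eval (fun j => (z • x) j) (MvPolynomial.pderiv i p) with hS
  have hAne : A ≠ 0 := ne_of_gt hA
  field_simp
  ring
end
end

section
/- Let f : ℝ^d → ℝ be a differentiable multi-linear function taking values in [0, M] on its domain, and fix x and a vector w with ‖w‖_∞ ≤ 1 componentwise feasibility. Draw u uniformly from {e₁,…,e_d}, z from the density e^{z−1}/(1−1/e) restricted and conditioned to [0, 1/2), and a fair coin b ∈ {0,1}. Define ℓ̃ = −4(1−1/e)d⟨w, u⟩ f(z·x) if b = 0 and ℓ̃ = 4(1−1/e)d⟨w, u⟩ f(z·x + (1/2)u) if b = 1. Then E[ℓ̃ | z] = (1−1/e)⟨w, ∇f(z·x)⟩. -/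
noncomputable section
open Real

open MvPolynomial in
lemma eval_hasFDerivAt {d : ℕ} (p : MvPolynomial (Fin d) ℝ) (y : EuclideanSpace ℝ (Fin d)) :
    HasFDerivAt (fun v : EuclideanSpace ℝ (Fin d) => MvPolynomial.eval (fun i => v i) p)
      (∑ i : Fin d, MvPolynomial.eval (fun j => y j) (pderiv i p) •
        (EuclideanSpace.proj i : EuclideanSpace ℝ (Fin d) →L[ℝ] ℝ)) y := by
  induction p using MvPolynomial.induction_on with
  | C a => simpa using hasFDerivAt_const a y
  | add p q hp hq =>
      have := hp.add hq
      simp only [map_add] at this ⊢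
      simp only [add_smul, Finset.sum_add_distrib]
      exact this
  | mul_X p n hp =>
      have hX : HasFDerivAt (fun v : EuclideanSpace ℝ (Fin d) => v n)
          (EuclideanSpace.proj n : EuclideanSpace ℝ (Fin d) →L[ℝ] ℝ) y :=
        (EuclideanSpace.proj n : EuclideanSpace ℝ (Fin d) →L[ℝ] ℝ).hasFDerivAt
      have := hp.mul hX
      simp only [map_mul, MvPolynomial.eval_X] at this ⊢
      refine HasFDerivAt.congr_fderiv this (Eq.symm ?_)
      ext v
      simp only [ContinuousLinearMap.sum_apply, ContinuousLinearMap.smul_apply,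
        ContinuousLinearMap.add_apply, smul_eq_mul,
        Derivation.leibniz, MvPolynomial.pderiv_X, map_add, map_mul, MvPolynomial.eval_X]
      simp_rw [add_mul, Finset.sum_add_distrib]
      congr 1
      · rw [Finset.sum_eq_single n]
        · simp [Pi.single_eq_same]
        · intro i _ hi
          simp [Pi.single_eq_of_ne hi.symm]
        · simp
      · rw [Finset.mul_sum]
        exact Finset.sum_congr rfl fun i _ => mul_assoc _ _ _

open MvPolynomial in
lemma multilinear_diff {d : ℕ} (p : MvPolynomial (Fin d) ℝ)
    (hp : ∀ m ∈ p.support, ∀ i, m i ≤ 1) (y : Fin d → ℝ) (i : Fin d) (c : ℝ) :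
    eval (Function.update y i (y i + c)) p = eval y p + c * eval y (pderiv i p) := by
  conv_lhs => rw [p.as_sum]
  conv_rhs => rw [p.as_sum]
  rw [map_sum, map_sum, map_sum, map_sum, Finset.mul_sum, ← Finset.sum_add_distrib]
  refine Finset.sum_congr rfl fun m hm => ?_
  have hmi := hp m hm i
  rw [pderiv_monomial, eval_monomial, eval_monomial, eval_monomial,
    Finsupp.prod_fintype _ _ (fun j => pow_zero _),
    Finsupp.prod_fintype _ _ (fun j => pow_zero _),
    Finsupp.prod_fintype _ _ (fun j => pow_zero _)]
  interval_cases h : m i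
  · have h1 : ∀ j ∈ Finset.univ, Function.update y i (y i + c) j ^ m j = y j ^ m j := by
      intro j _
      rcases eq_or_ne j i with rfl | hj
      · rw [h]; simp
      · rw [Function.update_of_ne hj]
    rw [Finset.prod_congr rfl h1]
    push_cast
    ring
  · rw [Finset.prod_eq_mul_prod_sdiff_singleton_of_mem (Finset.mem_univ i),
      Finset.prod_eq_mul_prod_sdiff_singleton_of_mem (Finset.mem_univ i) (fun j => y j ^ m j),
      Finset.prod_eq_mul_prod_sdiff_singleton_of_mem (Finset.mem_univ i)
        (fun j => y j ^ ((m - Finsupp.single i 1 : Fin d →₀ ℕ) j))]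
    have h1 : ∀ j ∈ Finset.univ \ {i},
        Function.update y i (y i + c) j ^ m j = y j ^ m j := by
      intro j hj
      rw [Function.update_of_ne (by simpa using (Finset.mem_sdiff.1 hj).2)]
    have h2 : ∀ j ∈ Finset.univ \ {i},
        y j ^ ((m - Finsupp.single i 1 : Fin d →₀ ℕ) j) = y j ^ m j := by
      intro j hj
      have hj' : j ≠ i := by simpa using (Finset.mem_sdiff.1 hj).2
      rw [Finsupp.tsub_apply, Finsupp.single_apply, if_neg (Ne.symm hj')]
      simp
    rw [Finset.prod_congr rfl h1, Finset.prod_congr rfl h2,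
      Function.update_self, h]
    have h3 : (m - Finsupp.single i 1 : Fin d →₀ ℕ) i = 0 := by
      rw [Finsupp.tsub_apply, Finsupp.single_apply, if_pos rfl, h]
    rw [h3]
    push_cast
    ring

/-- The bounded one-point gradient estimator for small `z`: conditioned on `z`,
the expectation over the uniform basis vector `u` and the fair coin `b` equals
`(1−1/e)⟨w, ∇f(z·x)⟩`. -/
theorem multilinear_small_z_estimator_unbiased
    {d : ℕ} (hd : 0 < d)
    (f : EuclideanSpace ℝ (Fin d) → ℝ) (hf : IsMultilinearPoly f)
    (M : ℝ)
    (hM : ∀ y : EuclideanSpace ℝ (Fin d), (∀ i, 0 ≤ y i ∧ y i ≤ 1) → f y ∈ Set.Icc 0 M)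
    (x w : EuclideanSpace ℝ (Fin d)) (hw : ∀ i, |w i| ≤ 1)
    (z : ℝ) (hz : z ∈ Set.Ico (0 : ℝ) (1/2)) :
    (∑ i : Fin d, (1 / (d : ℝ)) *
        ((1/2) * (-4 * (1 - 1 / exp 1) * (d : ℝ) * w i * f (z • x)) +
          (1/2) * (4 * (1 - 1 / exp 1) * (d : ℝ) * w i *
            f (z • x + (1/2 : ℝ) • EuclideanSpace.single i 1))))
      = (1 - 1 / exp 1) * fderiv ℝ f (z • x) w := by
  obtain ⟨p, hp, hfp⟩ := hf
  have hfe : f = fun v : EuclideanSpace ℝ (Fin d) => MvPolynomial.eval (fun i => v i) p :=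
    funext hfp
  have hD := eval_hasFDerivAt p (z • x)
  have hfd : fderiv ℝ f (z • x) w
      = ∑ i : Fin d, MvPolynomial.eval (fun j => (z • x) j) (MvPolynomial.pderiv i p) * w i := by
    rw [hfe, hD.fderiv]
    simp [ContinuousLinearMap.sum_apply]
  have hstep : ∀ i : Fin d, f (z • x + (1/2 : ℝ) • EuclideanSpace.single i 1)
      = f (z • x) + (1/2) * MvPolynomial.eval (fun j => (z • x) j) (MvPolynomial.pderiv i p) := by
    intro i
    have key := multilinear_diff p hp (fun j => (z • x) j) i (1/2)
    have harg : (fun j => (z • x + (1/2 : ℝ) • EuclideanSpace.single i 1 : EuclideanSpace ℝ (Fin d)) j)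
        = Function.update (fun j => (z • x) j) i ((z • x) i + 1/2) := by
      funext j
      rcases eq_or_ne j i with rfl | hj
      · simp [Function.update_self, EuclideanSpace.single_apply]
      · simp [Function.update_of_ne hj, EuclideanSpace.single_apply, hj]
    rw [hfp, hfp, harg, key]
  have hd' : (d : ℝ) ≠ 0 := Nat.cast_ne_zero.2 hd.ne'
  rw [hfd, Finset.mul_sum]
  refine Finset.sum_congr rfl fun i _ => ?_
  rw [hstep i]
  field_simp
  ring
end
end
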